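/- arXiv:2503.11871 — 7 statements merged into one kernel-verified Lean document; each statement's English description precedes it below -/
import Mathlib

section
/- Let t be a positive integer, ι an arbitrary (possibly infinite) index type, and F : ι → Finset α a family of finite sets. If for every finite subset S of ι the union ⋃_{i∈S} F_i contains at least t·|S| elements, then the family has a set of distinct t-representatives, i.e., there exist pairwise disjoint sets R_i ⊆ F_i with |R_i| = t for every i ∈ ι. -/
/-! Replace every index `i` by `t` copies `(i, k)`, `k : Fin t`, each carrying the set `F i`.
The `t`-fold Hall condition for `F` implies Hall's condition for the blown-up family, so by
Hall's theorem for infinite families of finite sets it has an injective choice function `f`;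
the `t` values `f (i, k)` then form `R i`. -/

open Finset Function

section

variable {α ι κ : Type*} [DecidableEq α]

theorem Finset.card_le_card_biUnion_comp_fst [DecidableEq ι] [Fintype κ] {F : ι → Finset α}
    (hall : ∀ S : Finset ι, Fintype.card κ * #S ≤ #(S.biUnion F)) (S : Finset (ι × κ)) :
    #S ≤ #(S.biUnion (F ∘ Prod.fst)) :=
  calc #S ≤ #(S.image Prod.fst ×ˢ (univ : Finset κ)) :=
        card_le_card fun p hp => mem_product.2 ⟨mem_image_of_mem _ hp, mem_univ _⟩
    _ = Fintype.card κ * #(S.image Prod.fst) := by rw [card_product, card_univ, mul_comm]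
    _ ≤ #((S.image Prod.fst).biUnion F) := hall _
    _ = #(S.biUnion (F ∘ Prod.fst)) := by rw [image_biUnion]; rfl

theorem Function.Injective.exists_pairwise_disjoint_card_eq [Fintype κ] {F : ι → Finset α}
    {f : ι × κ → α} (hf : Injective f) (hfF : ∀ p, f p ∈ F p.1) :
    ∃ R : ι → Finset α,
      (∀ i, R i ⊆ F i ∧ #(R i) = Fintype.card κ) ∧ ∀ i j, i ≠ j → Disjoint (R i) (R j) := by
  refine ⟨fun i => univ.image fun k => f (i, k), fun i => ⟨?_, ?_⟩, fun i j hij => ?_⟩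
  · simp only [image_subset_iff, mem_univ, forall_const]
    exact fun k => hfF (i, k)
  · rw [card_image_of_injective _ fun k l hkl => (Prod.ext_iff.1 (hf hkl)).2, card_univ]
  · simp only [disjoint_left, mem_image, mem_univ, true_and, not_exists, forall_exists_index]
    rintro _ k rfl l hl
    exact hij (congrArg Prod.fst (hf hl)).symm

end

theorem stmt1_general {α ι : Type*} [DecidableEq α] (t : ℕ)
    (F : ι → Finset α)
    (hall : ∀ S : Finset ι, t * S.card ≤ (S.biUnion F).card) :
    ∃ R : ι → Finset α,
      (∀ i, R i ⊆ F i ∧ (R i).card = t) ∧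
      ∀ i j, i ≠ j → Disjoint (R i) (R j) := by
  classical
  have hall' := card_le_card_biUnion_comp_fst (κ := Fin t) (by simpa using hall)
  obtain ⟨f, hf, hfF⟩ := (all_card_le_biUnion_card_iff_exists_injective _).1 hall'
  simpa using hf.exists_pairwise_disjoint_card_eq (F := F) hfF

/-- **Generalized Hall theorem for arbitrary (possibly infinite) families of finite sets.**
If every finite subfamily indexed by `S` has union of size at least `t·|S|`,
then the family has a set of distinct `t`-representatives. -/
theorem stmt1 {α ι : Type*} [DecidableEq α] (t : ℕ) (ht : 0 < t)
    (F : ι → Finset α)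
    (hall : ∀ S : Finset ι, t * S.card ≤ (S.biUnion F).card) :
    ∃ R : ι → Finset α,
      (∀ i, R i ⊆ F i ∧ (R i).card = t) ∧
      ∀ i j, i ≠ j → Disjoint (R i) (R j) :=
  stmt1_general t F hall
end

section
/- Let k be a positive integer. A finite simple graph G has a [1,k]-factor if and only if G has a k-star partition. -/
/-- A star partition of `G`: a partition of the vertex set into parts of size at least 2,
each of which induces a subgraph containing a spanning star. -/
def IsStarPartition {V : Type*} [Fintype V] [DecidableEq V] (G : SimpleGraph V)
    (P : Finset (Finset V)) : Prop :=
  (∀ v : V, ∃! S : Finset V, S ∈ P ∧ v ∈ S) ∧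
  (∀ S ∈ P, 2 ≤ S.card) ∧
  (∀ S ∈ P, ∃ c ∈ S, ∀ v ∈ S, v ≠ c → G.Adj c v)

/-- For a positive integer `k`, a finite simple graph `G` has a
`[1,k]`-factor (a spanning subgraph in which every vertex has degree between `1` and `k`)
if and only if `G` has a `k`-star partition. -/
theorem stmt2 {V : Type*} [Fintype V] [DecidableEq V] (G : SimpleGraph V)
    (k : ℕ) (hk : 0 < k) :
    (∃ H : SimpleGraph V, H ≤ G ∧
        ∀ x : V, 1 ≤ (H.neighborSet x).ncard ∧ (H.neighborSet x).ncard ≤ k) ↔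
      (∃ P : Finset (Finset V), IsStarPartition G P ∧ ∀ S ∈ P, S.card ≤ k + 1) := by
  classical
  constructor
  · rintro ⟨H0, hH0G, hdeg0⟩
    -- pick a [1,k]-factor with the minimal number of edges
    have hex : ∃ n : ℕ, ∃ H : SimpleGraph V, (H ≤ G ∧
        ∀ x : V, 1 ≤ (H.neighborSet x).ncard ∧ (H.neighborSet x).ncard ≤ k) ∧
        H.edgeSet.ncard = n := ⟨_, H0, ⟨hH0G, hdeg0⟩, rfl⟩
    obtain ⟨H, ⟨hHG, hdeg⟩, hHn⟩ := Nat.find_spec hex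
    have hmin : ∀ H' : SimpleGraph V, H' ≤ G →
        (∀ x : V, 1 ≤ (H'.neighborSet x).ncard ∧ (H'.neighborSet x).ncard ≤ k) →
        H.edgeSet.ncard ≤ H'.edgeSet.ncard := by
      intro H' h1 h2
      rw [hHn]
      exact Nat.find_le ⟨H', ⟨h1, h2⟩, rfl⟩
    -- every edge of H has an endpoint of degree 1
    have hedge : ∀ u v : V, H.Adj u v →
        (H.neighborSet u).ncard = 1 ∨ (H.neighborSet v).ncard = 1 := by
      intro u v huv
      by_contra hcon
      push_neg at hcon
      obtain ⟨hu, hv⟩ := hcon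
      have hu2 : 2 ≤ (H.neighborSet u).ncard := by have := (hdeg u).1; omega
      have hv2 : 2 ≤ (H.neighborSet v).ncard := by have := (hdeg v).1; omega
      set H' := H.deleteEdges {s(u, v)} with hH'
      have key : ∀ x y : V, s(x, y) = s(u, v) ↔ (x = u ∧ y = v) ∨ (x = v ∧ y = u) :=
        fun x y => Sym2.eq_iff
      have hns : ∀ x : V, H'.neighborSet x =
          if x = u then H.neighborSet u \ {v}
          else if x = v then H.neighborSet v \ {u}
          else H.neighborSet x := by
        intro x
        ext y
        simp only [SimpleGraph.mem_neighborSet, hH', SimpleGraph.deleteEdges_adj,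
          Set.mem_singleton_iff]
        split_ifs with h1 h2
        · subst h1
          simp only [Set.mem_diff, SimpleGraph.mem_neighborSet, Set.mem_singleton_iff]
          constructor
          · rintro ⟨ha, hb⟩
            exact ⟨ha, fun hyv => hb (by rw [hyv])⟩
          · rintro ⟨ha, hb⟩
            refine ⟨ha, fun hxy => ?_⟩
            rcases (key x y).mp hxy with ⟨-, h⟩ | ⟨h, -⟩
            · exact hb h
            · exact H.ne_of_adj huv h
        · subst h2
          simp only [Set.mem_diff, SimpleGraph.mem_neighborSet, Set.mem_singleton_iff]
          constructor
          · rintro ⟨ha, hb⟩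
            exact ⟨ha, fun hyu => hb (by rw [hyu]; exact Sym2.eq_swap)⟩
          · rintro ⟨ha, hb⟩
            refine ⟨ha, fun hxy => ?_⟩
            rcases (key x y).mp hxy with ⟨h, -⟩ | ⟨-, h⟩
            · exact h1 h
            · exact hb h
        · simp only [SimpleGraph.mem_neighborSet]
          constructor
          · rintro ⟨ha, -⟩; exact ha
          · intro ha
            refine ⟨ha, fun hxy => ?_⟩
            rcases (key x y).mp hxy with ⟨h, -⟩ | ⟨h, -⟩
            · exact h1 h
            · exact h2 h
      have hdeg' : ∀ x : V, 1 ≤ (H'.neighborSet x).ncard ∧ (H'.neighborSet x).ncard ≤ k := by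
        intro x
        rw [hns x]
        split_ifs with h1 h2
        · have hmem : v ∈ H.neighborSet u := huv
          rw [Set.ncard_diff_singleton_of_mem hmem]
          exact ⟨by omega, by have := (hdeg u).2; omega⟩
        · have hmem : u ∈ H.neighborSet v := huv.symm
          rw [Set.ncard_diff_singleton_of_mem hmem]
          exact ⟨by omega, by have := (hdeg v).2; omega⟩
        · exact hdeg x
      have hle : H' ≤ G := le_trans (SimpleGraph.deleteEdges_le _) hHG
      have hlt : H'.edgeSet.ncard < H.edgeSet.ncard := by
        rw [hH', SimpleGraph.edgeSet_deleteEdges]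
        have hmem : s(u, v) ∈ H.edgeSet := huv
        have : H.edgeSet \ {s(u, v)} = H.edgeSet \ {s(u, v)} := rfl
        have h1 : (H.edgeSet \ {s(u, v)}).ncard = H.edgeSet.ncard - 1 :=
          Set.ncard_diff_singleton_of_mem hmem
        have h2 : 0 < H.edgeSet.ncard := (Set.ncard_pos (Set.toFinite _)).mpr ⟨_, hmem⟩
        omega
      exact absurd (hmin H' hle hdeg') (by omega)
    -- setup: degrees and chosen neighbors
    have hnbr0 : ∀ v : V, ∃ w, H.Adj v w := by
      intro v
      have h1 := (hdeg v).1
      have : (H.neighborSet v).Nonempty := by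
        rw [← Set.ncard_pos (Set.toFinite _)] at *
        omega
      exact this
    choose nbr hnbr using hnbr0
    have huniq : ∀ v : V, (H.neighborSet v).ncard = 1 → ∀ w, H.Adj v w → w = nbr v := by
      intro v h1 w hw
      obtain ⟨a, ha⟩ := Set.ncard_eq_one.mp h1
      have h2 : w ∈ H.neighborSet v := hw
      have h3 : nbr v ∈ H.neighborSet v := hnbr v
      rw [ha, Set.mem_singleton_iff] at h2 h3
      rw [h2, h3]
    -- the parts
    set part : V → Finset V := fun v =>
      if 2 ≤ (H.neighborSet v).ncard then insert v (H.neighborSet v).toFinset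
      else if 2 ≤ (H.neighborSet (nbr v)).ncard then
        insert (nbr v) (H.neighborSet (nbr v)).toFinset
      else {v, nbr v} with hpart
    have hcards : ∀ v, (H.neighborSet v).toFinset.card = (H.neighborSet v).ncard := by
      intro v; rw [Set.ncard_eq_toFinset_card']
    have hself : ∀ v, v ∉ (H.neighborSet v).toFinset := by
      intro v hv
      rw [Set.mem_toFinset] at hv
      exact H.irrefl hv
    have hpc : ∀ v, 2 ≤ (H.neighborSet v).ncard →
        part v = insert v (H.neighborSet v).toFinset := by
      intro v hv; simp only [hpart]; rw [if_pos hv]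
    have hpc2 : ∀ v, ¬ 2 ≤ (H.neighborSet v).ncard → 2 ≤ (H.neighborSet (nbr v)).ncard →
        part v = insert (nbr v) (H.neighborSet (nbr v)).toFinset := by
      intro v h1 h2; simp only [hpart]; rw [if_neg h1, if_pos h2]
    have hpc3 : ∀ v, ¬ 2 ≤ (H.neighborSet v).ncard → ¬ 2 ≤ (H.neighborSet (nbr v)).ncard →
        part v = {v, nbr v} := by
      intro v h1 h2; simp only [hpart]; rw [if_neg h1, if_neg h2]
    have hdeg1 : ∀ v, ¬ 2 ≤ (H.neighborSet v).ncard → (H.neighborSet v).ncard = 1 := by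
      intro v h; have := (hdeg v).1; omega
    -- part u = part v whenever u ∈ part v
    have hB : ∀ v u, u ∈ part v → part u = part v := by
      intro v u hu
      by_cases h2v : 2 ≤ (H.neighborSet v).ncard
      · rw [hpc v h2v] at hu ⊢
        rcases Finset.mem_insert.mp hu with rfl | hu
        · exact hpc u h2v
        · rw [Set.mem_toFinset] at hu
          have hu1 : (H.neighborSet u).ncard = 1 := by
            rcases hedge v u hu with h | h
            · omega
            · exact h
          have hnu : nbr u = v := (huniq u hu1 v hu.symm).symm
          rw [hpc2 u (by omega) (by rw [hnu]; exact h2v), hnu]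
      · by_cases h2w : 2 ≤ (H.neighborSet (nbr v)).ncard
        · rw [hpc2 v h2v h2w] at hu ⊢
          rcases Finset.mem_insert.mp hu with rfl | hu
          · exact hpc _ h2w
          · rw [Set.mem_toFinset] at hu
            have hu1 : (H.neighborSet u).ncard = 1 := by
              rcases hedge (nbr v) u hu with h | h
              · omega
              · exact h
            have hnu : nbr u = nbr v := (huniq u hu1 (nbr v) hu.symm).symm
            rw [hpc2 u (by omega) (by rw [hnu]; exact h2w), hnu]
        · have hw1 := hdeg1 (nbr v) h2w
          have hnw : nbr (nbr v) = v := (huniq (nbr v) hw1 v (hnbr v).symm).symm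
          rw [hpc3 v h2v h2w] at hu ⊢
          rcases Finset.mem_insert.mp hu with rfl | hu
          · exact hpc3 _ h2v h2w
          · rw [Finset.mem_singleton] at hu
            subst hu
            rw [hpc3 (nbr v) h2w (by rw [hnw]; exact h2v), hnw, Finset.pair_comm]
    have hA : ∀ v, v ∈ part v := by
      intro v
      by_cases h2v : 2 ≤ (H.neighborSet v).ncard
      · rw [hpc v h2v]; exact Finset.mem_insert_self _ _
      · by_cases h2w : 2 ≤ (H.neighborSet (nbr v)).ncard
        · rw [hpc2 v h2v h2w]
          exact Finset.mem_insert_of_mem (by rw [Set.mem_toFinset]; exact (hnbr v).symm)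
        · rw [hpc3 v h2v h2w]
          exact Finset.mem_insert_self _ _
    refine ⟨Finset.image part Finset.univ, ⟨?_, ?_, ?_⟩, ?_⟩
    · -- partition
      intro v
      refine ⟨part v, ⟨Finset.mem_image_of_mem _ (Finset.mem_univ v), hA v⟩, ?_⟩
      rintro S ⟨hS, hvS⟩
      obtain ⟨x, -, rfl⟩ := Finset.mem_image.mp hS
      exact (hB x v hvS).symm
    · -- cardinality at least 2
      intro S hS
      obtain ⟨x, -, rfl⟩ := Finset.mem_image.mp hS
      by_cases h2v : 2 ≤ (H.neighborSet x).ncard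
      · rw [hpc x h2v, Finset.card_insert_of_notMem (hself x), hcards]
        omega
      · by_cases h2w : 2 ≤ (H.neighborSet (nbr x)).ncard
        · rw [hpc2 x h2v h2w, Finset.card_insert_of_notMem (hself (nbr x)), hcards]
          omega
        · rw [hpc3 x h2v h2w, Finset.card_pair (H.ne_of_adj (hnbr x))]
    · -- star centers
      intro S hS
      obtain ⟨x, -, rfl⟩ := Finset.mem_image.mp hS
      by_cases h2v : 2 ≤ (H.neighborSet x).ncard
      · rw [hpc x h2v]
        refine ⟨x, Finset.mem_insert_self _ _, ?_⟩
        intro u hu hux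
        rcases Finset.mem_insert.mp hu with rfl | hu
        · exact absurd rfl hux
        · rw [Set.mem_toFinset] at hu
          exact hHG hu
      · by_cases h2w : 2 ≤ (H.neighborSet (nbr x)).ncard
        · rw [hpc2 x h2v h2w]
          refine ⟨nbr x, Finset.mem_insert_self _ _, ?_⟩
          intro u hu hux
          rcases Finset.mem_insert.mp hu with rfl | hu
          · exact absurd rfl hux
          · rw [Set.mem_toFinset] at hu
            exact hHG hu
        · rw [hpc3 x h2v h2w]
          refine ⟨x, Finset.mem_insert_self _ _, ?_⟩
          intro u hu hux
          rcases Finset.mem_insert.mp hu with rfl | hu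
          · exact absurd rfl hux
          · rw [Finset.mem_singleton] at hu
            subst hu
            exact hHG (hnbr x)
    · -- cardinality at most k+1
      intro S hS
      obtain ⟨x, -, rfl⟩ := Finset.mem_image.mp hS
      by_cases h2v : 2 ≤ (H.neighborSet x).ncard
      · rw [hpc x h2v, Finset.card_insert_of_notMem (hself x), hcards]
        have := (hdeg x).2; omega
      · by_cases h2w : 2 ≤ (H.neighborSet (nbr x)).ncard
        · rw [hpc2 x h2v h2w, Finset.card_insert_of_notMem (hself (nbr x)), hcards]
          have := (hdeg (nbr x)).2; omega
        · rw [hpc3 x h2v h2w, Finset.card_pair (H.ne_of_adj (hnbr x))]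
          omega
  · rintro ⟨P, ⟨hpart, hcard2, hstar⟩, hcardk⟩
    refine ⟨⟨fun u v => G.Adj u v ∧ ∃ S ∈ P, u ∈ S ∧ v ∈ S ∧
        ((∀ w ∈ S, w ≠ u → G.Adj u w) ∨ (∀ w ∈ S, w ≠ v → G.Adj v w)), ?_, ?_⟩, ?_, ?_⟩
    · refine ⟨?_⟩
      rintro u v ⟨h1, S, hS, h2, h3, h4⟩
      exact ⟨h1.symm, S, hS, h3, h2, h4.symm⟩
    · refine ⟨?_⟩
      rintro u ⟨h1, -⟩
      exact G.irrefl h1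
    · intro u v h
      exact h.1
    · intro x
      obtain ⟨S, ⟨hSP, hxS⟩, hSuniq⟩ := hpart x
      obtain ⟨c, hcS, hc⟩ := hstar S hSP
      constructor
      · rw [show (1:ℕ) = 0 + 1 from rfl, Nat.add_one_le_iff, Set.ncard_pos (Set.toFinite _)]
        by_cases hxc : x = c
        · subst hxc
          have : ∃ y ∈ S, y ≠ x := by
            have h2 := hcard2 S hSP
            obtain ⟨y, hy, hy'⟩ := Finset.exists_mem_ne h2 x
            exact ⟨y, hy, hy'⟩
          obtain ⟨y, hyS, hyx⟩ := this
          exact ⟨y, hc y hyS hyx, S, hSP, hxS, hyS, Or.inl hc⟩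
        · exact ⟨c, (hc x hxS hxc).symm, S, hSP, hxS, hcS, Or.inr hc⟩
      · have hsub : {y | G.Adj x y ∧ ∃ T ∈ P, x ∈ T ∧ y ∈ T ∧
            ((∀ w ∈ T, w ≠ x → G.Adj x w) ∨ (∀ w ∈ T, w ≠ y → G.Adj y w))} ⊆
            ↑(S.erase x) := by
          rintro y ⟨hadj, T, hTP, hxT, hyT, -⟩
          have hTS : T = S := hSuniq T ⟨hTP, hxT⟩
          subst hTS
          rw [Finset.coe_erase]
          exact ⟨hyT, fun h => G.irrefl (h ▸ hadj)⟩
        calc _ ≤ (↑(S.erase x) : Set V).ncard := Set.ncard_le_ncard hsub (Set.toFinite _)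
          _ = (S.erase x).card := by rw [Set.ncard_coe_finset]
          _ ≤ S.card - 1 := by rw [Finset.card_erase_of_mem hxS]
          _ ≤ k := by have := hcardk S hSP; omega
end

section
/- Let G be a finite simple graph and k ≥ 2 an integer. Then G has a k-star partition if and only if i(G − X) ≤ k·|X| holds for every subset X ⊆ V(G), where i(G − X) denotes the number of isolated vertices of the induced subgraph of G on V(G) ∖ X. -/
attribute [local instance] Classical.propDecidable

noncomputable def isoF {V : Type*} [Fintype V] [DecidableEq V] (G : SimpleGraph V)
    (R X : Finset V) : Finset V :=
  R.filter (fun v => v ∉ X ∧ ∀ u ∈ R, G.Adj v u → u ∈ X)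

lemma mem_isoF {V : Type*} [Fintype V] [DecidableEq V] {G : SimpleGraph V}
    {R X : Finset V} {v : V} :
    v ∈ isoF G R X ↔ v ∈ R ∧ v ∉ X ∧ ∀ u ∈ R, G.Adj v u → u ∈ X := by
  simp [isoF, Finset.mem_filter, and_assoc]

lemma hallCap {V : Type*} [Fintype V] [DecidableEq V] (k : ℕ) (hk : 1 ≤ k)
    (A : Finset V) (nbr : V → Finset V)
    (hhall : ∀ T ⊆ A, T.card ≤ k * (T.biUnion nbr).card) :
    ∃ g : V → V, (∀ a ∈ A, g a ∈ nbr a) ∧ ∀ x : V, (A.filter fun a => g a = x).card ≤ k := by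
  classical
  have hkpos : 0 < k := hk
  let t : V → Finset (V × Fin k) := fun a =>
    if a ∈ A then (nbr a) ×ˢ (Finset.univ : Finset (Fin k)) else Finset.univ
  have hhall' : ∀ s : Finset V, s.card ≤ (s.biUnion t).card := by
    intro s
    by_cases hs : s ⊆ A
    · have heq : s.biUnion t = (s.biUnion nbr) ×ˢ (Finset.univ : Finset (Fin k)) := by
        ext ⟨x, i⟩
        simp only [Finset.mem_biUnion, Finset.mem_product, Finset.mem_univ, and_true]
        constructor
        · rintro ⟨a, ha, hx⟩
          have : t a = (nbr a) ×ˢ (Finset.univ : Finset (Fin k)) := if_pos (hs ha)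
          rw [this, Finset.mem_product] at hx
          exact ⟨a, ha, hx.1⟩
        · rintro ⟨a, ha, hx⟩
          refine ⟨a, ha, ?_⟩
          have : t a = (nbr a) ×ˢ (Finset.univ : Finset (Fin k)) := if_pos (hs ha)
          rw [this, Finset.mem_product]
          exact ⟨hx, Finset.mem_univ _⟩
      rw [heq, Finset.card_product]
      have := hhall s hs
      simpa [Fintype.card_fin, Nat.mul_comm] using this
    · obtain ⟨a₀, ha₀s, ha₀⟩ := by
        rw [Finset.not_subset] at hs; exact hs
      have hsub : (Finset.univ : Finset (V × Fin k)) ⊆ s.biUnion t := by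
        intro p _
        refine Finset.mem_biUnion.2 ⟨a₀, ha₀s, ?_⟩
        have : t a₀ = Finset.univ := if_neg ha₀
        rw [this]; exact Finset.mem_univ _
      calc s.card ≤ Fintype.card V := Finset.card_le_univ s
        _ ≤ Fintype.card V * k := Nat.le_mul_of_pos_right _ hkpos
        _ = (Finset.univ : Finset (V × Fin k)).card := by
            simp [Fintype.card_fin]
        _ ≤ (s.biUnion t).card := Finset.card_le_card hsub
  obtain ⟨f, finj, hf⟩ := (Finset.all_card_le_biUnion_card_iff_exists_injective t).1 hhall'
  refine ⟨fun a => (f a).1, ?_, ?_⟩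
  · intro a ha
    have : f a ∈ (nbr a) ×ˢ (Finset.univ : Finset (Fin k)) := by
      have := hf a; rwa [show t a = _ from if_pos ha] at this
    exact (Finset.mem_product.1 this).1
  · intro x
    have hmap : ∀ a ∈ A.filter (fun a => (f a).1 = x),
        f a ∈ ({x} : Finset V) ×ˢ (Finset.univ : Finset (Fin k)) := by
      intro a ha
      rw [Finset.mem_filter] at ha
      rw [Finset.mem_product]
      exact ⟨Finset.mem_singleton.2 ha.2, Finset.mem_univ _⟩
    have := Finset.card_le_card_of_injOn f hmap (fun a _ b _ hab => finj hab)
    simpa [Finset.card_product] using this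

lemma starAux {V : Type*} [Fintype V] [DecidableEq V] (k : ℕ) (hk : 2 ≤ k) :
    ∀ (n : ℕ) (G : SimpleGraph V) (R : Finset V),
      (Fintype.card V * Fintype.card V + 1) * R.card
        + ((R ×ˢ R).filter fun p => G.Adj p.1 p.2).card ≤ n →
      (∀ X ⊆ R, (isoF G R X).card ≤ k * X.card) →
      ∃ P : Finset (Finset V),
        (∀ S ∈ P, S ⊆ R) ∧ (∀ v ∈ R, ∃! S : Finset V, S ∈ P ∧ v ∈ S) ∧
        (∀ S ∈ P, 2 ≤ S.card ∧ S.card ≤ k + 1) ∧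
        (∀ S ∈ P, ∃ c ∈ S, ∀ v ∈ S, v ≠ c → G.Adj c v) := by
  classical
  set N := Fintype.card V with hN
  intro n
  induction n with
  | zero =>
    intro G R hm hC
    have hR : R = ∅ := by
      by_contra h
      have h1 : 1 ≤ R.card := Finset.card_pos.2 (Finset.nonempty_iff_ne_empty.2 h)
      have h2 : (N * N + 1) * 1 ≤ (N * N + 1) * R.card := Nat.mul_le_mul_left _ h1
      omega
    subst hR
    exact ⟨∅, by simp, by simp, by simp, by simp⟩
  | succ n IH =>
    intro G R hm hC
    by_cases hR : R = ∅
    · subst hR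
      exact ⟨∅, by simp, by simp, by simp, by simp⟩
    obtain ⟨v₀, hv₀⟩ := Finset.nonempty_iff_ne_empty.2 hR
    -- every vertex of R has a neighbour in R
    have hnbr : ∀ v ∈ R, ∃ u ∈ R, G.Adj v u := by
      intro v hv
      by_contra h
      push_neg at h
      have h0 := hC ∅ (Finset.empty_subset R)
      have hv' : v ∈ isoF G R (∅ : Finset V) :=
        mem_isoF.2 ⟨hv, by simp, fun u hu hadj => absurd hadj (h u hu)⟩
      have : 0 < (isoF G R (∅ : Finset V)).card := Finset.card_pos.2 ⟨v, hv'⟩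
      simp only [Finset.card_empty, Nat.mul_zero] at h0
      omega
    -- choose a minimizer of the deficiency over nonempty subsets of R
    have candne : (R.powerset.filter (fun Y => Y.Nonempty)).Nonempty :=
      ⟨{v₀}, Finset.mem_filter.2 ⟨Finset.mem_powerset.2 (Finset.singleton_subset_iff.2 hv₀),
        Finset.singleton_nonempty _⟩⟩
    obtain ⟨Xs, hXscand, hXsmin⟩ := Finset.exists_min_image (R.powerset.filter (fun Y => Y.Nonempty))
      (fun Y => k * Y.card - (isoF G R Y).card) candne
    have hXsR : Xs ⊆ R := Finset.mem_powerset.1 (Finset.mem_filter.1 hXscand).1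
    have hXsne : Xs.Nonempty := (Finset.mem_filter.1 hXscand).2
    set A := isoF G R Xs with hAdef
    have hAcard : A.card ≤ k * Xs.card := hC Xs hXsR
    have hAprop : ∀ a ∈ A, a ∈ R ∧ a ∉ Xs ∧ ∀ u ∈ R, G.Adj a u → u ∈ Xs :=
      fun a ha => mem_isoF.1 ha
    have hAR : A ⊆ R := fun a ha => (hAprop a ha).1
    have hmin : ∀ Y ⊆ R, Y.Nonempty →
        k * Xs.card + (isoF G R Y).card ≤ k * Y.card + A.card := by
      intro Y hY hYne
      have h1 := hXsmin Y (Finset.mem_filter.2 ⟨Finset.mem_powerset.2 hY, hYne⟩)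
      have h2 := hC Y hY
      omega
    by_cases hd : A.card + k ≤ k * Xs.card
    · -- CASE 2 : the deficiency is at least k everywhere; delete an edge
      have hgap : ∀ Y ⊆ R, Y.Nonempty → (isoF G R Y).card + k ≤ k * Y.card := by
        intro Y hY hYne
        have := hmin Y hY hYne
        omega
      have hdeg2 : ∀ v ∈ R, ∀ w ∈ R, G.Adj v w → ∃ u ∈ R, u ≠ w ∧ G.Adj v u := by
        intro v hv w hw hadj
        by_contra h
        push_neg at h
        have hmem : v ∈ isoF G R ({w} : Finset V) := by
          refine mem_isoF.2 ⟨hv, ?_, fun u hu hadju => ?_⟩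
          · simp [hadj.ne]
          · by_contra hne
            exact (h u hu (by simpa using hne)) hadju
        have hg := hgap {w} (by simpa using hw) ⟨w, Finset.mem_singleton_self w⟩
        have : 0 < (isoF G R ({w} : Finset V)).card := Finset.card_pos.2 ⟨v, hmem⟩
        simp only [Finset.card_singleton, Nat.mul_one] at hg
        omega
      obtain ⟨w₀, hw₀R, hadj₀⟩ := hnbr v₀ hv₀
      set G' := G.deleteEdges {s(v₀, w₀)} with hG'def
      have hG'le : ∀ a b : V, G'.Adj a b → G.Adj a b := by
        intro a b h
        rw [hG'def, SimpleGraph.deleteEdges_adj] at h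
        exact h.1
      have hkeep : ∀ a b : V, G.Adj a b → s(a, b) ≠ s(v₀, w₀) → G'.Adj a b := by
        intro a b h hne
        rw [hG'def, SimpleGraph.deleteEdges_adj]
        exact ⟨h, by simpa using hne⟩
      have hG'vw : ¬ G'.Adj v₀ w₀ := by
        rw [hG'def, SimpleGraph.deleteEdges_adj]
        simp
      -- edge count decreases
      have hec : ((R ×ˢ R).filter fun p => G'.Adj p.1 p.2).card
          < ((R ×ˢ R).filter fun p => G.Adj p.1 p.2).card := by
        apply Finset.card_lt_card
        have hss : ((R ×ˢ R).filter fun p => G'.Adj p.1 p.2)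
            ⊆ ((R ×ˢ R).filter fun p => G.Adj p.1 p.2) := by
          intro p hp
          rw [Finset.mem_filter] at hp ⊢
          exact ⟨hp.1, hG'le _ _ hp.2⟩
        refine ⟨hss, ?_⟩
        intro hsub
        have hmemvw : ((v₀, w₀) : V × V) ∈ (R ×ˢ R).filter fun p => G.Adj p.1 p.2 :=
          Finset.mem_filter.2 ⟨Finset.mem_product.2 ⟨hv₀, hw₀R⟩, hadj₀⟩
        have := hsub hmemvw
        rw [Finset.mem_filter] at this
        exact hG'vw this.2
      -- the condition holds for G'
      have hG'nbr : ∀ v ∈ R, ∃ u ∈ R, G'.Adj v u := by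
        have hne0 : v₀ ≠ w₀ := hadj₀.ne
        intro v hv
        by_cases h1 : v = v₀
        · obtain ⟨u, huR, hune, hadj⟩ := hdeg2 v₀ hv₀ w₀ hw₀R hadj₀
          refine ⟨u, huR, ?_⟩
          rw [h1]
          refine hkeep _ _ hadj fun heq => ?_
          rcases Sym2.eq_iff.1 heq with ⟨-, h⟩ | ⟨h, -⟩
          · exact hune h
          · exact hne0 h
        by_cases h2 : v = w₀
        · obtain ⟨u, huR, hune, hadj⟩ := hdeg2 w₀ hw₀R v₀ hv₀ hadj₀.symm
          refine ⟨u, huR, ?_⟩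
          rw [h2]
          refine hkeep _ _ hadj fun heq => ?_
          rcases Sym2.eq_iff.1 heq with ⟨h, -⟩ | ⟨-, h⟩
          · exact hne0 h.symm
          · exact hune h
        · obtain ⟨u, huR, hadj⟩ := hnbr v hv
          refine ⟨u, huR, hkeep _ _ hadj fun heq => ?_⟩
          rcases Sym2.eq_iff.1 heq with ⟨h, -⟩ | ⟨h, -⟩
          · exact h1 h
          · exact h2 h
      have hC' : ∀ X ⊆ R, (isoF G' R X).card ≤ k * X.card := by
        intro X hX
        rcases X.eq_empty_or_nonempty with rfl | hXne
        · have hempty : isoF G' R (∅ : Finset V) = ∅ := by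
            rw [Finset.eq_empty_iff_forall_notMem]
            intro v hvmem
            obtain ⟨hvR, -, hiso⟩ := mem_isoF.1 hvmem
            obtain ⟨u, huR, hadj⟩ := hG'nbr v hvR
            exact Finset.notMem_empty u (hiso u huR hadj)
          rw [hempty]
          simp
        · have hsub : isoF G' R X ⊆ isoF G R X ∪ {v₀, w₀} := by
            intro u hu
            obtain ⟨huR, huX, hiso⟩ := mem_isoF.1 hu
            by_cases h1 : u = v₀ ∨ u = w₀
            · exact Finset.mem_union_right _ (by rcases h1 with rfl | rfl <;> simp)
            push_neg at h1
            refine Finset.mem_union_left _ (mem_isoF.2 ⟨huR, huX, fun w hw hadj => ?_⟩)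
            refine hiso w hw (hkeep _ _ hadj fun heq => ?_)
            rcases Sym2.eq_iff.1 heq with ⟨h, -⟩ | ⟨h, -⟩
            · exact h1.1 h
            · exact h1.2 h
          have hcard1 : (isoF G' R X).card ≤ (isoF G R X).card + 2 := by
            calc (isoF G' R X).card ≤ (isoF G R X ∪ {v₀, w₀}).card := Finset.card_le_card hsub
              _ ≤ (isoF G R X).card + ({v₀, w₀} : Finset V).card := Finset.card_union_le _ _
              _ ≤ (isoF G R X).card + 2 := by
                  have : ({v₀, w₀} : Finset V).card ≤ 2 := Finset.card_insert_le _ _ |>.trans (by simp)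
                  omega
          have := hgap X hX hXne
          omega
      have hm' : (N * N + 1) * R.card + ((R ×ˢ R).filter fun p => G'.Adj p.1 p.2).card ≤ n := by
        omega
      obtain ⟨P, hPR, hPcov, hPcard, hPstar⟩ := IH G' R (by convert hm') hC'
      refine ⟨P, hPR, hPcov, hPcard, fun S hS => ?_⟩
      obtain ⟨c, hc, hstar⟩ := hPstar S hS
      exact ⟨c, hc, fun v hv hne => hG'le _ _ (hstar v hv hne)⟩
    · -- CASE 1 : small deficiency; peel off the stars centered in Xs
      push_neg at hd
      set nbr : V → Finset V := fun a => Xs.filter (fun u => G.Adj a u) with hnbrdef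
      have hhall : ∀ T ⊆ A, T.card ≤ k * (T.biUnion nbr).card := by
        intro T hT
        set Y := T.biUnion nbr with hYdef
        have hYXs : Y ⊆ Xs := Finset.biUnion_subset.2 fun a _ => Finset.filter_subset _ _
        have hTiso : T ⊆ isoF G R Y := by
          intro v hv
          obtain ⟨hvR, hvXs, hviso⟩ := hAprop v (hT hv)
          refine mem_isoF.2 ⟨hvR, fun hvY => hvXs (hYXs hvY), fun u hu hadj => ?_⟩
          exact Finset.mem_biUnion.2 ⟨v, hv, Finset.mem_filter.2 ⟨hviso u hu hadj, hadj⟩⟩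
        calc T.card ≤ (isoF G R Y).card := Finset.card_le_card hTiso
          _ ≤ k * Y.card := hC Y (hYXs.trans hXsR)
      obtain ⟨g, hg1, hg2⟩ := hallCap k (by omega) A nbr hhall
      have hgXs : ∀ a ∈ A, g a ∈ Xs ∧ G.Adj a (g a) := by
        intro a ha
        have := hg1 a ha
        rw [hnbrdef] at this
        exact ⟨(Finset.mem_filter.1 this).1, (Finset.mem_filter.1 this).2⟩
      set F : V → Finset V := fun x => A.filter (fun a => g a = x) with hFdef
      have hFA : ∀ x, F x ⊆ A := fun x => Finset.filter_subset _ _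
      have hAnotXs : ∀ a ∈ A, a ∉ Xs := fun a ha => (hAprop a ha).2.1
      have hFk : ∀ x, (F x).card ≤ k := hg2
      have hFne : ∀ x ∈ Xs, (F x).Nonempty := by
        intro x₀ hx₀
        by_contra hF0
        rw [Finset.not_nonempty_iff_eq_empty] at hF0
        have hAsum : A.card = ∑ x ∈ Xs, (F x).card :=
          Finset.card_eq_sum_card_fiberwise (fun a ha => (hgXs a ha).1)
        have hsplit : ∑ x ∈ Xs.erase x₀, (F x).card + (F x₀).card = ∑ x ∈ Xs, (F x).card :=
          Finset.sum_erase_add _ _ hx₀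
        have hbound : ∑ x ∈ Xs.erase x₀, (F x).card ≤ (Xs.erase x₀).card * k :=
          Finset.sum_le_card_nsmul _ _ k (fun x _ => hFk x)
        have hXserase : (Xs.erase x₀).card = Xs.card - 1 := Finset.card_erase_of_mem hx₀
        have hXs1 : 1 ≤ Xs.card := Finset.card_pos.2 hXsne
        have h5 : (Xs.card - 1) * k + k = Xs.card * k := by
          rw [← Nat.succ_mul, Nat.succ_eq_add_one, Nat.sub_add_cancel hXs1]
        have h6 : k * Xs.card = Xs.card * k := Nat.mul_comm _ _
        rw [hF0] at hsplit
        simp at hsplit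
        rw [hXserase] at hbound
        omega
      set part : V → Finset V := fun x => insert x (F x) with hpartdef
      have hxnotF : ∀ x ∈ Xs, x ∉ F x := fun x hx hmem => hAnotXs x (hFA x hmem) hx
      set P₁ := Xs.image part with hP₁def
      set R' := R \ (Xs ∪ A) with hR'def
      have hR'sub : R' ⊆ R := Finset.sdiff_subset
      have hmemR' : ∀ v, v ∈ R' ↔ v ∈ R ∧ v ∉ Xs ∧ v ∉ A := by
        intro v
        rw [hR'def, Finset.mem_sdiff, Finset.mem_union]
        tauto
      have hR'lt : R'.card < R.card := by
        apply Finset.card_lt_card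
        refine ⟨hR'sub, fun h => ?_⟩
        obtain ⟨v₁, hv₁⟩ := hXsne
        have := (hmemR' v₁).1 (h (hXsR hv₁))
        exact this.2.1 hv₁
      -- condition for the remainder
      have hC'' : ∀ X ⊆ R', (isoF G R' X).card ≤ k * X.card := by
        intro X hX
        have hXR : X ⊆ R := hX.trans hR'sub
        have hsub : isoF G R' X ⊆ isoF G R (Xs ∪ X) := by
          intro u hu
          obtain ⟨huR', huX, hiso⟩ := mem_isoF.1 hu
          obtain ⟨huR, huXs, huA⟩ := (hmemR' u).1 huR'
          refine mem_isoF.2 ⟨huR, ?_, fun w hw hadj => ?_⟩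
          · rw [Finset.mem_union]
            push_neg
            exact ⟨huXs, huX⟩
          · by_cases hwXs : w ∈ Xs
            · exact Finset.mem_union_left _ hwXs
            by_cases hwA : w ∈ A
            · exact absurd ((hAprop w hwA).2.2 u huR hadj.symm) huXs
            · refine Finset.mem_union_right _ (hiso w ((hmemR' w).2 ⟨hw, hwXs, hwA⟩) hadj)
        have hAsub : A ⊆ isoF G R (Xs ∪ X) := by
          intro a ha
          obtain ⟨haR, haXs, haiso⟩ := hAprop a ha
          refine mem_isoF.2 ⟨haR, ?_, fun w hw hadj => Finset.mem_union_left _ (haiso w hw hadj)⟩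
          rw [Finset.mem_union]
          push_neg
          refine ⟨haXs, fun haX => ?_⟩
          exact ((hmemR' a).1 (hX haX)).2.2 ha
        have hdisj : Disjoint (isoF G R' X) A := by
          rw [Finset.disjoint_left]
          intro u hu hua
          exact ((hmemR' u).1 (mem_isoF.1 hu).1).2.2 hua
        have hcard : (isoF G R' X).card + A.card ≤ (isoF G R (Xs ∪ X)).card := by
          rw [← Finset.card_union_of_disjoint hdisj]
          exact Finset.card_le_card (Finset.union_subset hsub hAsub)
        rcases X.eq_empty_or_nonempty with rfl | hXne
        · rw [Finset.union_empty, ← hAdef] at hcard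
          simp only [Finset.card_empty, Nat.mul_zero]
          omega
        · have hXsXR : Xs ∪ X ⊆ R := Finset.union_subset hXsR hXR
          have hXsXne : (Xs ∪ X).Nonempty := hXsne.mono Finset.subset_union_left
          have hm2 := hmin (Xs ∪ X) hXsXR hXsXne
          have hdisj2 : Disjoint Xs X := by
            rw [Finset.disjoint_left]
            intro x hx hxX
            exact ((hmemR' x).1 (hX hxX)).2.1 hx
          have hcards : (Xs ∪ X).card = Xs.card + X.card := Finset.card_union_of_disjoint hdisj2
          have hma : k * (Xs.card + X.card) = k * Xs.card + k * X.card := Nat.mul_add _ _ _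
          rw [hcards] at hm2
          omega
      -- measure for the recursive call
      have hecR' : ((R' ×ˢ R').filter fun p => G.Adj p.1 p.2).card ≤ N * N := by
        calc ((R' ×ˢ R').filter fun p => G.Adj p.1 p.2).card
            ≤ (R' ×ˢ R').card := Finset.card_filter_le _ _
          _ = R'.card * R'.card := Finset.card_product _ _
          _ ≤ N * N := Nat.mul_le_mul (Finset.card_le_univ _) (Finset.card_le_univ _)
      have hmul : (N * N + 1) * R'.card + (N * N + 1) ≤ (N * N + 1) * R.card := by
        have h1 : R'.card + 1 ≤ R.card := hR'lt
        have := Nat.mul_le_mul_left (N * N + 1) h1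
        rw [Nat.mul_add, Nat.mul_one] at this
        exact this
      have hm' : (N * N + 1) * R'.card + ((R' ×ˢ R').filter fun p => G.Adj p.1 p.2).card ≤ n := by
        omega
      obtain ⟨P₂, hP2R, hP2cov, hP2card, hP2star⟩ := IH G R' hm' hC''
      -- assemble
      have hpartmem : ∀ S ∈ P₁, ∃ x ∈ Xs, S = part x := by
        intro S hS
        obtain ⟨x, hx, rfl⟩ := Finset.mem_image.1 hS
        exact ⟨x, hx, rfl⟩
      have hmempart : ∀ x v, v ∈ part x ↔ v = x ∨ (v ∈ A ∧ g v = x) := by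
        intro x v
        rw [hpartdef]
        simp only [Finset.mem_insert]
        rw [hFdef]
        simp [Finset.mem_filter]
      refine ⟨P₁ ∪ P₂, ?_, ?_, ?_, ?_⟩
      · intro S hS
        rcases Finset.mem_union.1 hS with h | h
        · obtain ⟨x, hx, rfl⟩ := hpartmem S h
          intro v hv
          rcases (hmempart x v).1 hv with rfl | ⟨hvA, -⟩
          · exact hXsR hx
          · exact hAR hvA
        · exact (hP2R S h).trans hR'sub
      · intro v hv
        by_cases hvXs : v ∈ Xs
        · refine ⟨part v, ⟨Finset.mem_union_left _ (Finset.mem_image_of_mem part hvXs),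
            (hmempart v v).2 (Or.inl rfl)⟩, ?_⟩
          rintro S ⟨hSP, hvS⟩
          rcases Finset.mem_union.1 hSP with h | h
          · obtain ⟨x, hx, rfl⟩ := hpartmem S h
            rcases (hmempart x v).1 hvS with rfl | ⟨hvA, -⟩
            · rfl
            · exact absurd hvXs (hAnotXs v hvA)
          · have := (hP2R S h) hvS
            exact absurd hvXs ((hmemR' v).1 this).2.1.elim
        by_cases hvA : v ∈ A
        · have hgv := hgXs v hvA
          refine ⟨part (g v), ⟨Finset.mem_union_left _ (Finset.mem_image_of_mem part hgv.1),
            (hmempart (g v) v).2 (Or.inr ⟨hvA, rfl⟩)⟩, ?_⟩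
          rintro S ⟨hSP, hvS⟩
          rcases Finset.mem_union.1 hSP with h | h
          · obtain ⟨x, hx, rfl⟩ := hpartmem S h
            rcases (hmempart x v).1 hvS with rfl | ⟨-, hgvx⟩
            · exact absurd hx hvXs
            · rw [hgvx]
          · have := (hP2R S h) hvS
            exact absurd hvA ((hmemR' v).1 this).2.2.elim
        · have hvR' : v ∈ R' := (hmemR' v).2 ⟨hv, hvXs, hvA⟩
          obtain ⟨S, ⟨hSP2, hvS⟩, huniq⟩ := hP2cov v hvR'
          refine ⟨S, ⟨Finset.mem_union_right _ hSP2, hvS⟩, ?_⟩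
          rintro S' ⟨hS'P, hvS'⟩
          rcases Finset.mem_union.1 hS'P with h | h
          · obtain ⟨x, hx, rfl⟩ := hpartmem S' h
            rcases (hmempart x v).1 hvS' with rfl | ⟨hvA', -⟩
            · exact absurd hx hvXs
            · exact absurd hvA' hvA
          · exact huniq S' ⟨h, hvS'⟩
      · intro S hS
        rcases Finset.mem_union.1 hS with h | h
        · obtain ⟨x, hx, rfl⟩ := hpartmem S h
          have hcard : (part x).card = (F x).card + 1 := by
            rw [hpartdef]
            exact Finset.card_insert_of_notMem (hxnotF x hx)
          have h1 : 1 ≤ (F x).card := Finset.card_pos.2 (hFne x hx)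
          have h2 := hFk x
          omega
        · exact hP2card S h
      · intro S hS
        rcases Finset.mem_union.1 hS with h | h
        · obtain ⟨x, hx, rfl⟩ := hpartmem S h
          refine ⟨x, (hmempart x x).2 (Or.inl rfl), fun v hv hne => ?_⟩
          rcases (hmempart x v).1 hv with rfl | ⟨hvA, hgv⟩
          · exact absurd rfl hne
          · have := (hgXs v hvA).2
            rw [hgv] at this
            exact this.symm
        · exact hP2star S h

/-- For `k ≥ 2`, a finite simple graph `G` has a `k`-star partition
iff for every vertex subset `X` the number of isolated vertices of `G − X`
is at most `k·|X|`. -/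
theorem stmt3 {V : Type*} [Fintype V] [DecidableEq V] (G : SimpleGraph V)
    (k : ℕ) (hk : 2 ≤ k) :
    (∃ P : Finset (Finset V), IsStarPartition G P ∧ ∀ S ∈ P, S.card ≤ k + 1) ↔
      ∀ X : Finset V,
        {v : V | v ∉ X ∧ ∀ u : V, G.Adj v u → u ∈ X}.ncard ≤ k * X.card := by
  classical
  have hset : ∀ X : Finset V, {v : V | v ∉ X ∧ ∀ u : V, G.Adj v u → u ∈ X}.ncard
      = (Finset.univ.filter fun v => v ∉ X ∧ ∀ u : V, G.Adj v u → u ∈ X).card := by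
    intro X
    have : {v : V | v ∉ X ∧ ∀ u : V, G.Adj v u → u ∈ X}
        = ↑(Finset.univ.filter fun v => v ∉ X ∧ ∀ u : V, G.Adj v u → u ∈ X) := by
      ext v; simp
    rw [this, Set.ncard_coe_finset]
  constructor
  · rintro ⟨P, ⟨hcov, hcard2, hstar⟩, hcardk⟩ X
    rw [hset X]
    set I := Finset.univ.filter fun v => v ∉ X ∧ ∀ u : V, G.Adj v u → u ∈ X with hIdef
    set Sv : V → Finset V := fun v => Classical.choose (hcov v).exists with hSvdef
    have hSv : ∀ v : V, Sv v ∈ P ∧ v ∈ Sv v := fun v => Classical.choose_spec (hcov v).exists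
    have huniq : ∀ (v : V) (S : Finset V), S ∈ P → v ∈ S → S = Sv v := by
      intro v S hS hvS
      exact ExistsUnique.unique (hcov v) ⟨hS, hvS⟩ (hSv v)
    have key : ∀ v ∈ I, ∃ w, w ∈ Sv v ∧ w ≠ v ∧ w ∈ X := by
      intro v hv
      rw [hIdef, Finset.mem_filter] at hv
      obtain ⟨-, hvX, hiso⟩ := hv
      obtain ⟨hSvP, hvSv⟩ := hSv v
      obtain ⟨c, hcS, hcstar⟩ := hstar (Sv v) hSvP
      by_cases hvc : v = c
      · have h2 : 1 < (Sv v).card := lt_of_lt_of_le one_lt_two (hcard2 _ hSvP)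
        obtain ⟨w, hwS, hwv⟩ := Finset.exists_mem_ne h2 v
        have hadj : G.Adj c w := hcstar w hwS (by rw [← hvc]; exact hwv)
        exact ⟨w, hwS, hwv, hiso w (by rw [hvc]; exact hadj)⟩
      · have hadj : G.Adj c v := hcstar v hvSv hvc
        exact ⟨c, hcS, fun h => hvc h.symm, hiso c hadj.symm⟩
    set g : V → V := fun v => if hv : v ∈ I then Classical.choose (key v hv) else v with hgdef
    have hgspec : ∀ v ∈ I, g v ∈ Sv v ∧ g v ≠ v ∧ g v ∈ X := by
      intro v hv
      have := Classical.choose_spec (key v hv)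
      simpa [hgdef, dif_pos hv] using this
    have hgX : ∀ v ∈ I, g v ∈ X := fun v hv => (hgspec v hv).2.2
    rw [Finset.card_eq_sum_card_fiberwise hgX]
    have hfiber : ∀ x ∈ X, (I.filter fun v => g v = x).card ≤ k := by
      intro x hx
      have hsub : (I.filter fun v => g v = x) ⊆ (Sv x).erase x := by
        intro v hv
        rw [Finset.mem_filter] at hv
        obtain ⟨hvI, hgvx⟩ := hv
        obtain ⟨hg1, hg2, hg3⟩ := hgspec v hvI
        rw [hgvx] at hg1
        have hSveq : Sv v = Sv x := huniq x (Sv v) (hSv v).1 hg1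
        refine Finset.mem_erase.2 ⟨?_, ?_⟩
        · exact fun h => hg2 (by rw [hgvx, h])
        · rw [← hSveq]; exact (hSv v).2
      calc (I.filter fun v => g v = x).card ≤ ((Sv x).erase x).card := Finset.card_le_card hsub
        _ = (Sv x).card - 1 := Finset.card_erase_of_mem (hSv x).2
        _ ≤ k := by have := hcardk (Sv x) (hSv x).1; omega
    calc ∑ x ∈ X, (I.filter fun v => g v = x).card ≤ X.card • k :=
          Finset.sum_le_card_nsmul X _ k (fun x hx => hfiber x hx)
      _ = k * X.card := by rw [smul_eq_mul, Nat.mul_comm]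
  · intro hcond
    have keyiso : ∀ X : Finset V, isoF G Finset.univ X
        = Finset.univ.filter fun v => v ∉ X ∧ ∀ u : V, G.Adj v u → u ∈ X := by
      intro X
      ext v
      rw [mem_isoF, Finset.mem_filter]
      simp
    have hC : ∀ X ⊆ (Finset.univ : Finset V), (isoF G Finset.univ X).card ≤ k * X.card := by
      intro X _
      rw [keyiso X, ← hset X]
      exact hcond X
    obtain ⟨P, hPR, hPcov, hPcard, hPstar⟩ := starAux k hk
      ((Fintype.card V * Fintype.card V + 1) * (Finset.univ : Finset V).card
        + (((Finset.univ : Finset V) ×ˢ (Finset.univ : Finset V)).filter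
            fun p => G.Adj p.1 p.2).card)
      G Finset.univ le_rfl hC
    exact ⟨P, ⟨fun v => hPcov v (Finset.mem_univ v), fun S hS => (hPcard S hS).1, hPstar⟩,
      fun S hS => (hPcard S hS).2⟩
end

section
/- Let G be a finite simple graph without isolated vertices that has no nontrivial path cover. Then σ(G) = max over all nonempty proper subsets S ⊂ V(G) of ⌈ i(G − S) / |S| ⌉, where i(G − S) denotes the number of isolated vertices of the induced subgraph of G on V(G) ∖ S. -/
/-- The star partition width `σ(G)`: the smallest `k` such that `G` has a
`k`-star partition. -/
noncomputable def starPartitionWidth {V : Type*} [Fintype V] [DecidableEq V]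
    (G : SimpleGraph V) : ℕ :=
  sInf {k : ℕ | ∃ P : Finset (Finset V), IsStarPartition G P ∧ ∀ S ∈ P, S.card ≤ k + 1}

/-- `G` has a nontrivial path cover: a spanning subgraph whose components are paths of
order at least two, i.e. an acyclic spanning subgraph in which every vertex has degree
`1` or `2`. -/
def HasNontrivialPathCover {V : Type*} [Fintype V] [DecidableEq V]
    (G : SimpleGraph V) : Prop :=
  ∃ H : SimpleGraph V, H ≤ G ∧ H.IsAcyclic ∧
    ∀ v : V, 1 ≤ (H.neighborSet v).ncard ∧ (H.neighborSet v).ncard ≤ 2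

open Finset
namespace AK
variable {V : Type*} [Fintype V] [DecidableEq V]

structure SF (G : SimpleGraph V) (k : ℕ) where
  C : Finset V
  f : V → Option V
  hC : ∀ c ∈ C, f c = none
  mem : ∀ {v c : V}, f v = some c → c ∈ C ∧ G.Adj c v
  ub : ∀ c ∈ C, (univ.filter (fun v => f v = some c)).card ≤ k
  lb : ∀ c ∈ C, (univ.filter (fun v => f v = some c)).Nonempty

variable {G : SimpleGraph V} {k : ℕ}

def fib (F : SF G k) (c : V) : Finset V := univ.filter (fun v => F.f v = some c)

def cov (F : SF G k) : Finset V := univ.filter (fun v => v ∈ F.C ∨ (F.f v).isSome)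

lemma mem_fib {F : SF G k} {c v : V} : v ∈ fib F c ↔ F.f v = some c := by simp [fib]

lemma mem_cov {F : SF G k} {v : V} : v ∈ cov F ↔ v ∈ F.C ∨ (F.f v).isSome := by simp [cov]

lemma leaf_not_center {F : SF G k} {v c : V} (h : F.f v = some c) : v ∉ F.C := by
  intro hv; rw [F.hC v hv] at h; cases h

lemma center_ne_leaf {F : SF G k} {v c : V} (h : F.f v = some c) : v ≠ c := by
  intro e; exact G.irrefl (e ▸ (F.mem h).2)

lemma uncov_iff {F : SF G k} {v : V} : v ∉ cov F ↔ v ∉ F.C ∧ F.f v = none := by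
  rw [mem_cov]; push_neg
  constructor
  · rintro ⟨h1, h2⟩; exact ⟨h1, Option.not_isSome_iff_eq_none.mp h2⟩
  · rintro ⟨h1, h2⟩; exact ⟨h1, by simp [h2]⟩

lemma center_mem_cov {F : SF G k} {c : V} (h : c ∈ F.C) : c ∈ cov F := mem_cov.mpr (Or.inl h)

lemma leaf_mem_cov {F : SF G k} {v c : V} (h : F.f v = some c) : v ∈ cov F :=
  mem_cov.mpr (Or.inr (by simp [h]))

section Step

variable (F : SF G k) (x c l : V)

def stepf : V → Option V := Function.update (Function.update F.f l none) x (some c)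

lemma stepf_x : stepf F x c l x = some c := by simp [stepf]

lemma stepf_l (hlx : l ≠ x) : stepf F x c l l = none := by
  simp [stepf, Function.update_apply, hlx]

lemma stepf_ne {v : V} (hvx : v ≠ x) (hvl : v ≠ l) : stepf F x c l v = F.f v := by
  simp [stepf, Function.update_apply, hvx, hvl]

end Step

variable (F : SF G k)

lemma fib_stepf_eq {x c l : V} (hx : F.f x = none) (hl : F.f l = some c) :
    univ.filter (fun v => stepf F x c l v = some c) = insert x ((fib F c).erase l) := by
  have hlx : l ≠ x := by intro e; rw [e, hx] at hl; cases hl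
  ext v
  simp only [mem_filter, mem_univ, true_and, mem_insert, mem_erase, mem_fib]
  by_cases hvx : v = x
  · rw [hvx, stepf_x]; simp
  · by_cases hvl : v = l
    · rw [hvl, stepf_l F x c l hlx]
      constructor
      · intro h; cases h
      · rintro (h | h)
        · exact (hlx h).elim
        · exact (h.1 rfl).elim
    · rw [stepf_ne F x c l hvx hvl]; simp [hvx, hvl]

lemma fib_stepf_ne {x c l : V} (hx : F.f x = none) (hl : F.f l = some c) {c' : V} (hcc : c' ≠ c) :
    univ.filter (fun v => stepf F x c l v = some c') = fib F c' := by
  have hlx : l ≠ x := by intro e; rw [e, hx] at hl; cases hl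
  ext v
  simp only [mem_filter, mem_univ, true_and, mem_fib]
  by_cases hvx : v = x
  · rw [hvx, stepf_x, hx]
    constructor
    · intro h; exact (hcc (Option.some.inj h).symm).elim
    · intro h; cases h
  · by_cases hvl : v = l
    · rw [hvl, stepf_l F x c l hlx, hl]
      constructor
      · intro h; cases h
      · intro h; exact (hcc (Option.some.inj h).symm).elim
    · rw [stepf_ne F x c l hvx hvl]

lemma fib_stepf_card {x c l : V} (hx : F.f x = none) (hl : F.f l = some c) (c' : V) :
    (univ.filter (fun v => stepf F x c l v = some c')).card = (fib F c').card := by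
  by_cases hcc : c' = c
  · subst hcc
    have hlmem : l ∈ fib F c' := mem_fib.mpr hl
    have hxnot : x ∉ (fib F c').erase l := by
      intro hmem
      have := mem_fib.mp (mem_erase.mp hmem).2
      rw [hx] at this; cases this
    rw [fib_stepf_eq F hx hl, card_insert_of_notMem hxnot, card_erase_of_mem hlmem]
    have : 0 < (fib F c').card := card_pos.mpr ⟨l, hlmem⟩
    omega
  · rw [fib_stepf_ne F hx hl hcc]


/-- Move leaf `l` out of `c`'s star and put uncovered `x` in. -/
def stepSF (F : SF G k) {x c l : V} (hx : F.f x = none) (hxC : x ∉ F.C) (hc : c ∈ F.C)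
    (hadj : G.Adj c x) (hl : F.f l = some c) : SF G k where
  C := F.C
  f := stepf F x c l
  hC := by
    intro c' hc'
    have hlx : l ≠ x := by intro e; rw [e, hx] at hl; cases hl
    have h1 : c' ≠ x := fun e => hxC (e ▸ hc')
    have h2 : c' ≠ l := fun e => leaf_not_center hl (e ▸ hc')
    rw [stepf_ne F x c l h1 h2]; exact F.hC c' hc'
  mem := by
    intro v c' h
    have hlx : l ≠ x := by intro e; rw [e, hx] at hl; cases hl
    by_cases hvx : v = x
    · rw [hvx, stepf_x] at h
      rw [hvx]
      exact ⟨(Option.some.inj h) ▸ hc, (Option.some.inj h) ▸ hadj⟩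
    · by_cases hvl : v = l
      · rw [hvl, stepf_l F x c l hlx] at h; cases h
      · rw [stepf_ne F x c l hvx hvl] at h; exact F.mem h
  ub := by intro c' hc'; rw [fib_stepf_card F hx hl c']; exact F.ub c' hc'
  lb := by
    intro c' hc'
    rw [← card_pos, fib_stepf_card F hx hl c', card_pos]
    exact F.lb c' hc'

lemma stepSF_C (F : SF G k) {x c l : V} (hx : F.f x = none) (hxC : x ∉ F.C) (hc : c ∈ F.C)
    (hadj : G.Adj c x) (hl : F.f l = some c) : (stepSF F hx hxC hc hadj hl).C = F.C := rfl

lemma fib_stepSF_card (F : SF G k) {x c l : V} (hx : F.f x = none) (hxC : x ∉ F.C)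
    (hc : c ∈ F.C) (hadj : G.Adj c x) (hl : F.f l = some c) (c' : V) :
    (fib (stepSF F hx hxC hc hadj hl) c').card = (fib F c').card :=
  fib_stepf_card F hx hl c'

lemma cov_stepSF (F : SF G k) {x c l : V} (hx : F.f x = none) (hxC : x ∉ F.C) (hc : c ∈ F.C)
    (hadj : G.Adj c x) (hl : F.f l = some c) :
    cov (stepSF F hx hxC hc hadj hl) = insert x ((cov F).erase l) := by
  have hlx : l ≠ x := by intro e; rw [e, hx] at hl; cases hl
  ext v
  rw [mem_cov]
  show v ∈ F.C ∨ (stepf F x c l v).isSome ↔ _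
  by_cases hvx : v = x
  · rw [hvx, stepf_x]; simp
  · by_cases hvl : v = l
    · rw [hvl, stepf_l F x c l hlx]
      simp only [mem_insert, mem_erase]
      constructor
      · rintro (h | h)
        · exact ((leaf_not_center hl) h).elim
        · cases h
      · rintro (h | h)
        · exact (hlx h).elim
        · exact (h.1 rfl).elim
    · rw [stepf_ne F x c l hvx hvl]
      simp only [mem_insert, mem_erase, hvx, hvl, false_or, ne_eq, not_false_eq_true, true_and]
      exact (mem_cov (F := F)).symm

lemma cov_stepSF_card (F : SF G k) {x c l : V} (hx : F.f x = none) (hxC : x ∉ F.C) (hc : c ∈ F.C)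
    (hadj : G.Adj c x) (hl : F.f l = some c) :
    (cov (stepSF F hx hxC hc hadj hl)).card = (cov F).card := by
  have hlx : l ≠ x := by intro e; rw [e, hx] at hl; cases hl
  have hlcov : l ∈ cov F := leaf_mem_cov hl
  have hxcov : x ∉ cov F := uncov_iff.mpr ⟨hxC, hx⟩
  rw [cov_stepSF, card_insert_of_notMem, card_erase_of_mem hlcov]
  · have : 0 < (cov F).card := card_pos.mpr ⟨l, hlcov⟩
    omega
  · intro h; exact hxcov (mem_erase.mp h).2


section AddPair
variable (F : SF G k) {x u : V}

lemma addPair_fib (hx : x ∉ cov F) (hu : u ∉ cov F) (c' : V) :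
    univ.filter (fun v => Function.update F.f x (some u) v = some c')
      = if c' = u then {x} else fib F c' := by
  obtain ⟨hxC, hxf⟩ := uncov_iff.mp hx
  obtain ⟨huC, huf⟩ := uncov_iff.mp hu
  ext v
  simp only [mem_filter, mem_univ, true_and, Function.update_apply]
  split_ifs with h1 h2 h2
  · subst h1; subst h2; simp
  · subst h1
    simp only [mem_fib, hxf, Option.some.injEq, mem_singleton]
    constructor
    · intro h; exact (h2 h.symm).elim
    · intro h; cases h
  · subst h2
    simp only [mem_singleton, mem_fib]
    constructor
    · intro h; exact (huC (F.mem h).1).elim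
    · intro h; exact (h1 h).elim
  · exact mem_fib.symm

def addPair (hk : 1 ≤ k) (hx : x ∉ cov F) (hu : u ∉ cov F) (hadj : G.Adj u x) : SF G k where
  C := insert u F.C
  f := Function.update F.f x (some u)
  hC := by
    obtain ⟨hxC, hxf⟩ := uncov_iff.mp hx
    obtain ⟨huC, huf⟩ := uncov_iff.mp hu
    intro c hc
    rcases mem_insert.mp hc with h | h
    · subst h; rw [Function.update_of_ne (G.ne_of_adj hadj), huf]
    · have hcx : c ≠ x := by rintro rfl; exact hxC h
      rw [Function.update_of_ne hcx, F.hC c h]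
  mem := by
    intro v c h
    by_cases hvx : v = x
    · subst hvx
      rw [Function.update_self] at h
      have hcu : c = u := (Option.some.inj h).symm
      subst hcu
      exact ⟨mem_insert_self c F.C, hadj⟩
    · rw [Function.update_of_ne hvx] at h
      exact ⟨mem_insert.mpr (Or.inr (F.mem h).1), (F.mem h).2⟩
  ub := by
    intro c hc
    rw [addPair_fib F hx hu c]
    split_ifs with h
    · simpa using hk
    · exact F.ub c (by rcases mem_insert.mp hc with h' | h'; exact (h h').elim; exact h')
  lb := by
    intro c hc
    rw [addPair_fib F hx hu c]
    split_ifs with h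
    · exact ⟨x, mem_singleton_self x⟩
    · exact F.lb c (by rcases mem_insert.mp hc with h' | h'; exact (h h').elim; exact h')

lemma addPair_cov (hk : 1 ≤ k) (hx : x ∉ cov F) (hu : u ∉ cov F) (hadj : G.Adj u x) :
    cov (addPair F hk hx hu hadj) = insert x (insert u (cov F)) := by
  obtain ⟨hxC, hxf⟩ := uncov_iff.mp hx
  ext v
  rw [mem_cov]
  show v ∈ insert u F.C ∨ (Function.update F.f x (some u) v).isSome ↔ _
  by_cases hvx : v = x
  · subst hvx; simp [Function.update_self]
  · rw [Function.update_of_ne hvx]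
    simp only [mem_insert, hvx, false_or]
    rw [or_assoc]
    exact or_congr Iff.rfl (mem_cov (F := F)).symm

lemma addPair_cov_card (hk : 1 ≤ k) (hx : x ∉ cov F) (hu : u ∉ cov F) (hadj : G.Adj u x) :
    (cov (addPair F hk hx hu hadj)).card = (cov F).card + 2 := by
  have hxu : x ≠ u := (G.ne_of_adj hadj).symm
  have hnx : x ∉ insert u (cov F) := by
    simp only [mem_insert]
    push_neg
    exact ⟨hxu, hx⟩
  rw [addPair_cov, card_insert_of_notMem hnx, card_insert_of_notMem hu]

end AddPair

section AddLeaf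
variable (F : SF G k) {x c0 : V}

lemma addLeaf_fib (hx : x ∉ cov F) (c' : V) :
    univ.filter (fun v => Function.update F.f x (some c0) v = some c')
      = if c' = c0 then insert x (fib F c0) else fib F c' := by
  obtain ⟨hxC, hxf⟩ := uncov_iff.mp hx
  ext v
  simp only [mem_filter, mem_univ, true_and, Function.update_apply]
  split_ifs with h1 h2 h2
  · subst h1; subst h2; simp
  · subst h1
    simp only [Option.some.injEq]
    constructor
    · intro h; exact (h2 h.symm).elim
    · intro h
      rw [mem_fib] at h
      rw [hxf] at h
      cases h
  · subst h2
    simp only [mem_insert, mem_fib]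
    constructor
    · intro h; exact Or.inr h
    · rintro (h | h)
      · exact (h1 h).elim
      · exact h
  · exact mem_fib.symm

def addLeaf (hx : x ∉ cov F) (hc : c0 ∈ F.C) (hadj : G.Adj c0 x)
    (hfib : (fib F c0).card < k) : SF G k where
  C := F.C
  f := Function.update F.f x (some c0)
  hC := by
    obtain ⟨hxC, hxf⟩ := uncov_iff.mp hx
    intro c hcm
    have hcx : c ≠ x := by rintro rfl; exact hxC hcm
    rw [Function.update_of_ne hcx, F.hC c hcm]
  mem := by
    intro v c h
    by_cases hvx : v = x
    · subst hvx
      rw [Function.update_self] at h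
      have : c0 = c := Option.some.inj h
      subst this
      exact ⟨hc, hadj⟩
    · rw [Function.update_of_ne hvx] at h
      exact F.mem h
  ub := by
    obtain ⟨hxC, hxf⟩ := uncov_iff.mp hx
    intro c hcm
    rw [addLeaf_fib F hx c]
    split_ifs with h
    · subst h
      have hxn : x ∉ fib F c := by rw [mem_fib, hxf]; simp
      rw [card_insert_of_notMem hxn]
      omega
    · exact F.ub c hcm
  lb := by
    intro c hcm
    rw [addLeaf_fib F hx c]
    split_ifs with h
    · exact ⟨x, mem_insert_self x _⟩
    · exact F.lb c hcm

lemma addLeaf_cov_card (hx : x ∉ cov F) (hc : c0 ∈ F.C) (hadj : G.Adj c0 x)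
    (hfib : (fib F c0).card < k) :
    (cov (addLeaf F hx hc hadj hfib)).card = (cov F).card + 1 := by
  have hcov : cov (addLeaf F hx hc hadj hfib) = insert x (cov F) := by
    ext v
    rw [mem_cov]
    show v ∈ F.C ∨ (Function.update F.f x (some c0) v).isSome ↔ _
    by_cases hvx : v = x
    · subst hvx; simp [Function.update_self]
    · rw [Function.update_of_ne hvx]
      simp only [mem_insert, hvx, false_or]
      exact (mem_cov (F := F)).symm
  rw [hcov, card_insert_of_notMem hx]

end AddLeaf

section SplitLeaf
variable (F : SF G k) {x u w : V}

lemma splitLeaf_fib (hx : x ∉ cov F) (hu : F.f u = some w) (c' : V) :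
    univ.filter (fun v => Function.update (Function.update F.f u none) x (some u) v = some c')
      = if c' = u then {x} else (fib F c').erase u := by
  obtain ⟨hxC, hxf⟩ := uncov_iff.mp hx
  have hux : u ≠ x := by rintro rfl; rw [hxf] at hu; cases hu
  ext v
  simp only [mem_filter, mem_univ, true_and]
  by_cases hvx : v = x
  · rw [hvx, Function.update_self]
    split_ifs with h2
    · subst h2; simp
    · simp only [Option.some.injEq, mem_erase, mem_fib, hxf]
      constructor
      · intro h; exact (h2 h.symm).elim
      · rintro ⟨-, h⟩; cases h
  · rw [Function.update_of_ne hvx]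
    by_cases hvu : v = u
    · rw [hvu, Function.update_self]
      split_ifs with h2
      · simp [hux]
      · simp
    · rw [Function.update_of_ne hvu]
      split_ifs with h2
      · subst h2
        simp only [mem_singleton]
        constructor
        · intro h; exact ((leaf_not_center hu) (F.mem h).1).elim
        · intro h; exact (hvx h).elim
      · simp only [mem_erase, mem_fib, hvu, ne_eq, not_false_eq_true, true_and]

def splitLeaf (hx : x ∉ cov F) (hu : F.f u = some w) (hw2 : 2 ≤ (fib F w).card)
    (hadj : G.Adj u x) : SF G k where
  C := insert u F.C
  f := Function.update (Function.update F.f u none) x (some u)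
  hC := by
    obtain ⟨hxC, hxf⟩ := uncov_iff.mp hx
    intro c hcm
    rcases mem_insert.mp hcm with h | h
    · subst h
      rw [Function.update_of_ne (G.ne_of_adj hadj), Function.update_self]
    · have hcx : c ≠ x := by rintro rfl; exact hxC h
      have hcu : c ≠ u := by rintro rfl; exact (leaf_not_center hu) h
      rw [Function.update_of_ne hcx, Function.update_of_ne hcu, F.hC c h]
  mem := by
    intro v c h
    by_cases hvx : v = x
    · subst hvx
      rw [Function.update_self] at h
      have : u = c := Option.some.inj h
      subst this
      exact ⟨mem_insert_self u F.C, hadj⟩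
    · rw [Function.update_of_ne hvx] at h
      by_cases hvu : v = u
      · subst hvu; rw [Function.update_self] at h; cases h
      · rw [Function.update_of_ne hvu] at h
        exact ⟨mem_insert.mpr (Or.inr (F.mem h).1), (F.mem h).2⟩
  ub := by
    intro c hcm
    rw [splitLeaf_fib F hx hu c]
    split_ifs with h
    · have hk1 : 1 ≤ k := by
        have h3 : (fib F w).card ≤ k := F.ub w (F.mem hu).1
        omega
      simpa using hk1
    · calc ((fib F c).erase u).card ≤ (fib F c).card := card_erase_le
        _ ≤ k := F.ub c (by rcases mem_insert.mp hcm with h' | h'; exact (h h').elim; exact h')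
  lb := by
    intro c hcm
    rw [splitLeaf_fib F hx hu c]
    split_ifs with h
    · exact ⟨x, mem_singleton_self x⟩
    · have hcC : c ∈ F.C := by
        rcases mem_insert.mp hcm with h' | h'
        · exact (h h').elim
        · exact h'
      by_cases hcw : c = w
      · subst hcw
        rw [← card_pos, card_erase_of_mem (mem_fib.mpr hu)]
        omega
      · have hnm : u ∉ fib F c := by
          rw [mem_fib, hu]
          intro h2
          exact hcw (Option.some.inj h2).symm
        rw [erase_eq_of_notMem hnm]
        exact F.lb c hcC

lemma splitLeaf_cov_card (hx : x ∉ cov F) (hu : F.f u = some w) (hw2 : 2 ≤ (fib F w).card)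
    (hadj : G.Adj u x) :
    (cov (splitLeaf F hx hu hw2 hadj)).card = (cov F).card + 1 := by
  have hcov : cov (splitLeaf F hx hu hw2 hadj) = insert x (cov F) := by
    ext v
    rw [mem_cov]
    show v ∈ insert u F.C ∨
      (Function.update (Function.update F.f u none) x (some u) v).isSome ↔ _
    by_cases hvx : v = x
    · rw [hvx, Function.update_self]
      simp
    · rw [Function.update_of_ne hvx]
      by_cases hvu : v = u
      · rw [hvu, Function.update_self]
        simp only [mem_insert, hvx, false_or]
        constructor
        · intro _
          exact Or.inr (leaf_mem_cov hu)
        · intro _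
          exact Or.inl (Or.inl trivial)
      · rw [Function.update_of_ne hvu]
        simp only [mem_insert, hvx, hvu, false_or]
        exact (mem_cov (F := F) (v := v)).symm
  rw [hcov, card_insert_of_notMem hx]

end SplitLeaf

section PairToTriple
variable (F : SF G k) {x u w : V}

lemma p2t_fib (hx : x ∉ cov F) (hu : F.f u = some w)
    (hsingle : ∀ y, F.f y = some w → y = u) (c' : V) :
    univ.filter (fun v =>
        Function.update (Function.update (Function.update F.f u none) w (some u)) x (some u) v
          = some c')
      = if c' = u then {x, w} else if c' = w then ∅ else fib F c' := by
  obtain ⟨hxC, hxf⟩ := uncov_iff.mp hx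
  have hux : u ≠ x := by rintro rfl; rw [hxf] at hu; cases hu
  have hwC : w ∈ F.C := (F.mem hu).1
  have hwx : w ≠ x := by rintro rfl; exact hxC hwC
  have huw : u ≠ w := center_ne_leaf hu
  have hwf : F.f w = none := F.hC w hwC
  ext v
  simp only [mem_filter, mem_univ, true_and]
  by_cases hvx : v = x
  · rw [hvx, Function.update_self]
    split_ifs with h1 h2
    · subst h1; simp
    · simp [hwx, Option.some.injEq]
      intro h; exact (h1 h.symm).elim
    · simp only [mem_fib, hxf, Option.some.injEq]
      constructor
      · intro h; exact (h1 h.symm).elim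
      · intro h; cases h
  · rw [Function.update_of_ne hvx]
    by_cases hvw : v = w
    · rw [hvw, Function.update_self]
      split_ifs with h1 h2
      · subst h1; simp
      · simp only [notMem_empty, iff_false, Option.some.injEq]
        intro h; exact h1 h.symm
      · simp only [mem_fib, hwf, Option.some.injEq]
        constructor
        · intro h; exact (h1 h.symm).elim
        · intro h; cases h
    · rw [Function.update_of_ne hvw]
      by_cases hvu : v = u
      · rw [hvu, Function.update_self]
        split_ifs with h1 h2
        · simp only [mem_insert, mem_singleton]
          constructor
          · intro h; cases h
          · rintro (h | h)
            · exact (hux h).elim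
            · exact (huw h).elim
        · simp
        · simp only [mem_fib, hu, Option.some.injEq]
          constructor
          · intro h; exact h.elim
          · intro h; exact (h2 h.symm).elim
      · rw [Function.update_of_ne hvu]
        split_ifs with h1 h2
        · subst h1
          simp only [mem_insert, mem_singleton, hvx, hvw, or_self, iff_false]
          intro h
          exact (leaf_not_center hu) (F.mem h).1
        · subst h2
          simp only [notMem_empty, iff_false]
          intro h
          exact hvu (hsingle v h)
        · exact (mem_fib (F := F)).symm

def pairToTriple (hk2 : 2 ≤ k) (hx : x ∉ cov F) (hu : F.f u = some w)
    (hsingle : ∀ y, F.f y = some w → y = u) (hadj : G.Adj u x) : SF G k where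
  C := insert u (F.C.erase w)
  f := Function.update (Function.update (Function.update F.f u none) w (some u)) x (some u)
  hC := by
    obtain ⟨hxC, hxf⟩ := uncov_iff.mp hx
    have hux : u ≠ x := by rintro rfl; rw [hxf] at hu; cases hu
    have huw : u ≠ w := center_ne_leaf hu
    intro c hcm
    rcases mem_insert.mp hcm with h | h
    · subst h
      rw [Function.update_of_ne hux, Function.update_of_ne huw, Function.update_self]
    · obtain ⟨hcw, hcC⟩ := mem_erase.mp h
      have hcx : c ≠ x := by rintro rfl; exact hxC hcC
      have hcu : c ≠ u := by rintro rfl; exact (leaf_not_center hu) hcC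
      rw [Function.update_of_ne hcx, Function.update_of_ne hcw,
        Function.update_of_ne hcu, F.hC c hcC]
  mem := by
    obtain ⟨hxC, hxf⟩ := uncov_iff.mp hx
    have hwC : w ∈ F.C := (F.mem hu).1
    have hwx : w ≠ x := by rintro rfl; exact hxC hwC
    intro v c h
    by_cases hvx : v = x
    · rw [hvx, Function.update_self] at h
      have : u = c := Option.some.inj h
      subst this
      exact ⟨mem_insert_self u _, hvx ▸ hadj⟩
    · rw [Function.update_of_ne hvx] at h
      by_cases hvw : v = w
      · rw [hvw, Function.update_self] at h
        have : u = c := Option.some.inj h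
        subst this
        exact ⟨mem_insert_self u _, hvw ▸ (F.mem hu).2.symm⟩
      · rw [Function.update_of_ne hvw] at h
        by_cases hvu : v = u
        · rw [hvu, Function.update_self] at h; cases h
        · rw [Function.update_of_ne hvu] at h
          have hm := F.mem h
          have hcw : c ≠ w := by
            rintro rfl
            exact hvu (hsingle v h)
          exact ⟨mem_insert_of_mem (mem_erase.mpr ⟨hcw, hm.1⟩), hm.2⟩
  ub := by
    obtain ⟨hxC, hxf⟩ := uncov_iff.mp hx
    have hwC : w ∈ F.C := (F.mem hu).1
    have hwx : w ≠ x := by rintro rfl; exact hxC hwC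
    intro c hcm
    rw [p2t_fib F hx hu hsingle c]
    rcases mem_insert.mp hcm with h | h
    · rw [if_pos h]
      calc ({x, w} : Finset V).card ≤ 2 := (card_insert_le x {w}).trans (by simp)
        _ ≤ k := hk2
    · obtain ⟨hcw, hcC⟩ := mem_erase.mp h
      have hcu : c ≠ u := by rintro rfl; exact (leaf_not_center hu) hcC
      rw [if_neg hcu, if_neg hcw]
      exact F.ub c hcC
  lb := by
    intro c hcm
    rw [p2t_fib F hx hu hsingle c]
    rcases mem_insert.mp hcm with h | h
    · rw [if_pos h]
      exact ⟨x, mem_insert_self x _⟩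
    · obtain ⟨hcw, hcC⟩ := mem_erase.mp h
      have hcu : c ≠ u := by rintro rfl; exact (leaf_not_center hu) hcC
      rw [if_neg hcu, if_neg hcw]
      exact F.lb c hcC

lemma p2t_cov_card (hk2 : 2 ≤ k) (hx : x ∉ cov F) (hu : F.f u = some w)
    (hsingle : ∀ y, F.f y = some w → y = u) (hadj : G.Adj u x) :
    (cov (pairToTriple F hk2 hx hu hsingle hadj)).card = (cov F).card + 1 := by
  obtain ⟨hxC, hxf⟩ := uncov_iff.mp hx
  have hwC : w ∈ F.C := (F.mem hu).1
  have hcov : cov (pairToTriple F hk2 hx hu hsingle hadj) = insert x (cov F) := by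
    ext v
    rw [mem_cov]
    show v ∈ insert u (F.C.erase w) ∨
      (Function.update (Function.update (Function.update F.f u none) w (some u)) x
        (some u) v).isSome ↔ _
    by_cases hvx : v = x
    · rw [hvx, Function.update_self]
      simp
    · rw [Function.update_of_ne hvx]
      by_cases hvw : v = w
      · rw [hvw, Function.update_self]
        simp only [mem_insert, hvx, false_or]
        constructor
        · intro _; exact Or.inr (center_mem_cov hwC)
        · intro _; exact Or.inr rfl
      · rw [Function.update_of_ne hvw]
        by_cases hvu : v = u
        · rw [hvu, Function.update_self]
          simp only [mem_insert, hvx, false_or]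
          constructor
          · intro _; exact Or.inr (leaf_mem_cov hu)
          · intro _; exact Or.inl (Or.inl trivial)
        · rw [Function.update_of_ne hvu]
          simp only [mem_insert, mem_erase, hvx, hvu, hvw, false_or, ne_eq,
            not_false_eq_true, true_and, false_and]
          exact (mem_cov (F := F) (v := v)).symm
  rw [hcov, card_insert_of_notMem hx]

end PairToTriple

def emptySF (G : SimpleGraph V) (k : ℕ) : SF G k where
  C := ∅
  f := fun _ => none
  hC := fun c hc => absurd hc (notMem_empty c)
  mem := fun h => by cases h
  ub := fun c hc => absurd hc (notMem_empty c)
  lb := fun c hc => absurd hc (notMem_empty c)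

lemma exists_max (G : SimpleGraph V) (k : ℕ) :
    ∃ Q : SF G k, ∀ F : SF G k, (cov F).card ≤ (cov Q).card := by
  let s : Set ℕ := Set.range (fun F : SF G k => (cov F).card)
  have hne : s.Nonempty := ⟨(cov (emptySF G k)).card, ⟨emptySF G k, rfl⟩⟩
  have hbdd : BddAbove s := by
    refine ⟨Fintype.card V, ?_⟩
    rintro n ⟨F, rfl⟩
    exact card_le_univ _
  obtain ⟨F0, hF0⟩ := Nat.sSup_mem hne hbdd
  refine ⟨F0, fun F => ?_⟩
  have hF0' : sSup s = (cov F0).card := hF0.symm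
  rw [← hF0']
  exact le_csSup hbdd ⟨F, rfl⟩

inductive Reach {G : SimpleGraph V} {k : ℕ} (Q : SF G k) (v : V) : SF G k → V → Prop
  | base : Reach Q v Q v
  | step {P : SF G k} {x c l : V} (h : Reach Q v P x)
      (hx : P.f x = none) (hxC : x ∉ P.C) (hc : c ∈ P.C) (hadj : G.Adj c x)
      (hl : P.f l = some c) : Reach Q v (stepSF P hx hxC hc hadj hl) l

lemma Reach.C_eq {Q : SF G k} {v : V} {P : SF G k} {x : V} (h : Reach Q v P x) :
    P.C = Q.C := by
  induction h with
  | base => rfl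
  | step h hx hxC hc hadj hl ih => exact ih

lemma Reach.fibcard {Q : SF G k} {v : V} {P : SF G k} {x : V} (h : Reach Q v P x) (c' : V) :
    (fib P c').card = (fib Q c').card := by
  induction h with
  | base => rfl
  | step h hx hxC hc hadj hl ih =>
      rw [fib_stepSF_card _ hx hxC hc hadj hl c']
      exact ih

lemma Reach.unc {Q : SF G k} {v : V} (hv : v ∉ cov Q) {P : SF G k} {x : V}
    (h : Reach Q v P x) : x ∉ cov P := by
  induction h with
  | base => exact hv
  | @step P x c l h hx hxC hc hadj hl ih =>
      rw [cov_stepSF P hx hxC hc hadj hl]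
      have hlx : l ≠ x := by rintro rfl; rw [hx] at hl; cases hl
      intro hmem
      rcases mem_insert.mp hmem with h' | h'
      · exact hlx h'
      · exact (mem_erase.mp h').1 rfl

lemma Reach.covcard {Q : SF G k} {v : V} {P : SF G k} {x : V} (h : Reach Q v P x) :
    (cov P).card = (cov Q).card := by
  induction h with
  | base => rfl
  | step h hx hxC hc hadj hl ih =>
      rw [cov_stepSF_card _ hx hxC hc hadj hl]
      exact ih

lemma full_nbr (hk : 2 ≤ k) {Q : SF G k}
    (hQmax : ∀ F : SF G k, (cov F).card ≤ (cov Q).card) {v : V} (hv : v ∉ cov Q)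
    {P : SF G k} {x : V} (hR : Reach Q v P x) {u : V} (hadj : G.Adj x u) :
    u ∈ P.C ∧ (fib P u).card = k := by
  have hxunc : x ∉ cov P := hR.unc hv
  have hcc : (cov P).card = (cov Q).card := hR.covcard
  by_cases huC : u ∈ P.C
  · refine ⟨huC, ?_⟩
    by_contra hne
    have hlt : (fib P u).card < k := lt_of_le_of_ne (P.ub u huC) hne
    have h := hQmax (addLeaf P hxunc huC hadj.symm hlt)
    rw [addLeaf_cov_card] at h
    omega
  · exfalso
    cases hfu : P.f u with
    | none =>
        have huunc : u ∉ cov P := uncov_iff.mpr ⟨huC, hfu⟩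
        have h := hQmax (addPair P (by omega) hxunc huunc hadj.symm)
        rw [addPair_cov_card] at h
        omega
    | some w =>
        by_cases h2 : 2 ≤ (fib P w).card
        · have h := hQmax (splitLeaf P hxunc hfu h2 hadj.symm)
          rw [splitLeaf_cov_card] at h
          omega
        · have hone : (fib P w).card = 1 := by
            have hpos : 0 < (fib P w).card := card_pos.mpr (P.lb w (P.mem hfu).1)
            omega
          obtain ⟨a, ha⟩ := card_eq_one.mp hone
          have hua : u = a := by
            have : u ∈ fib P w := mem_fib.mpr hfu
            rw [ha] at this
            exact mem_singleton.mp this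
          have hsingle : ∀ y, P.f y = some w → y = u := by
            intro y hy
            have : y ∈ fib P w := mem_fib.mpr hy
            rw [ha] at this
            exact (mem_singleton.mp this).trans hua.symm
          have h := hQmax (pairToTriple P hk hxunc hfu hsingle hadj.symm)
          rw [p2t_cov_card] at h
          omega

lemma ncard_filter (p : V → Prop) [DecidablePred p] :
    {x : V | p x}.ncard = (univ.filter p).card := by
  rw [← Set.ncard_coe_finset]
  congr 1
  ext x
  simp

theorem AK_main (G : SimpleGraph V) (k : ℕ) (hk : 2 ≤ k)
    (hiso : ∀ v : V, ∃ u : V, G.Adj v u)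
    (cond : ∀ S : Finset V, S.Nonempty → S ≠ univ →
      {w : V | w ∉ S ∧ ∀ u : V, G.Adj w u → u ∈ S}.ncard ≤ k * S.card) :
    ∃ P : Finset (Finset V), IsStarPartition G P ∧ ∀ S ∈ P, S.card ≤ k + 1 := by
  classical
  obtain ⟨Q, hQmax⟩ := exists_max G k
  have hcov : ∀ y : V, y ∈ cov Q := by
    by_contra hneq
    push_neg at hneq
    obtain ⟨v, hv⟩ := hneq
    set E : V → Prop := fun y => ∃ P : SF G k, Reach Q v P y with hE
    have hvE : E v := ⟨Q, Reach.base⟩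
    set Cs : Finset V := univ.filter (fun c => ∃ y, E y ∧ G.Adj y c) with hCsdef
    have hCsfull : ∀ c ∈ Cs, c ∈ Q.C ∧ (fib Q c).card = k := by
      intro c hc
      obtain ⟨y, ⟨P, hP⟩, hadj⟩ := (mem_filter.mp hc).2
      have h := full_nbr hk hQmax hv hP hadj
      exact ⟨hP.C_eq ▸ h.1, (hP.fibcard c) ▸ h.2⟩
    have hEnotC : ∀ y, E y → y ∉ Q.C := by
      rintro y ⟨P, hP⟩
      exact hP.C_eq ▸ (uncov_iff.mp (hP.unc hv)).1
    have hEiso : ∀ y, E y → y ∉ Cs ∧ ∀ u, G.Adj y u → u ∈ Cs := by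
      intro y hy
      constructor
      · intro hyC
        exact hEnotC y hy (hCsfull y hyC).1
      · intro u hadj
        exact mem_filter.mpr ⟨mem_univ u, y, hy, hadj⟩
    have htrack : ∀ {P : SF G k} {x : V}, Reach Q v P x →
        ∀ w c0, Q.f w = some c0 → P.f w = some c0 ∨ E w := by
      intro P x h
      induction h with
      | base => intro w c0 hw; exact Or.inl hw
      | @step P' x' c l h' hx hxC hc hadj hl ih =>
        intro w c0 hw
        rcases ih w c0 hw with h'' | h''
        · by_cases hwl : w = l
          · subst hwl
            exact Or.inr ⟨_, Reach.step h' hx hxC hc hadj hl⟩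
          · left
            show stepf P' x' c l w = some c0
            have hwx : w ≠ x' := by rintro rfl; rw [hx] at h''; cases h''
            rw [stepf_ne P' x' c l hwx hwl]
            exact h''
        · exact Or.inr h''
    have hclose : ∀ {P : SF G k} {x : V}, Reach Q v P x →
        ∀ u, G.Adj x u → ∀ l ∈ fib P u, E l := by
      intro P x h u hadj l hl
      have hful := full_nbr hk hQmax hv h hadj
      obtain ⟨hxC, hxf⟩ := uncov_iff.mp (h.unc hv)
      exact ⟨_, Reach.step h hxf hxC hful.1 hadj.symm (mem_fib.mp hl)⟩
    have hfibE : ∀ c ∈ Cs, ∀ w ∈ fib Q c, E w := by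
      intro c hc w hw
      obtain ⟨y, ⟨P, hP⟩, hadj⟩ := (mem_filter.mp hc).2
      rcases htrack hP w c (mem_fib.mp hw) with h' | h'
      · exact hclose hP c hadj w (mem_fib.mpr h')
      · exact h'
    set EF : Finset V := univ.filter E with hEFdef
    have hU : insert v (Cs.biUnion (fib Q)) ⊆ EF := by
      intro y hy
      rcases mem_insert.mp hy with rfl | hy'
      · exact mem_filter.mpr ⟨mem_univ _, hvE⟩
      · obtain ⟨c, hc, hw⟩ := mem_biUnion.mp hy'
        exact mem_filter.mpr ⟨mem_univ _, hfibE c hc y hw⟩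
    have hvnot : v ∉ Cs.biUnion (fib Q) := by
      intro h
      obtain ⟨c, hc, hw⟩ := mem_biUnion.mp h
      have h2 := mem_fib.mp hw
      rw [(uncov_iff.mp hv).2] at h2
      cases h2
    have hcard1 : (Cs.biUnion (fib Q)).card = k * Cs.card := by
      rw [card_biUnion]
      · rw [Finset.sum_congr rfl (fun c hc => (hCsfull c hc).2)]
        simp [mul_comm]
      · intro c1 h1 c2 h2 hne
        rw [Function.onFun, disjoint_left]
        intro a ha1 ha2
        rw [mem_fib] at ha1 ha2
        rw [ha1] at ha2
        exact hne (Option.some.inj ha2)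
    have hEFcard : k * Cs.card + 1 ≤ EF.card := by
      have := card_le_card hU
      rw [card_insert_of_notMem hvnot, hcard1] at this
      omega
    have hCsne : Cs.Nonempty := by
      obtain ⟨u, hu⟩ := hiso v
      exact ⟨u, mem_filter.mpr ⟨mem_univ _, v, hvE, hu⟩⟩
    have hCsproper : Cs ≠ univ := by
      intro h
      have h2 := (hEiso v hvE).1
      rw [h] at h2
      exact h2 (mem_univ v)
    have hsub : EF ⊆ univ.filter (fun w => w ∉ Cs ∧ ∀ u, G.Adj w u → u ∈ Cs) := by
      intro y hy
      exact mem_filter.mpr ⟨mem_univ _, hEiso y (mem_filter.mp hy).2⟩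
    have hc1 := cond Cs hCsne hCsproper
    rw [ncard_filter] at hc1
    have hc2 := card_le_card hsub
    omega
  -- now build the partition
  refine ⟨Q.C.image (fun c => insert c (fib Q c)), ⟨?_, ?_, ?_⟩, ?_⟩
  · -- partition property
    intro y
    have hy := hcov y
    rw [mem_cov] at hy
    have key : ∀ c' ∈ Q.C, y ∈ insert c' (fib Q c') ↔ (y = c' ∨ Q.f y = some c') := by
      intro c' _
      rw [mem_insert, mem_fib]
    rcases hy with hyC | hyS
    · refine ⟨insert y (fib Q y), ⟨mem_image.mpr ⟨y, hyC, rfl⟩, mem_insert_self y _⟩, ?_⟩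
      rintro S ⟨hS, hyS'⟩
      obtain ⟨c', hc', rfl⟩ := mem_image.mp hS
      rcases (key c' hc').mp hyS' with h | h
      · rw [h]
      · rw [Q.hC y hyC] at h; cases h
    · obtain ⟨c, hc⟩ := Option.isSome_iff_exists.mp hyS
      have hcC : c ∈ Q.C := (Q.mem hc).1
      refine ⟨insert c (fib Q c), ⟨mem_image.mpr ⟨c, hcC, rfl⟩,
        mem_insert_of_mem (mem_fib.mpr hc)⟩, ?_⟩
      rintro S ⟨hS, hyS'⟩
      obtain ⟨c', hc', rfl⟩ := mem_image.mp hS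
      rcases (key c' hc').mp hyS' with h | h
      · exfalso
        rw [h] at hc
        exact leaf_not_center hc hc'
      · rw [hc] at h
        rw [Option.some.inj h]
  · -- sizes ≥ 2
    intro S hS
    obtain ⟨c, hcC, rfl⟩ := mem_image.mp hS
    have hnotin : c ∉ fib Q c := by
      rw [mem_fib, Q.hC c hcC]
      intro h; cases h
    rw [card_insert_of_notMem hnotin]
    have h2 : 0 < (fib Q c).card := card_pos.mpr (Q.lb c hcC)
    omega
  · -- star property
    intro S hS
    obtain ⟨c, hcC, rfl⟩ := mem_image.mp hS
    refine ⟨c, mem_insert_self c _, ?_⟩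
    intro y hy hne
    rcases mem_insert.mp hy with h | h
    · exact (hne h).elim
    · exact (Q.mem (mem_fib.mp h)).2
  · -- sizes ≤ k+1
    intro S hS
    obtain ⟨c, hcC, rfl⟩ := mem_image.mp hS
    have hnotin : c ∉ fib Q c := by
      rw [mem_fib, Q.hC c hcC]
      intro h; cases h
    rw [card_insert_of_notMem hnotin]
    have h3 : (fib Q c).card ≤ k := Q.ub c hcC
    omega


lemma parts_disjoint {G : SimpleGraph V} {P : Finset (Finset V)} (hP : IsStarPartition G P)
    {T1 T2 : Finset V} (h1 : T1 ∈ P) (h2 : T2 ∈ P) (hne : T1 ≠ T2) : Disjoint T1 T2 := by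
  rw [disjoint_left]
  intro x hx1 hx2
  exact hne ((hP.1 x).unique ⟨h1, hx1⟩ ⟨h2, hx2⟩)

lemma lower_bound {G : SimpleGraph V} {k : ℕ} {P : Finset (Finset V)}
    (hP : IsStarPartition G P) (hsz : ∀ S ∈ P, S.card ≤ k + 1) (S : Finset V) :
    {w : V | w ∉ S ∧ ∀ u : V, G.Adj w u → u ∈ S}.ncard ≤ k * S.card := by
  classical
  rw [ncard_filter]
  set isoF := univ.filter (fun w => w ∉ S ∧ ∀ u : V, G.Adj w u → u ∈ S) with hisoF
  set Pick := P.filter (fun T => (T ∩ S).Nonempty) with hPick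
  have hsubset : isoF ⊆ Pick.biUnion (fun T => T \ S) := by
    intro w hw
    obtain ⟨-, hwS, hnb⟩ := mem_filter.mp hw
    obtain ⟨T, ⟨hTP, hwT⟩, -⟩ := hP.1 w
    obtain ⟨c, hcT, hstar⟩ := hP.2.2 T hTP
    have hTS : (T ∩ S).Nonempty := by
      by_cases hwc : w = c
      · have h2 : 2 ≤ T.card := hP.2.1 T hTP
        have : (T.erase w).Nonempty := by
          rw [← card_pos, card_erase_of_mem hwT]
          omega
        obtain ⟨t, ht⟩ := this
        obtain ⟨htw, htT⟩ := mem_erase.mp ht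
        have : G.Adj w t := hwc ▸ hstar t htT (hwc ▸ htw)
        exact ⟨t, mem_inter.mpr ⟨htT, hnb t this⟩⟩
      · have : G.Adj w c := (hstar w hwT hwc).symm
        exact ⟨c, mem_inter.mpr ⟨hcT, hnb c this⟩⟩
    refine mem_biUnion.mpr ⟨T, mem_filter.mpr ⟨hTP, hTS⟩, mem_sdiff.mpr ⟨hwT, hwS⟩⟩
  calc isoF.card ≤ (Pick.biUnion (fun T => T \ S)).card := card_le_card hsubset
    _ ≤ ∑ T ∈ Pick, (T \ S).card := card_biUnion_le
    _ ≤ ∑ T ∈ Pick, k * (T ∩ S).card := by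
        refine Finset.sum_le_sum ?_
        intro T hT
        obtain ⟨hTP, hTS⟩ := mem_filter.mp hT
        have h1 : (T \ S).card + (T ∩ S).card = T.card := card_sdiff_add_card_inter T S
        have h2 : T.card ≤ k + 1 := hsz T hTP
        have h3 : 1 ≤ (T ∩ S).card := card_pos.mpr hTS
        nlinarith [h1, h2, h3]
    _ = k * ∑ T ∈ Pick, (T ∩ S).card := by rw [Finset.mul_sum]
    _ ≤ k * S.card := by
        refine Nat.mul_le_mul_left k ?_
        have hdisj : ∀ T1 ∈ Pick, ∀ T2 ∈ Pick, T1 ≠ T2 →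
            Disjoint (T1 ∩ S) (T2 ∩ S) := by
          intro T1 h1 T2 h2 hne
          exact Finset.disjoint_of_subset_left inter_subset_left
            (Finset.disjoint_of_subset_right inter_subset_left
              (parts_disjoint hP (mem_filter.mp h1).1 (mem_filter.mp h2).1 hne))
        rw [← card_biUnion hdisj]
        refine card_le_card ?_
        intro x hx
        obtain ⟨T, -, hxT⟩ := mem_biUnion.mp hx
        exact (mem_inter.mp hxT).2


open scoped Classical in
noncomputable def cenf (G : SimpleGraph V) (T : Finset V) : Option V :=
  if h : ∃ c, c ∈ T ∧ ∀ v ∈ T, v ≠ c → G.Adj c v then some h.choose else none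

lemma cenf_spec {G : SimpleGraph V} {T : Finset V}
    (h : ∃ c ∈ T, ∀ v ∈ T, v ≠ c → G.Adj c v) :
    ∃ c, cenf G T = some c ∧ c ∈ T ∧ ∀ v ∈ T, v ≠ c → G.Adj c v := by
  classical
  have h' : ∃ c, c ∈ T ∧ ∀ v ∈ T, v ≠ c → G.Adj c v := by
    obtain ⟨c, h1, h2⟩ := h; exact ⟨c, h1, h2⟩
  rw [cenf, dif_pos h']
  exact ⟨h'.choose, rfl, h'.choose_spec⟩

def Hgraph (G : SimpleGraph V) (P : Finset (Finset V)) : SimpleGraph V where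
  Adj u v := u ≠ v ∧ ∃ T ∈ P, u ∈ T ∧ v ∈ T ∧ (cenf G T = some u ∨ cenf G T = some v)
  symm := by
    constructor
    rintro u v ⟨h1, T, hT, h2, h3, h4⟩
    exact ⟨h1.symm, T, hT, h3, h2, h4.symm⟩
  loopless := ⟨fun v h => h.1 rfl⟩

lemma pathcover_of_small_stars {G : SimpleGraph V} {P : Finset (Finset V)}
    (hP : IsStarPartition G P) (hsz : ∀ S ∈ P, S.card ≤ 3) :
    HasNontrivialPathCover G := by
  classical
  have hpart : ∀ {x : V} {T T' : Finset V}, T ∈ P → T' ∈ P → x ∈ T → x ∈ T' → T = T' :=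
    fun {x T T'} hT hT' hx hx' => (hP.1 x).unique ⟨hT, hx⟩ ⟨hT', hx'⟩
  refine ⟨Hgraph G P, ?_, ?_, ?_⟩
  · -- H ≤ G
    rintro u v ⟨hne, T, hT, huT, hvT, hor⟩
    obtain ⟨c, hceq, hcT, hstar⟩ := cenf_spec (hP.2.2 T hT)
    rcases hor with h | h
    · have : u = c := Option.some.inj (h.symm.trans hceq)
      exact this ▸ hstar v hvT (this ▸ hne.symm)
    · have : v = c := Option.some.inj (h.symm.trans hceq)
      exact (this ▸ hstar u huT (this ▸ hne)).symm
  · -- acyclic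
    intro v w hw
    obtain ⟨T, ⟨hT, hvT⟩, -⟩ := hP.1 v
    obtain ⟨c, hceq, hcT, hstar⟩ := cenf_spec (hP.2.2 T hT)
    have hwalk : ∀ {a b : V} (p : (Hgraph G P).Walk a b), a ∈ T → ∀ x ∈ p.support, x ∈ T := by
      intro a b p
      induction p with
      | nil =>
          intro ha x hx
          rw [SimpleGraph.Walk.support_nil, List.mem_singleton] at hx
          exact hx ▸ ha
      | cons h p ih =>
          intro ha x hx
          rw [SimpleGraph.Walk.support_cons, List.mem_cons] at hx
          rcases hx with rfl | hx'
          · exact ha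
          · obtain ⟨hne, T', hT', h1, h2, -⟩ := h
            have hTT : T' = T := hpart hT' hT h1 ha
            exact ih (hTT ▸ h2) x hx'
    have hedges : ∀ e ∈ w.edges, e ∈ (T.erase c).image (fun z => s(c, z)) := by
      intro e he
      induction e with
      | h x y =>
        have hadj := w.adj_of_mem_edges he
        have hxs := w.fst_mem_support_of_mem_edges he
        have hys := w.snd_mem_support_of_mem_edges he
        have hxT : x ∈ T := hwalk w hvT x hxs
        have hyT : y ∈ T := hwalk w hvT y hys
        obtain ⟨hne, T', hT', hxT', hyT', hor⟩ := hadj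
        have hTT : T' = T := hpart hT' hT hxT' hxT
        rw [hTT] at hor
        rcases hor with h | h
        · have hxc : x = c := Option.some.inj (h.symm.trans hceq)
          subst hxc
          exact mem_image.mpr ⟨y, mem_erase.mpr ⟨hne.symm, hyT⟩, rfl⟩
        · have hyc : y = c := Option.some.inj (h.symm.trans hceq)
          subst hyc
          refine mem_image.mpr ⟨x, mem_erase.mpr ⟨hne, hxT⟩, ?_⟩
          exact Sym2.eq_swap
    have h3 : 3 ≤ w.length := hw.three_le_length
    have hnodup : w.edges.Nodup := hw.edges_nodup
    have hlen : w.edges.toFinset.card = w.length := by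
      rw [List.toFinset_card_of_nodup hnodup, SimpleGraph.Walk.length_edges]
    have hsub2 : w.edges.toFinset ⊆ (T.erase c).image (fun z => s(c, z)) := by
      intro e he
      exact hedges e (List.mem_toFinset.mp he)
    have hTcard : T.card ≤ 3 := hsz T hT
    have hfin : ((T.erase c).image (fun z => s(c, z))).card ≤ 2 := by
      calc ((T.erase c).image (fun z => s(c, z))).card ≤ (T.erase c).card := card_image_le
        _ = T.card - 1 := card_erase_of_mem hcT
        _ ≤ 2 := by omega
    have := card_le_card hsub2
    omega
  · -- degrees
    intro v
    obtain ⟨T, ⟨hT, hvT⟩, -⟩ := hP.1 v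
    obtain ⟨c, hceq, hcT, hstar⟩ := cenf_spec (hP.2.2 T hT)
    have h2T : 2 ≤ T.card := hP.2.1 T hT
    have h3T : T.card ≤ 3 := hsz T hT
    by_cases hvc : v = c
    · have hns : (Hgraph G P).neighborSet v = ↑(T.erase v) := by
        ext y
        simp only [SimpleGraph.mem_neighborSet, Finset.coe_erase, Set.mem_diff,
          Set.mem_singleton_iff, Finset.mem_coe]
        constructor
        · rintro ⟨hne, T', hT', hvT', hyT', -⟩
          have hTT : T' = T := hpart hT' hT hvT' hvT
          exact ⟨hTT ▸ hyT', hne.symm⟩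
        · rintro ⟨hyT, hyv⟩
          exact ⟨fun h => hyv h.symm, T, hT, hvT, hyT, Or.inl (hvc ▸ hceq)⟩
      rw [hns]
      rw [Set.ncard_coe_finset]
      rw [card_erase_of_mem hvT]
      omega
    · have hns : (Hgraph G P).neighborSet v = {c} := by
        ext y
        simp only [SimpleGraph.mem_neighborSet, Set.mem_singleton_iff]
        constructor
        · rintro ⟨hne, T', hT', hvT', hyT', hor⟩
          have hTT : T' = T := hpart hT' hT hvT' hvT
          rw [hTT] at hor
          rcases hor with h | h
          · exact absurd (Option.some.inj (h.symm.trans hceq)) hvc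
          · exact Option.some.inj (h.symm.trans hceq)
        · rintro rfl
          exact ⟨hvc, T, hT, hvT, hcT, Or.inr hceq⟩
      rw [hns, Set.ncard_singleton]
      omega


end AK

/-- If `G` has no isolated vertices and no nontrivial path cover, then
`σ(G) = max { ⌈ i(G−S)/|S| ⌉ : ∅ ⊂ S ⊂ V(G) }`. -/
theorem stmt4 {V : Type*} [Fintype V] [DecidableEq V] (G : SimpleGraph V)
    (hiso : ∀ v : V, ∃ u : V, G.Adj v u)
    (hpc : ¬ HasNontrivialPathCover G) :
    starPartitionWidth G =
      sSup {m : ℕ | ∃ S : Finset V, S.Nonempty ∧ S ≠ Finset.univ ∧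
        m = ({v : V | v ∉ S ∧ ∀ u : V, G.Adj v u → u ∈ S}.ncard + S.card - 1) / S.card} := by
  classical
  set B := {m : ℕ | ∃ S : Finset V, S.Nonempty ∧ S ≠ Finset.univ ∧
        m = ({v : V | v ∉ S ∧ ∀ u : V, G.Adj v u → u ∈ S}.ncard + S.card - 1) / S.card}
    with hBdef
  set A := {k : ℕ | ∃ P : Finset (Finset V), IsStarPartition G P ∧ ∀ S ∈ P, S.card ≤ k + 1}
    with hAdef
  have hVne : Nonempty V := by
    by_contra h
    rw [not_nonempty_iff] at h
    refine hpc ⟨⊥, bot_le, ?_, ?_⟩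
    · intro v
      exact h.elim v
    · intro v
      exact h.elim v
  have hcard2 : 2 ≤ Fintype.card V := by
    by_contra h
    push_neg at h
    obtain ⟨v⟩ := hVne
    obtain ⟨u, hu⟩ := hiso v
    have h1 : Fintype.card V ≤ 1 := by omega
    have : u = v := Fintype.card_le_one_iff.mp h1 u v
    exact G.irrefl (this ▸ hu)
  -- B is nonempty
  have hBne : B.Nonempty := by
    obtain ⟨v, u, hvu⟩ := Fintype.exists_pair_of_one_lt_card (α := V) (by omega)
    refine ⟨_, {v}, singleton_nonempty v, ?_, rfl⟩
    intro h
    have : u ∈ ({v} : Finset V) := h ▸ Finset.mem_univ u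
    exact hvu (Finset.mem_singleton.mp this).symm
  -- B is bounded above
  have hiB : ∀ S : Finset V, {v : V | v ∉ S ∧ ∀ u : V, G.Adj v u → u ∈ S}.ncard
      ≤ Fintype.card V := by
    intro S
    calc {v : V | v ∉ S ∧ ∀ u : V, G.Adj v u → u ∈ S}.ncard
        ≤ (Set.univ : Set V).ncard := Set.ncard_le_ncard (Set.subset_univ _) Set.finite_univ
      _ = Fintype.card V := by rw [Set.ncard_univ, Nat.card_eq_fintype_card]
  have hBbdd : BddAbove B := by
    refine ⟨2 * Fintype.card V, ?_⟩
    rintro m ⟨S, hSne, hSuniv, rfl⟩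
    have h1 := hiB S
    have h2 : S.card ≤ Fintype.card V := by
      calc S.card ≤ (Finset.univ : Finset V).card := Finset.card_le_card (Finset.subset_univ S)
        _ = Fintype.card V := Finset.card_univ
    calc ({v : V | v ∉ S ∧ ∀ u : V, G.Adj v u → u ∈ S}.ncard + S.card - 1) / S.card
        ≤ {v : V | v ∉ S ∧ ∀ u : V, G.Adj v u → u ∈ S}.ncard + S.card - 1 := Nat.div_le_self _ _
      _ ≤ 2 * Fintype.card V := by omega
  -- the condition extracted from sSup B
  have hcond : ∀ k : ℕ, (∀ m ∈ B, m ≤ k) → ∀ S : Finset V, S.Nonempty → S ≠ Finset.univ →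
      {w : V | w ∉ S ∧ ∀ u : V, G.Adj w u → u ∈ S}.ncard ≤ k * S.card := by
    intro k hk S hSne hSuniv
    have hm : (({w : V | w ∉ S ∧ ∀ u : V, G.Adj w u → u ∈ S}.ncard + S.card - 1) / S.card) ≤ k :=
      hk _ ⟨S, hSne, hSuniv, rfl⟩
    have hpos : 0 < S.card := Finset.card_pos.mpr hSne
    rw [Nat.div_le_iff_le_mul_add_pred hpos] at hm
    have hcomm : S.card * k = k * S.card := mul_comm _ _
    set i := {w : V | w ∉ S ∧ ∀ u : V, G.Adj w u → u ∈ S}.ncard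
    set t := k * S.card
    rw [hcomm] at hm
    omega
  have hk1 : ∀ m ∈ B, m ≤ sSup B := fun m hm => le_csSup hBbdd hm
  -- 2 ≤ sSup B
  have hk12 : 2 ≤ sSup B := by
    by_contra hlt
    push_neg at hlt
    have hcond2 : ∀ S : Finset V, S.Nonempty → S ≠ Finset.univ →
        {w : V | w ∉ S ∧ ∀ u : V, G.Adj w u → u ∈ S}.ncard ≤ 2 * S.card := by
      intro S h1 h2
      calc {w : V | w ∉ S ∧ ∀ u : V, G.Adj w u → u ∈ S}.ncard
          ≤ sSup B * S.card := hcond (sSup B) hk1 S h1 h2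
        _ ≤ 2 * S.card := by
            have h3 : sSup B ≤ 2 := by omega
            exact Nat.mul_le_mul_right S.card h3
    obtain ⟨P, hP, hsz⟩ := AK.AK_main G 2 le_rfl hiso hcond2
    exact hpc (AK.pathcover_of_small_stars hP hsz)
  -- sSup B ∈ A
  have hk1A : sSup B ∈ A := by
    obtain ⟨P, hP, hsz⟩ := AK.AK_main G (sSup B) hk12 hiso (hcond (sSup B) hk1)
    exact ⟨P, hP, hsz⟩
  have hAne : A.Nonempty := ⟨sSup B, hk1A⟩
  have hk0A : sInf A ∈ A := Nat.sInf_mem hAne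
  -- every element of B is at most sInf A
  have hBle : ∀ m ∈ B, m ≤ sInf A := by
    rintro m ⟨S, hSne, hSuniv, rfl⟩
    obtain ⟨P, hP, hsz⟩ := hk0A
    have hlow := AK.lower_bound hP hsz S
    have hpos : 0 < S.card := Finset.card_pos.mpr hSne
    rw [Nat.div_le_iff_le_mul_add_pred hpos]
    have hcomm : sInf A * S.card = S.card * sInf A := mul_comm _ _
    rw [hcomm] at hlow
    set i := {w : V | w ∉ S ∧ ∀ u : V, G.Adj w u → u ∈ S}.ncard
    set t := S.card * sInf A
    omega
  show sInf A = sSup B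
  exact le_antisymm (Nat.sInf_le hk1A) (csSup_le hBne hBle)
end

section
/- If G is a finite simple graph without isolated vertices, then G has a star partition with exactly ν(G) parts, where ν(G) is the matching number of G. -/
/-- A matching of `G`, given as a finite set of pairwise disjoint edges. -/
def IsMatchingSet {V : Type*} (G : SimpleGraph V) (M : Finset (Sym2 V)) : Prop :=
  (∀ e ∈ M, e ∈ G.edgeSet) ∧
  (∀ e ∈ M, ∀ f ∈ M, e ≠ f → ∀ v : V, v ∈ e → v ∉ f)

/-- The matching number `ν(G)`: the maximum size of a matching in `G`. -/
noncomputable def matchingNumber {V : Type*} (G : SimpleGraph V) : ℕ :=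
  sSup {n : ℕ | ∃ M : Finset (Sym2 V), IsMatchingSet G M ∧ M.card = n}

open Finset

section

variable {V : Type*} {G : SimpleGraph V} {M : Finset (Sym2 V)}

def IsCoveredBy (v : V) (M : Finset (Sym2 V)) : Prop := ∃ e ∈ M, v ∈ e

lemma IsCoveredBy.mono {v : V} {M' : Finset (Sym2 V)} (h : IsCoveredBy v M') (hsub : M' ⊆ M) :
    IsCoveredBy v M :=
  let ⟨e, he, hve⟩ := h
  ⟨e, hsub he, hve⟩

lemma isCoveredBy_insert [DecidableEq V] {v : V} {e : Sym2 V} :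
    IsCoveredBy v (insert e M) ↔ v ∈ e ∨ IsCoveredBy v M := by
  simp [IsCoveredBy]

lemma card_insert_of_not_isCoveredBy [DecidableEq V] {a : V} (b : V)
    (ha : ¬IsCoveredBy a M) : #(insert s(a, b) M) = #M + 1 :=
  card_insert_of_notMem fun h => ha ⟨_, h, Sym2.mem_mk_left a b⟩

namespace IsMatchingSet

lemma eq_of_mem_of_mem (hM : IsMatchingSet G M) {e f : Sym2 V} (he : e ∈ M) (hf : f ∈ M)
    {v : V} (hve : v ∈ e) (hvf : v ∈ f) : e = f :=
  by_contra fun hne => hM.2 e he f hf hne v hve hvf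

lemma erase [DecidableEq V] (hM : IsMatchingSet G M) (e : Sym2 V) : IsMatchingSet G (M.erase e) :=
  ⟨fun f hf => hM.1 f (mem_of_mem_erase hf),
    fun f hf g hg => hM.2 f (mem_of_mem_erase hf) g (mem_of_mem_erase hg)⟩

lemma not_isCoveredBy_erase [DecidableEq V] (hM : IsMatchingSet G M) {e : Sym2 V} (he : e ∈ M)
    {v : V} (hv : v ∈ e) : ¬IsCoveredBy v (M.erase e) := by
  rintro ⟨f, hf, hvf⟩
  exact ne_of_mem_erase hf (hM.eq_of_mem_of_mem (mem_of_mem_erase hf) he hvf hv)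

lemma insert [DecidableEq V] (hM : IsMatchingSet G M) {a b : V} (hab : G.Adj a b)
    (ha : ¬IsCoveredBy a M) (hb : ¬IsCoveredBy b M) : IsMatchingSet G (insert s(a, b) M) := by
  have hfresh : ∀ f ∈ M, ∀ v ∈ s(a, b), v ∉ f := by
    rintro f hf v hv hvf
    rcases Sym2.mem_iff.mp hv with rfl | rfl
    exacts [ha ⟨f, hf, hvf⟩, hb ⟨f, hf, hvf⟩]
  refine ⟨(forall_mem_insert _ _ _).mpr ⟨hab, hM.1⟩, ?_⟩
  intro e he f hf hne v hve hvf
  rcases mem_insert.mp he with rfl | he <;> rcases mem_insert.mp hf with rfl | hf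
  · exact hne rfl
  · exact hfresh f hf v hve hvf
  · exact hfresh e he v hvf hve
  · exact hM.2 e he f hf hne v hve hvf

end IsMatchingSet

structure IsMaximumMatchingSet (G : SimpleGraph V) (M : Finset (Sym2 V)) : Prop where
  isMatchingSet : IsMatchingSet G M
  card_le : ∀ M', IsMatchingSet G M' → #M' ≤ #M

lemma exists_isMaximumMatchingSet [Finite V] (G : SimpleGraph V) :
    ∃ M, IsMaximumMatchingSet G M ∧ #M = matchingNumber G := by
  have := Fintype.ofFinite (Sym2 V)
  have hbdd : BddAbove {n | ∃ M, IsMatchingSet G M ∧ #M = n} :=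
    ⟨Fintype.card (Sym2 V), by rintro n ⟨M, -, rfl⟩; exact card_le_univ M⟩
  have hempty : IsMatchingSet G (∅ : Finset (Sym2 V)) := by constructor <;> simp
  obtain ⟨M, hM, hcard⟩ := Nat.sSup_mem (s := {n | ∃ M, IsMatchingSet G M ∧ #M = n})
    ⟨0, ∅, hempty, rfl⟩ hbdd
  exact ⟨M, ⟨hM, fun M' hM' => hcard ▸ le_csSup hbdd ⟨M', hM', rfl⟩⟩, hcard⟩

namespace IsMaximumMatchingSet

variable [DecidableEq V]

lemma isCoveredBy_of_adj (hmax : IsMaximumMatchingSet G M) {a b : V} (hab : G.Adj a b)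
    (ha : ¬IsCoveredBy a M) : IsCoveredBy b M := by
  by_contra hb
  have := hmax.card_le _ (hmax.isMatchingSet.insert hab ha hb)
  rw [card_insert_of_not_isCoveredBy b ha] at this
  omega

/-- Otherwise `u x y w` is an augmenting path for `M`. -/
lemma not_adj_of_adj (hmax : IsMaximumMatchingSet G M) {x y u w : V} (he : s(x, y) ∈ M)
    (hu : ¬IsCoveredBy u M) (hw : ¬IsCoveredBy w M) (huw : u ≠ w) (hux : G.Adj u x) :
    ¬G.Adj w y := by
  intro hwy
  have hM := hmax.isMatchingSet
  have hxy : x ≠ y := (hM.1 _ he : G.Adj x y).ne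
  have hcov : ∀ {v}, v ∈ s(x, y) → IsCoveredBy v M := fun hv => ⟨_, he, hv⟩
  set M₀ := M.erase s(x, y)
  have hx₀ : ¬IsCoveredBy x M₀ := hM.not_isCoveredBy_erase he (Sym2.mem_mk_left x y)
  have hy₀ : ¬IsCoveredBy y M₀ := hM.not_isCoveredBy_erase he (Sym2.mem_mk_right x y)
  have hu₀ : ¬IsCoveredBy u M₀ := fun h => hu (h.mono (erase_subset _ _))
  have hw₀ : ¬IsCoveredBy w M₀ := fun h => hw (h.mono (erase_subset _ _))
  have hu₁ : ¬IsCoveredBy u (insert s(w, y) M₀) := by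
    rw [isCoveredBy_insert, Sym2.mem_iff]
    rintro ((rfl | rfl) | h)
    exacts [huw rfl, hu (hcov (Sym2.mem_mk_right x _)), hu₀ h]
  have hx₁ : ¬IsCoveredBy x (insert s(w, y) M₀) := by
    rw [isCoveredBy_insert, Sym2.mem_iff]
    rintro ((rfl | rfl) | h)
    exacts [hw (hcov (Sym2.mem_mk_left _ y)), hxy rfl, hx₀ h]
  have hle := hmax.card_le _ (((hM.erase _).insert hwy hw₀ hy₀).insert hux hu₁ hx₁)
  rw [card_insert_of_not_isCoveredBy x hu₁, card_insert_of_not_isCoveredBy y hw₀,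
    card_erase_of_mem he] at hle
  have := card_pos.mpr ⟨_, he⟩
  omega

lemma exists_center (hmax : IsMaximumMatchingSet G M) {x y : V} (he : s(x, y) ∈ M)
    {S : Finset V} (hx : x ∈ S) (hy : y ∈ S)
    (hS : ∀ u ∈ S, u ≠ x → u ≠ y → ¬IsCoveredBy u M ∧ (G.Adj u x ∨ G.Adj u y)) :
    ∃ c ∈ S, ∀ v ∈ S, v ≠ c → G.Adj c v := by
  have hxy : G.Adj x y := hmax.isMatchingSet.1 _ he
  by_cases hall : ∀ v ∈ S, v ≠ x → G.Adj x v
  · exact ⟨x, hx, hall⟩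
  push Not at hall
  obtain ⟨w, hwS, hwx, hxw⟩ := hall
  have hwy : w ≠ y := by rintro rfl; exact hxw hxy
  obtain ⟨hw, hw_adj⟩ := hS w hwS hwx hwy
  have hyw : G.Adj y w := (hw_adj.resolve_left fun h => hxw h.symm).symm
  refine ⟨y, hy, fun v hvS hvy => ?_⟩
  by_cases hvx : v = x
  · exact hvx ▸ hxy.symm
  by_cases hvw : v = w
  · exact hvw ▸ hyw
  obtain ⟨hv, hv_adj⟩ := hS v hvS hvx hvy
  exact (hv_adj.resolve_left fun h => hmax.not_adj_of_adj he hv hw hvw h hyw.symm).symm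

end IsMaximumMatchingSet

/-- `a v` is the edge of `M` to whose part `v` is assigned. -/
def IsAnchoring (G : SimpleGraph V) (M : Finset (Sym2 V)) (a : V → Sym2 V) : Prop :=
  ∀ v, a v ∈ M ∧ (v ∈ a v ∨ ¬IsCoveredBy v M ∧ ∃ c ∈ a v, G.Adj v c)

lemma IsMaximumMatchingSet.exists_isAnchoring [DecidableEq V] (hmax : IsMaximumMatchingSet G M)
    (hiso : ∀ v, ∃ u, G.Adj v u) : ∃ a, IsAnchoring G M a := by
  have : ∀ v, ∃ e ∈ M, v ∈ e ∨ ¬IsCoveredBy v M ∧ ∃ c ∈ e, G.Adj v c := by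
    intro v
    by_cases hv : IsCoveredBy v M
    · obtain ⟨e, he, hve⟩ := hv
      exact ⟨e, he, .inl hve⟩
    · obtain ⟨u, hvu⟩ := hiso v
      obtain ⟨e, he, hue⟩ := hmax.isCoveredBy_of_adj hvu hv
      exact ⟨e, he, .inr ⟨hv, u, hue, hvu⟩⟩
  choose a ha using this
  exact ⟨a, ha⟩

namespace IsAnchoring

variable {a : V → Sym2 V}

lemma apply_eq_of_mem (ha : IsAnchoring G M a) (hM : IsMatchingSet G M) {e : Sym2 V}
    (he : e ∈ M) {v : V} (hv : v ∈ e) : a v = e := by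
  rcases (ha v).2 with hva | ⟨hv', -⟩
  · exact hM.eq_of_mem_of_mem (ha v).1 he hva hv
  · exact absurd ⟨e, he, hv⟩ hv'

lemma of_apply_eq (ha : IsAnchoring G M a) {u x y : V} (hu : a u = s(x, y)) (hux : u ≠ x)
    (huy : u ≠ y) : ¬IsCoveredBy u M ∧ (G.Adj u x ∨ G.Adj u y) := by
  rcases (ha u).2 with hua | ⟨hu', c, hc, huc⟩
  · rcases Sym2.mem_iff.mp (hu ▸ hua) with rfl | rfl
    exacts [absurd rfl hux, absurd rfl huy]
  · rcases Sym2.mem_iff.mp (hu ▸ hc) with rfl | rfl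
    exacts [⟨hu', .inl huc⟩, ⟨hu', .inr huc⟩]

end IsAnchoring

def IsStarPart (G : SimpleGraph V) (S : Finset V) : Prop :=
  2 ≤ #S ∧ ∃ c ∈ S, ∀ v ∈ S, v ≠ c → G.Adj c v

lemma IsMaximumMatchingSet.isStarPart_fiber [Fintype V] [DecidableEq V]
    (hmax : IsMaximumMatchingSet G M) {a : V → Sym2 V} (ha : IsAnchoring G M a) {e : Sym2 V}
    (he : e ∈ M) : IsStarPart G {v | a v = e} := by
  induction e using Sym2.ind with
  | _ x y =>
    have hM := hmax.isMatchingSet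
    have hx : x ∈ ({v | a v = s(x, y)} : Finset V) := by
      simpa using ha.apply_eq_of_mem hM he (Sym2.mem_mk_left x y)
    have hy : y ∈ ({v | a v = s(x, y)} : Finset V) := by
      simpa using ha.apply_eq_of_mem hM he (Sym2.mem_mk_right x y)
    refine ⟨?_, hmax.exists_center he hx hy fun u hu => ha.of_apply_eq (by simpa using hu)⟩
    calc 2 = #{x, y} := (card_pair (hM.1 _ he : G.Adj x y).ne).symm
      _ ≤ _ := card_le_card (by simp [insert_subset_iff, hx, hy])

lemma isStarPartition_image_fiber [Fintype V] [DecidableEq V] {β : Type*} [DecidableEq β]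
    {P : Finset β} {a : V → β} (hmaps : ∀ v, a v ∈ P)
    (hstar : ∀ e ∈ P, IsStarPart G {v | a v = e}) :
    IsStarPartition G (P.image fun e => ({v | a v = e} : Finset V)) ∧
      #(P.image fun e => ({v | a v = e} : Finset V)) = #P := by
  refine ⟨⟨fun v => ⟨({w | a w = a v} : Finset V),
    ⟨mem_image_of_mem _ (hmaps v), by simp⟩, ?_⟩, ?_, ?_⟩, ?_⟩
  · rintro S ⟨hS, hvS⟩
    obtain ⟨e, -, rfl⟩ := mem_image.mp hS
    rw [(mem_filter_univ _).mp hvS]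
  · simp only [forall_mem_image]
    exact fun e he => (hstar e he).1
  · simp only [forall_mem_image]
    exact fun e he => (hstar e he).2
  · refine card_image_of_injOn fun e he f _ hef => ?_
    obtain ⟨v, hv⟩ := card_pos.mp (by linarith [(hstar e he).1])
    have hv' : v ∈ ({w | a w = f} : Finset V) := hef ▸ hv
    exact ((mem_filter_univ v).mp hv).symm.trans ((mem_filter_univ v).mp hv')

end

/-- A finite simple graph without isolated vertices has a star
partition with exactly `ν(G)` parts. -/
theorem stmt6 {V : Type*} [Fintype V] [DecidableEq V] (G : SimpleGraph V)
    (hiso : ∀ v : V, ∃ u : V, G.Adj v u) :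
    ∃ P : Finset (Finset V), IsStarPartition G P ∧ P.card = matchingNumber G := by
  obtain ⟨M, hmax, hcard⟩ := exists_isMaximumMatchingSet G
  obtain ⟨a, ha⟩ := hmax.exists_isAnchoring hiso
  obtain ⟨hP, hPcard⟩ :=
    isStarPartition_image_fiber (fun v => (ha v).1) fun e he => hmax.isStarPart_fiber ha he
  exact ⟨_, hP, hPcard.trans hcard⟩
end

section
/- Let T be a finite tree with at least two vertices. Then every lexicographically optimal star partition of T has exactly ν(T) parts, where ν(T) is the matching number of T. -/
/-- `starCounts P i` is the number of parts of `P` which are `i`-stars,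
i.e. have exactly `i + 1` vertices. -/
def starCounts {V : Type*} [DecidableEq V] (P : Finset (Finset V)) : ℕ → ℕ :=
  fun i => (P.filter (fun S => S.card = i + 1)).card

/-- `LexLE s t` says that the sequence `(…, s 2, s 1)` read from large indices
downwards is lexicographically at most `(…, t 2, t 1)`. Since the star-count
sequences of star partitions of `G` vanish above `Δ(G)`, this coincides with the
lexicographic comparison of `(s_Δ, s_{Δ-1}, …, s_1)`. -/
def LexLE (s t : ℕ → ℕ) : Prop :=
  s = t ∨ ∃ i : ℕ, s i < t i ∧ ∀ j : ℕ, i < j → s j = t j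


namespace StarAux

open SimpleGraph

variable {V : Type*} {G : SimpleGraph V}

/-- Walk along the vertex sequence `w` from index `a`, with `l` steps. -/
def mkWalk (w : ℕ → V) : (l a : ℕ) → (∀ i, a ≤ i → i < a + l → G.Adj (w i) (w (i + 1))) →
    G.Walk (w a) (w (a + l))
  | 0, a, _ => SimpleGraph.Walk.nil.copy rfl (by rw [Nat.add_zero])
  | l + 1, a, h =>
      (SimpleGraph.Walk.cons (h a le_rfl (by omega))
        ((mkWalk w l (a + 1) (fun i h1 h2 => h i (by omega) (by omega))).copy rfl
          (congrArg w (by omega))))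

lemma mkWalk_support (w : ℕ → V) : ∀ (l a : ℕ) (h : ∀ i, a ≤ i → i < a + l → G.Adj (w i) (w (i + 1))),
    (mkWalk w l a h).support = (List.range' a (l + 1)).map w := by
  intro l
  induction l with
  | zero => intro a h; simp [mkWalk, List.range'_succ]
  | succ n ih =>
      intro a h
      rw [mkWalk]
      rw [SimpleGraph.Walk.support_cons, SimpleGraph.Walk.support_copy, ih]
      simp [List.range'_succ]

lemma mkWalk_edges (w : ℕ → V) : ∀ (l a : ℕ) (h : ∀ i, a ≤ i → i < a + l → G.Adj (w i) (w (i + 1))),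
    (mkWalk w l a h).edges = (List.range' a l).map (fun i => s(w i, w (i + 1))) := by
  intro l
  induction l with
  | zero => intro a h; simp [mkWalk]
  | succ n ih =>
      intro a h
      rw [mkWalk]
      rw [SimpleGraph.Walk.edges_cons, SimpleGraph.Walk.edges_copy, ih]
      simp [List.range'_succ]

/-- In an acyclic graph, a non-backtracking walk has pairwise distinct vertices. -/
lemma walkinj (hac : G.IsAcyclic) {n : ℕ} {w : ℕ → V}
    (hadj : ∀ i, i < n → G.Adj (w i) (w (i + 1)))
    (hnb : ∀ i, i + 2 ≤ n → w i ≠ w (i + 2)) :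
    ∀ ⦃i j⦄, i ≤ n → j ≤ n → w i = w j → i = j := by
  by_contra hcon
  push_neg at hcon
  obtain ⟨i0, j0, hi0, hj0, heq0, hne0⟩ := hcon
  -- get a bad pair with i < j
  have hbad : ∃ d, ∃ i j, i ≤ n ∧ j ≤ n ∧ i < j ∧ j - i = d ∧ w i = w j := by
    rcases Nat.lt_or_ge i0 j0 with h | h
    · exact ⟨j0 - i0, i0, j0, hi0, hj0, h, rfl, heq0⟩
    · have : j0 < i0 := lt_of_le_of_ne h (Ne.symm hne0)
      exact ⟨i0 - j0, j0, i0, hj0, hi0, this, rfl, heq0.symm⟩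
  classical
  obtain ⟨i, j, hi, hj, hij, hdk, heq⟩ := Nat.find_spec hbad
  set k := Nat.find hbad with hk
  have hmin : ∀ d < k, ¬ ∃ i j, i ≤ n ∧ j ≤ n ∧ i < j ∧ j - i = d ∧ w i = w j :=
    fun d hd => Nat.find_min hbad hd
  -- k ≥ 3
  have hk1 : k ≠ 1 := by
    intro h1
    have : j = i + 1 := by omega
    exact (hadj i (by omega)).ne (by rw [← this, heq])
  have hk2 : k ≠ 2 := by
    intro h2
    have : j = i + 2 := by omega
    exact hnb i (by omega) (by rw [← this, heq])
  have hk3 : 3 ≤ k := by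
    rcases Nat.lt_or_ge k 3 with h | h
    · interval_cases k
      · omega
      · exact absurd rfl hk1
      · exact absurd rfl hk2
    · exact h
  -- interior distinctness
  have hint : ∀ p q, i ≤ p → p < q → q ≤ j → ¬(p = i ∧ q = j) → w p ≠ w q := by
    intro p q hp hpq hq hne hwe
    have hlt : q - p < k := by
      rcases Nat.lt_or_ge (q - p) k with h | h
      · exact h
      · exfalso; apply hne; omega
    exact hmin (q - p) hlt ⟨p, q, by omega, by omega, hpq, rfl, hwe⟩
  -- build the cycle
  have hadj' : ∀ t, i + 1 ≤ t → t < i + 1 + (j - (i + 1)) → G.Adj (w t) (w (t + 1)) := by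
    intro t h1 h2; exact hadj t (by omega)
  set p0 : G.Walk (w (i + 1)) (w (i + 1 + (j - (i + 1)))) := mkWalk w (j - (i + 1)) (i + 1) hadj'
  have hend : w (i + 1 + (j - (i + 1))) = w i := by
    rw [show i + 1 + (j - (i + 1)) = j from by omega]; exact heq.symm
  have hcyc : (SimpleGraph.Walk.cons (hadj i (by omega)) (p0.copy rfl hend)).IsCycle := by
    rw [SimpleGraph.Walk.cons_isCycle_iff]
    constructor
    · apply SimpleGraph.Walk.IsPath.mk'
      rw [SimpleGraph.Walk.support_copy]
      rw [mkWalk_support]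
      apply List.Nodup.map_on
      · intro x hx y hy hxy
        rw [List.mem_range'] at hx hy
        obtain ⟨a, ha, rfl⟩ := hx
        obtain ⟨b, hb, rfl⟩ := hy
        by_contra hne
        rcases Nat.lt_or_ge (i + 1 + 1 * a) (i + 1 + 1 * b) with h | h
        · exact hint _ _ (by omega) h (by omega) (by omega) hxy
        · exact hint _ _ (by omega) (by omega) (by omega) (by omega) hxy.symm
      · exact List.nodup_range' _ (by omega)
    · rw [SimpleGraph.Walk.edges_copy]
      rw [mkWalk_edges]
      intro hmem
      rw [List.mem_map] at hmem
      obtain ⟨t, ht, hte⟩ := hmem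
      rw [List.mem_range'] at ht
      obtain ⟨a, ha, rfl⟩ := ht
      set t := i + 1 + 1 * a with htdef
      rw [Sym2.eq_iff] at hte
      rcases hte with ⟨h1, h2⟩ | ⟨h1, h2⟩
      · exact hint i t (le_refl i) (by omega) (by omega) (by omega) h1.symm
      · -- w t = w i and w (t+1) = w (i+1)
        rcases Nat.lt_or_ge (t + 1) j with h | h
        · exact hint i (t + 1) (le_refl i) (by omega) (by omega) (by omega) h2.symm
        · have : t + 1 = j := by omega
          exact hint (i + 1) (t) (by omega) (by omega) (by omega) (by omega) h1.symm
  exact hac _ hcyc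

lemma noTriangle (hac : G.IsAcyclic) {a b c : V} (h1 : G.Adj a b) (h2 : G.Adj b c)
    (h3 : G.Adj a c) : False := by
  classical
  have := walkinj hac (n := 3) (w := fun i => if i = 0 then a else if i = 1 then b else if i = 2 then c else a)
    (by intro i hi; interval_cases i <;> simp [h1, h2, h3.symm])
    (by intro i hi
        have : i ≤ 1 := by omega
        interval_cases i <;> simp [h3.ne, h1.ne'])
  have h03 := @this 0 3 (by omega) (by omega) (by simp)
  omega

section Dist
variable [DecidableEq V]

lemma support_dist_le {r u x : V} (p : G.Walk r u) (hx : x ∈ p.support) :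
    G.dist r x ≤ p.length := by
  have h1 := SimpleGraph.Walk.length_takeUntil_le p hx
  calc G.dist r x ≤ (p.takeUntil x hx).length := SimpleGraph.dist_le _
    _ ≤ p.length := h1

lemma adj_dist (hc : G.Connected) (hac : G.IsAcyclic) (r : V) {u v : V} (h : G.Adj u v) :
    G.dist r u + 1 = G.dist r v ∨ G.dist r v + 1 = G.dist r u := by
  have hb1 : G.dist r v ≤ G.dist r u + 1 := by
    obtain ⟨p, hp, hl⟩ := hc.exists_path_of_dist r u
    have := SimpleGraph.dist_le (p.concat h)
    rw [SimpleGraph.Walk.length_concat, hl] at this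
    exact this
  have hb2 : G.dist r u ≤ G.dist r v + 1 := by
    obtain ⟨p, hp, hl⟩ := hc.exists_path_of_dist r v
    have := SimpleGraph.dist_le (p.concat h.symm)
    rw [SimpleGraph.Walk.length_concat, hl] at this
    exact this
  have hne : G.dist r u ≠ G.dist r v := by
    intro hd
    obtain ⟨p, hp, hl⟩ := hc.exists_path_of_dist r v
    have hu : u ∉ p.support := by
      intro hu
      have h1 := support_dist_le p hu
      have h2 := SimpleGraph.Walk.length_takeUntil_le p hu
      -- if dist r u = length then dropUntil has length 0, so u = v
      have h3 := congrArg SimpleGraph.Walk.length (p.take_spec hu)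
      rw [SimpleGraph.Walk.length_append] at h3
      have h4 : G.dist r u ≤ (p.takeUntil u hu).length := SimpleGraph.dist_le _
      have h5 : (p.dropUntil u hu).length = 0 ∨ (p.takeUntil u hu).length < p.length := by omega
      rcases h5 with h5 | h5
      · exact h.ne (SimpleGraph.Walk.eq_of_length_eq_zero h5)
      · omega
    have hpath : (p.concat h.symm).IsPath := by
      apply SimpleGraph.Walk.IsPath.mk'
      rw [SimpleGraph.Walk.support_concat]
      apply List.Nodup.append hp.support_nodup (by simp)
      intro x hx hx'
      simp at hx'
      subst hx'
      exact hu hx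
    obtain ⟨q, hq, hlq⟩ := hc.exists_path_of_dist r u
    have huniq := SimpleGraph.isAcyclic_iff_path_unique.mp hac (v := r) (w := u)
      ⟨p.concat h.symm, hpath⟩ ⟨q, hq⟩
    have hww : p.concat h.symm = q := congrArg Subtype.val huniq
    have : (p.concat h.symm).length = q.length := by rw [hww]
    rw [SimpleGraph.Walk.length_concat, hl, hlq] at this
    omega
  omega

lemma two_parents (hc : G.Connected) (hac : G.IsAcyclic) {r v x y : V}
    (hx : G.Adj x v) (hy : G.Adj y v) (hxy : x ≠ y)
    (dx : G.dist r x + 1 = G.dist r v) (dy : G.dist r y + 1 = G.dist r v) : False := by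
  obtain ⟨p, hp, hl⟩ := hc.exists_path_of_dist r x
  obtain ⟨q, hq, hlq⟩ := hc.exists_path_of_dist r y
  have hvp : v ∉ p.support := by
    intro hv
    have := support_dist_le p hv
    omega
  have hvq : v ∉ q.support := by
    intro hv
    have := support_dist_le q hv
    omega
  have hpath : (p.concat hx).IsPath := by
    apply SimpleGraph.Walk.IsPath.mk'
    rw [SimpleGraph.Walk.support_concat]
    apply List.Nodup.append hp.support_nodup (by simp)
    intro z hz hz'
    simp at hz'
    subst hz'
    exact hvp hz
  have hqath : (q.concat hy).IsPath := by
    apply SimpleGraph.Walk.IsPath.mk'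
    rw [SimpleGraph.Walk.support_concat]
    apply List.Nodup.append hq.support_nodup (by simp)
    intro z hz hz'
    simp at hz'
    subst hz'
    exact hvq hz
  have huniq := SimpleGraph.isAcyclic_iff_path_unique.mp hac (v := r) (w := v)
    ⟨p.concat hx, hpath⟩ ⟨q.concat hy, hqath⟩
  have hww : p.concat hx = q.concat hy := congrArg Subtype.val huniq
  have hedge : s(x, v) ∈ (q.concat hy).edges := by
    rw [← hww, SimpleGraph.Walk.edges_concat]
    simp
  rw [SimpleGraph.Walk.edges_concat] at hedge
  rw [List.concat_eq_append, List.mem_append] at hedge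
  rcases hedge with hedge | hedge
  · exact hvq (SimpleGraph.Walk.snd_mem_support_of_mem_edges q hedge)
  · simp only [List.mem_singleton, Sym2.eq_iff] at hedge
    rcases hedge with ⟨h1, h2⟩ | ⟨h1, h2⟩
    · exact hxy h1
    · exact hx.ne h1

end Dist

section Chains
variable [DecidableEq V]
variable (G) (P : Finset (Finset V)) (part : V → Finset V) (ctr : Finset V → V)

/-- `v` is a non-center vertex of a part of size at least 3. -/
def BigExtra (v : V) : Prop := 3 ≤ (part v).card ∧ v ≠ ctr (part v)

/-- Alternating chain of length `k`: starts at a big-extra vertex `w 0`, with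
2-element parts `{w (2i+1), w (2i+2)}` and cross edges `(w (2i), w (2i+1))`. -/
def CW (k : ℕ) (w : ℕ → V) : Prop :=
  BigExtra part ctr (w 0) ∧
  (∀ i, i < k → ({w (2*i+1), w (2*i+2)} : Finset V) ∈ P) ∧
  (∀ i, i ≤ k → G.Adj (w (2*i)) (w (2*i+1)) ∧ part (w (2*i)) ≠ part (w (2*i+1)))

def Conflict : Prop := ∃ k w, CW G P part ctr k w ∧ BigExtra part ctr (w (2*k+1))

def Forced (x : V) : Prop := ∃ k w, CW G P part ctr k w ∧ w (2*k+1) = x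

variable {G P part ctr}

lemma forced_base {u v : V} (hbig : BigExtra part ctr u) (hadj : G.Adj u v)
    (hne : part u ≠ part v) : Forced G P part ctr v := by
  classical
  refine ⟨0, fun i => if i = 0 then u else v, ⟨by simpa using hbig, ?_, ?_⟩, by norm_num⟩
  · intro i hi; omega
  · intro i hi
    have : i = 0 := by omega
    subst this
    simpa using ⟨hadj, hne⟩

lemma conflict_base {u v : V} (hbig : BigExtra part ctr u) (hbig' : BigExtra part ctr v)
    (hadj : G.Adj u v) (hne : part u ≠ part v) : Conflict G P part ctr := by
  classical
  refine ⟨0, fun i => if i = 0 then u else v, ⟨by simpa using hbig, ?_, ?_⟩, by norm_num; exact hbig'⟩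
  · intro i hi; omega
  · intro i hi
    have : i = 0 := by omega
    subst this
    simpa using ⟨hadj, hne⟩

lemma forced_step {x b c : V} (hf : Forced G P part ctr x)
    (hpair : ({x, b} : Finset V) ∈ P) (hadj : G.Adj b c) (hne : part b ≠ part c) :
    Forced G P part ctr c := by
  classical
  obtain ⟨k, w, ⟨hb0, hpairs, hcross⟩, hx⟩ := hf
  refine ⟨k + 1, fun i => if i ≤ 2*k+1 then w i else if i = 2*k+2 then b else c,
    ⟨?_, ?_, ?_⟩, ?_⟩
  · simpa using hb0
  · intro i hi
    beta_reduce
    rcases Nat.lt_or_ge i k with h | h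
    · rw [if_pos (by omega : 2*i+1 ≤ 2*k+1), if_pos (by omega : 2*i+2 ≤ 2*k+1)]
      exact hpairs i h
    · have : i = k := by omega
      subst this
      rw [if_pos (by omega : 2*i+1 ≤ 2*i+1), if_neg (by omega : ¬ (2*i+2 ≤ 2*i+1)),
        if_pos rfl, hx]
      exact hpair
  · intro i hi
    beta_reduce
    rcases Nat.lt_or_ge i (k+1) with h | h
    · rw [if_pos (by omega : 2*i ≤ 2*k+1), if_pos (by omega : 2*i+1 ≤ 2*k+1)]
      exact hcross i (by omega)
    · have : i = k + 1 := by omega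
      subst this
      rw [if_neg (by omega : ¬ (2*(k+1) ≤ 2*k+1)), if_neg (by omega : ¬ (2*(k+1)+1 ≤ 2*k+1)),
        if_pos (by omega : 2*(k+1) = 2*k+2), if_neg (by omega : ¬ (2*(k+1)+1 = 2*k+2))]
      exact ⟨hadj, hne⟩
  · beta_reduce
    rw [if_neg (by omega : ¬ (2*(k+1)+1 ≤ 2*k+1)), if_neg (by omega : ¬ (2*(k+1)+1 = 2*k+2))]

lemma conflict_of_forced_forced {x y : V} (hxy : ({x, y} : Finset V) ∈ P)
    (hfx : Forced G P part ctr x) (hfy : Forced G P part ctr y) :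
    Conflict G P part ctr := by
  classical
  obtain ⟨k, w, ⟨hb0, hpairs, hcross⟩, hx⟩ := hfx
  obtain ⟨k', w', ⟨hb0', hpairs', hcross'⟩, hy⟩ := hfy
  refine ⟨k + k' + 1, fun i => if i ≤ 2*k+1 then w i else w' (2*k' + 2*k + 3 - i),
    ⟨?_, ?_, ?_⟩, ?_⟩
  · simpa using hb0
  · intro i hi
    beta_reduce
    rcases Nat.lt_or_ge i k with h | h
    · rw [if_pos (by omega : 2*i+1 ≤ 2*k+1), if_pos (by omega : 2*i+2 ≤ 2*k+1)]
      exact hpairs i h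
    rcases Nat.eq_or_lt_of_le h with h' | h'
    · subst h'
      rw [if_pos (by omega : 2*k+1 ≤ 2*k+1), if_neg (by omega : ¬ (2*k+2 ≤ 2*k+1))]
      rw [show 2*k' + 2*k + 3 - (2*k+2) = 2*k'+1 from by omega]
      rw [hx, hy]
      exact hxy
    · -- k < i < k + k' + 1
      set t := k + k' + 1 - i with ht
      have h1 : 2*k' + 2*k + 3 - (2*i+1) = 2*t := by omega
      have h2 : 2*k' + 2*k + 3 - (2*i+2) = 2*(t-1)+1 := by omega
      rw [if_neg (by omega : ¬ (2*i+1 ≤ 2*k+1)), if_neg (by omega : ¬ (2*i+2 ≤ 2*k+1)), h1, h2]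
      rw [show ({w' (2*t), w' (2*(t-1)+1)} : Finset V) = {w' (2*(t-1)+1), w' (2*(t-1)+2)} from by
        rw [show 2*(t-1)+2 = 2*t from by omega]; exact Finset.pair_comm _ _]
      exact hpairs' (t-1) (by omega)
  · intro i hi
    beta_reduce
    rcases Nat.lt_or_ge (2*i+1) (2*k+2) with h | h
    · rw [if_pos (by omega : 2*i ≤ 2*k+1), if_pos (by omega : 2*i+1 ≤ 2*k+1)]
      exact hcross i (by omega)
    · set t := k + k' + 1 - i with ht
      have h1 : 2*k' + 2*k + 3 - (2*i) = 2*t+1 := by omega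
      have h2 : 2*k' + 2*k + 3 - (2*i+1) = 2*t := by omega
      have hc := hcross' t (by omega)
      rw [if_neg (by omega : ¬ (2*i ≤ 2*k+1)), if_neg (by omega : ¬ (2*i+1 ≤ 2*k+1)), h1, h2]
      exact ⟨(hc.1).symm, (hc.2).symm⟩
  · beta_reduce
    rw [if_neg (by omega : ¬ (2*(k+k'+1)+1 ≤ 2*k+1))]
    rw [show 2*k' + 2*k + 3 - (2*(k+k'+1)+1) = 0 from by omega]
    exact hb0'

lemma pair_adj (hctr : ∀ S ∈ P, ctr S ∈ S ∧ ∀ v ∈ S, v ≠ ctr S → G.Adj (ctr S) v)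
    {x y : V} (hS : ({x, y} : Finset V) ∈ P) (hne : x ≠ y) : G.Adj x y := by
  obtain ⟨hc, ha⟩ := hctr _ hS
  rcases Finset.mem_insert.mp hc with h | h
  · have h2 := ha y (by simp) (by rw [h]; exact hne.symm)
    rwa [h] at h2
  · rw [Finset.mem_singleton] at h
    have h2 := ha x (by simp) (by rw [h]; exact hne)
    rw [h] at h2
    exact h2.symm

lemma flip [Fintype V] (hac : G.IsAcyclic)
    (hPmem : ∀ v : V, part v ∈ P ∧ v ∈ part v)
    (huniq : ∀ (v : V) (S : Finset V), S ∈ P → v ∈ S → S = part v)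
    (hctr : ∀ S ∈ P, ctr S ∈ S ∧ ∀ v ∈ S, v ≠ ctr S → G.Adj (ctr S) v)
    (hP2 : ∀ S ∈ P, 2 ≤ S.card)
    (hconf : Conflict G P part ctr) :
    ∃ Q : Finset (Finset V), IsStarPartition G Q ∧ ∃ t, 2 ≤ t ∧
      starCounts Q t < starCounts P t ∧ ∀ j, t < j → starCounts Q j = starCounts P j := by
  classical
  obtain ⟨w, hw, hend⟩ := Nat.find_spec hconf
  set k := Nat.find hconf with hkdef
  have hmin : ∀ k' , k' < k → ¬ ∃ w, CW G P part ctr k' w ∧ BigExtra part ctr (w (2*k'+1)) :=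
    fun k' h => Nat.find_min hconf h
  obtain ⟨hb0, hpairs, hcross⟩ := hw
  -- basic facts
  have hpairmem : ∀ i, i < k → ({w (2*i+1), w (2*i+2)} : Finset V) ∈ P := hpairs
  have hpairne : ∀ i, i < k → w (2*i+1) ≠ w (2*i+2) := by
    intro i hi heq
    have h2 := hP2 _ (hpairs i hi)
    have hsing : ({w (2*i+1), w (2*i+2)} : Finset V) = {w (2*i+1)} := by
      rw [← heq]; simp
    rw [hsing, Finset.card_singleton] at h2
    omega
  have hpartodd : ∀ i, i < k → part (w (2*i+1)) = {w (2*i+1), w (2*i+2)} :=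
    fun i hi => (huniq _ _ (hpairs i hi) (Finset.mem_insert_self _ _)).symm
  have hparteven : ∀ i, i < k → part (w (2*i+2)) = {w (2*i+1), w (2*i+2)} :=
    fun i hi => (huniq _ _ (hpairs i hi) (by simp)).symm
  have hcardmid : ∀ j, 1 ≤ j → j ≤ 2*k → (part (w j)).card = 2 := by
    intro j h1 h2
    rcases Nat.even_or_odd j with ⟨i, hij⟩ | ⟨i, hij⟩
    · -- j = i + i, i ≥ 1
      subst hij
      have hi1 : 1 ≤ i := by omega
      rw [show i + i = 2*(i-1)+2 from by omega, hparteven (i-1) (by omega)]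
      rw [Finset.card_insert_of_notMem (by simp [hpairne (i-1) (by omega)])]
      simp
    · subst hij
      rw [hpartodd i (by omega)]
      rw [Finset.card_insert_of_notMem (by simp [hpairne i (by omega)])]
      simp
  have hadjall : ∀ j, j < 2*k+1 → G.Adj (w j) (w (j+1)) := by
    intro j hj
    rcases Nat.even_or_odd j with ⟨i, hij⟩ | ⟨i, hij⟩
    · subst hij
      rw [show i + i = 2*i from by omega]
      exact (hcross i (by omega)).1
    · subst hij
      exact pair_adj hctr (hpairs i (by omega)) (hpairne i (by omega))
  -- consecutive pairs are distinct (by minimality of k)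
  have hBne : ∀ i, i + 1 < k → ({w (2*i+1), w (2*i+2)} : Finset V) ≠ {w (2*i+3), w (2*i+4)} := by
    intro i hik heq
    have wcongr : ∀ {a b : ℕ}, a = b → w a = w b := fun h => congrArg w h
    have hne23 : w (2*i+2) ≠ w (2*i+3) := by
      have h0 := (hcross (i+1) (by omega)).1
      rw [wcongr (show 2*(i+1) = 2*i+2 from by omega),
        wcongr (show 2*(i+1)+1 = 2*i+3 from by omega)] at h0
      exact h0.ne
    -- from set equality derive pointwise equality
    have h3mem : w (2*i+3) ∈ ({w (2*i+1), w (2*i+2)} : Finset V) := by rw [heq]; simp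
    have heq13 : w (2*i+3) = w (2*i+1) := by
      rcases Finset.mem_insert.mp h3mem with h | h
      · exact h
      · rw [Finset.mem_singleton] at h; exact absurd h.symm hne23
    have h2mem : w (2*i+2) ∈ ({w (2*i+3), w (2*i+4)} : Finset V) := by rw [← heq]; simp
    have heq24 : w (2*i+2) = w (2*i+4) := by
      rcases Finset.mem_insert.mp h2mem with h | h
      · exact absurd h hne23
      · rwa [Finset.mem_singleton] at h
    -- build a shorter conflict chain
    apply hmin (k-1) (by omega)
    refine ⟨fun j => if j ≤ 2*i+2 then w j else w (j+2), ⟨?_, ?_, ?_⟩, ?_⟩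
    · simpa using hb0
    · intro s hs
      beta_reduce
      rcases Nat.lt_or_ge s (i+1) with h | h
      · rw [if_pos (by omega : 2*s+1 ≤ 2*i+2), if_pos (by omega : 2*s+2 ≤ 2*i+2)]
        exact hpairs s (by omega)
      · rw [if_neg (by omega : ¬ (2*s+1 ≤ 2*i+2)), if_neg (by omega : ¬ (2*s+2 ≤ 2*i+2))]
        rw [show 2*s+1+2 = 2*(s+1)+1 from by omega, show 2*s+2+2 = 2*(s+1)+2 from by omega]
        exact hpairs (s+1) (by omega)
    · intro s hs
      beta_reduce
      rcases Nat.lt_or_ge s (i+1) with h | h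
      · rw [if_pos (by omega : 2*s ≤ 2*i+2), if_pos (by omega : 2*s+1 ≤ 2*i+2)]
        exact hcross s (by omega)
      rcases Nat.eq_or_lt_of_le h with h' | h'
      · subst h'
        rw [if_pos (by omega : 2*(i+1) ≤ 2*i+2), if_neg (by omega : ¬ (2*(i+1)+1 ≤ 2*i+2))]
        have hc := hcross (i+2) (by omega)
        have e1 : w (2*(i+2)) = w (2*(i+1)) := by
          rw [wcongr (show 2*(i+2) = 2*i+4 from by omega), ← heq24,
            wcongr (show 2*i+2 = 2*(i+1) from by omega)]
        have e2 : w (2*(i+2)+1) = w (2*(i+1)+1+2) := wcongr (by omega)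
        rw [e1, e2] at hc
        exact hc
      · rw [if_neg (by omega : ¬ (2*s ≤ 2*i+2)), if_neg (by omega : ¬ (2*s+1 ≤ 2*i+2))]
        rw [show 2*s+2 = 2*(s+1) from by omega, show 2*s+1+2 = 2*(s+1)+1 from by omega]
        exact hcross (s+1) (by omega)
    · beta_reduce
      rw [if_neg (by omega : ¬ (2*(k-1)+1 ≤ 2*i+2))]
      rw [show 2*(k-1)+1+2 = 2*k+1 from by omega]
      exact hend
  have wcongr : ∀ {a b : ℕ}, a = b → w a = w b := fun h => congrArg w h
  -- the walk w is non-backtracking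
  have hnb : ∀ j, j + 2 ≤ 2*k+1 → w j ≠ w (j+2) := by
    intro j hj heqw
    rcases Nat.even_or_odd j with ⟨i, hij⟩ | ⟨i, hij⟩
    · -- j = i + i
      rcases Nat.eq_zero_or_pos i with h0 | h0
      · -- w 0 = w 2 : parts have different cards
        subst h0
        simp only [Nat.zero_add] at hij
        subst hij
        have hc2 : (part (w 2)).card = 2 := hcardmid 2 (by omega) (by omega)
        have h9 := hb0.1
        have heqw2 : w 0 = w 2 := heqw.trans (congrArg w (by norm_num))
        rw [heqw2] at h9
        omega
      · have e1 : part (w j) = {w (2*(i-1)+1), w (2*(i-1)+2)} := by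
          rw [wcongr (show j = 2*(i-1)+2 from by omega)]
          exact hparteven (i-1) (by omega)
        have e2 : part (w (j+2)) = {w (2*i+1), w (2*i+2)} := by
          rw [wcongr (show j+2 = 2*i+2 from by omega)]
          exact hparteven i (by omega)
        have := hBne (i-1) (by omega)
        rw [show 2*(i-1)+3 = 2*i+1 from by omega, show 2*(i-1)+4 = 2*i+2 from by omega] at this
        exact this (by rw [← e1, ← e2, heqw])
    · -- j = 2i+1
      rcases Nat.lt_or_ge (i+1) k with hik | hik
      · have e1 : part (w j) = {w (2*i+1), w (2*i+2)} := by
          rw [wcongr hij]; exact hpartodd i (by omega)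
        have e2 : part (w (j+2)) = {w (2*(i+1)+1), w (2*(i+1)+2)} := by
          rw [wcongr (show j+2 = 2*(i+1)+1 from by omega)]
          exact hpartodd (i+1) hik
        have := hBne i (by omega)
        rw [show 2*i+3 = 2*(i+1)+1 from by omega, show 2*i+4 = 2*(i+1)+2 from by omega] at this
        exact this (by rw [← e1, ← e2, heqw])
      · -- j + 2 = 2k+1 : big part vs card-2 part
        have hj2 : j + 2 = 2*k+1 := by omega
        have hc2 : (part (w j)).card = 2 := hcardmid j (by omega) (by omega)
        have := hend.1
        rw [← wcongr hj2, ← heqw] at this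
        omega
  have winj : ∀ ⦃a b⦄, a ≤ 2*k+1 → b ≤ 2*k+1 → w a = w b → a = b :=
    walkinj hac hadjall hnb
  -- the two endpoint parts are distinct
  have hAA' : part (w 0) ≠ part (w (2*k+1)) := by
    intro heqA
    set a := ctr (part (w 0)) with hadef
    have haP : part (w 0) ∈ P := (hPmem (w 0)).1
    have hamem : a ∈ part (w 0) := (hctr _ haP).1
    have haA : part a = part (w 0) := (huniq a _ haP hamem).symm
    have hadj0 : G.Adj a (w 0) := (hctr _ haP).2 (w 0) (hPmem (w 0)).2 hb0.2
    have hadjE : G.Adj (w (2*k+1)) a := by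
      have hmem' : w (2*k+1) ∈ part (w 0) := by rw [heqA]; exact (hPmem _).2
      have hne' : w (2*k+1) ≠ a := by
        have h5 := hend.2
        rw [← heqA] at h5
        exact fun hh => h5 (by rw [hh, hadef])
      exact ((hctr _ haP).2 _ hmem' hne').symm
    -- closed non-backtracking walk a, w 0, ..., w (2k+1), a
    set W : ℕ → V := fun j => if j = 0 then a else if j ≤ 2*k+2 then w (j-1) else a with hWdef
    have hWadj : ∀ j, j < 2*k+3 → G.Adj (W j) (W (j+1)) := by
      intro j hj
      rcases Nat.eq_zero_or_pos j with h0 | h0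
      · subst h0
        show G.Adj (if (0:ℕ) = 0 then a else _) _
        rw [if_pos rfl]
        show G.Adj a (if (1:ℕ) = 0 then a else if 1 ≤ 2*k+2 then w 0 else a)
        rw [if_neg (by omega), if_pos (by omega)]
        exact hadj0
      rcases Nat.lt_or_ge j (2*k+2) with h1 | h1
      · show G.Adj (if j = 0 then a else if j ≤ 2*k+2 then w (j-1) else a)
          (if j+1 = 0 then a else if j+1 ≤ 2*k+2 then w (j+1-1) else a)
        rw [if_neg (by omega), if_pos (by omega), if_neg (by omega), if_pos (by omega)]
        have := hadjall (j-1) (by omega)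
        rw [wcongr (show j-1+1 = j+1-1 from by omega)] at this
        exact this
      · have hj2 : j = 2*k+2 := by omega
        subst hj2
        show G.Adj (if 2*k+2 = 0 then a else if 2*k+2 ≤ 2*k+2 then w (2*k+2-1) else a)
          (if 2*k+2+1 = 0 then a else if 2*k+2+1 ≤ 2*k+2 then w (2*k+2+1-1) else a)
        rw [if_neg (by omega), if_pos (by omega), if_neg (by omega), if_neg (by omega)]
        rw [wcongr (show 2*k+2-1 = 2*k+1 from by omega)]
        exact hadjE
    have hWnb : ∀ j, j + 2 ≤ 2*k+3 → W j ≠ W (j+2) := by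
      intro j hj
      rcases Nat.eq_zero_or_pos j with h0 | h0
      · subst h0
        show (if (0:ℕ) = 0 then a else _) ≠ (if (2:ℕ) = 0 then a else if 2 ≤ 2*k+2 then w 1 else a)
        rw [if_pos rfl, if_neg (by omega), if_pos (by omega)]
        intro heqa
        rcases Nat.eq_zero_or_pos k with hk0 | hk0
        · -- k = 0 : w 1 is a big extra in part (w 0), so ≠ its center a
          have h5 := hend.2
          rw [wcongr (show 2*k+1 = 1 from by omega)] at h5
          rw [wcongr (show 2*k+1 = 1 from by omega)] at heqA
          rw [← heqA] at h5
          exact h5 (heqa.symm.trans hadef)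
        · have hc2 : (part (w 1)).card = 2 := hcardmid 1 (by omega) (by omega)
          have h9 := hb0.1
          rw [← haA, heqa] at h9
          omega
      rcases Nat.lt_or_ge (j+2) (2*k+3) with h1 | h1
      · show (if j = 0 then a else if j ≤ 2*k+2 then w (j-1) else a) ≠
          (if j+2 = 0 then a else if j+2 ≤ 2*k+2 then w (j+2-1) else a)
        rw [if_neg (by omega), if_pos (by omega), if_neg (by omega), if_pos (by omega)]
        have := hnb (j-1) (by omega)
        rw [wcongr (show j-1+2 = j+2-1 from by omega)] at this
        exact this
      · have hj2 : j = 2*k+1 := by omega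
        subst hj2
        show (if 2*k+1 = 0 then a else if 2*k+1 ≤ 2*k+2 then w (2*k+1-1) else a) ≠
          (if 2*k+1+2 = 0 then a else if 2*k+1+2 ≤ 2*k+2 then w (2*k+1+2-1) else a)
        rw [if_neg (by omega), if_pos (by omega), if_neg (by omega), if_neg (by omega)]
        rw [wcongr (show 2*k+1-1 = 2*k from by omega)]
        intro heqa
        rcases Nat.eq_zero_or_pos k with hk0 | hk0
        · have heqa0 : w 0 = a := by
            rw [wcongr (show (0:ℕ) = 2*k from by omega)]
            exact heqa
          exact hb0.2 (heqa0.trans hadef)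
        · have hc2 : (part (w (2*k))).card = 2 := hcardmid (2*k) (by omega) (by omega)
          have h3 := hb0.1
          rw [← haA] at h3
          rw [← heqa] at h3
          omega
    have := walkinj hac (n := 2*k+3) hWadj hWnb (i := 0) (j := 2*k+3) (by omega) (by omega)
    have hW0 : W 0 = a := by
      show (if (0:ℕ) = 0 then a else if (0:ℕ) ≤ 2*k+2 then w (0-1) else a) = a
      rw [if_pos rfl]
    have hWlast : W (2*k+3) = a := by
      show (if 2*k+3 = 0 then a else if 2*k+3 ≤ 2*k+2 then w (2*k+3-1) else a) = a
      rw [if_neg (by omega), if_neg (by omega)]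
    have h03 := this (by rw [hW0, hWlast])
    omega
  -- now build the improved partition
  set A := part (w 0) with hAdef
  set A' := part (w (2*k+1)) with hA'def
  have hAP : A ∈ P := (hPmem (w 0)).1
  have hA'P : A' ∈ P := (hPmem (w (2*k+1))).1
  have hA3 : 3 ≤ A.card := hb0.1
  have hA'3 : 3 ≤ A'.card := hend.1
  set pr : ℕ → Finset V := fun i => {w (2*i+1), w (2*i+2)} with hprdef
  set npr : ℕ → Finset V := fun i => {w (2*i), w (2*i+1)} with hnprdef
  have hprcard : ∀ i, i < k → (pr i).card = 2 := by
    intro i hi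
    rw [hprdef]
    beta_reduce
    rw [Finset.card_insert_of_notMem (by simp [hpairne i hi]), Finset.card_singleton]
  have hnprcard : ∀ i, i ≤ k → (npr i).card = 2 := by
    intro i hi
    rw [hnprdef]
    beta_reduce
    rw [Finset.card_insert_of_notMem (by simp [(hcross i hi).1.ne]), Finset.card_singleton]
  set olds : Finset (Finset V) := insert A (insert A' ((Finset.range k).image pr)) with holdsdef
  set news : Finset (Finset V) :=
    insert (A.erase (w 0)) (insert (A'.erase (w (2*k+1))) ((Finset.range (k+1)).image npr))
    with hnewsdef
  set Q : Finset (Finset V) := (P \ olds) ∪ news with hQdef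
  have holds_iff : ∀ S, S ∈ olds ↔ S = A ∨ S = A' ∨ ∃ i, i < k ∧ S = pr i := by
    intro S
    rw [holdsdef]
    simp only [Finset.mem_insert, Finset.mem_image, Finset.mem_range]
    constructor
    · rintro (h | h | ⟨i, hi, h⟩)
      · exact Or.inl h
      · exact Or.inr (Or.inl h)
      · exact Or.inr (Or.inr ⟨i, hi, h.symm⟩)
    · rintro (h | h | ⟨i, hi, h⟩)
      · exact Or.inl h
      · exact Or.inr (Or.inl h)
      · exact Or.inr (Or.inr ⟨i, hi, h.symm⟩)
  have hnews_iff : ∀ S, S ∈ news ↔ S = A.erase (w 0) ∨ S = A'.erase (w (2*k+1)) ∨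
      ∃ i, i ≤ k ∧ S = npr i := by
    intro S
    rw [hnewsdef]
    simp only [Finset.mem_insert, Finset.mem_image, Finset.mem_range]
    constructor
    · rintro (h | h | ⟨i, hi, h⟩)
      · exact Or.inl h
      · exact Or.inr (Or.inl h)
      · exact Or.inr (Or.inr ⟨i, by omega, h.symm⟩)
    · rintro (h | h | ⟨i, hi, h⟩)
      · exact Or.inl h
      · exact Or.inr (Or.inl h)
      · exact Or.inr (Or.inr ⟨i, by omega, h.symm⟩)
  have holdsP : ∀ S, S ∈ olds → S ∈ P := by
    intro S hS
    rcases (holds_iff S).mp hS with h | h | ⟨i, hi, h⟩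
    · rw [h]; exact hAP
    · rw [h]; exact hA'P
    · rw [h]; exact hpairs i hi
  -- which parts the path vertices lie in
  have hpw : ∀ j, j ≤ 2*k+1 → part (w j) ∈ olds := by
    intro j hj
    rcases Nat.eq_zero_or_pos j with h0 | h0
    · subst h0; rw [holds_iff]; exact Or.inl rfl
    rcases Nat.eq_or_lt_of_le hj with hlast | hmid
    · rw [holds_iff]; exact Or.inr (Or.inl (by rw [wcongr hlast]))
    · rw [holds_iff]
      refine Or.inr (Or.inr ?_)
      rcases Nat.even_or_odd j with ⟨i, hij⟩ | ⟨i, hij⟩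
      · refine ⟨i-1, by omega, ?_⟩
        rw [wcongr (show j = 2*(i-1)+2 from by omega)]
        exact hparteven (i-1) (by omega)
      · refine ⟨i, by omega, ?_⟩
        rw [wcongr hij]
        exact hpartodd i (by omega)
  have hjA : ∀ j, j ≤ 2*k+1 → part (w j) = A → j = 0 := by
    intro j hj hpj
    by_contra hne0
    rcases Nat.eq_or_lt_of_le hj with hlast | hmid
    · exact hAA' (by rw [hA'def, ← wcongr hlast, hpj])
    · have := hcardmid j (by omega) (by omega)
      rw [hpj] at this
      omega
  have hjA' : ∀ j, j ≤ 2*k+1 → part (w j) = A' → j = 2*k+1 := by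
    intro j hj hpj
    by_contra hne0
    rcases Nat.eq_zero_or_pos j with h0 | h0
    · subst h0; exact hAA' hpj
    · have := hcardmid j (by omega) (by omega)
      rw [hpj] at this
      omega
  have hnprmem : ∀ v i, i ≤ k → v ∈ npr i → v = w (2*i) ∨ v = w (2*i+1) := by
    intro v i hi hv
    rw [hnprdef] at hv
    simp only [Finset.mem_insert, Finset.mem_singleton] at hv
    exact hv
  have hprmem : ∀ v i, i < k → v ∈ pr i → v = w (2*i+1) ∨ v = w (2*i+2) := by
    intro v i hi hv
    rw [hprdef] at hv
    simp only [Finset.mem_insert, Finset.mem_singleton] at hv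
    exact hv
  -- Q is a partition
  have hQex : ∀ v : V, ∃! S : Finset V, S ∈ Q ∧ v ∈ S := by
    intro v
    by_cases hvpath : ∃ j, j ≤ 2*k+1 ∧ v = w j
    · obtain ⟨j, hj, hvj⟩ := hvpath
      have hj2 : j/2 ≤ k := by omega
      have hjalt : j = 2*(j/2) ∨ j = 2*(j/2)+1 := by omega
      have hvin : v ∈ npr (j/2) := by
        rw [hnprdef]
        beta_reduce
        rcases hjalt with h | h
        · rw [hvj, wcongr h]; simp
        · rw [hvj, wcongr h]; simp
      refine ⟨npr (j/2), ⟨?_, hvin⟩, ?_⟩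
      · rw [hQdef]
        refine Finset.mem_union_right _ ?_
        rw [hnews_iff]
        exact Or.inr (Or.inr ⟨j/2, hj2, rfl⟩)
      · rintro T ⟨hTQ, hvT⟩
        rw [hQdef, Finset.mem_union] at hTQ
        rcases hTQ with hTP | hTn
        · exfalso
          rw [Finset.mem_sdiff] at hTP
          have hTeq : T = part v := huniq v T hTP.1 hvT
          apply hTP.2
          rw [hTeq, hvj]
          exact hpw j hj
        · rcases (hnews_iff T).mp hTn with hT | hT | ⟨i, hi, hT⟩
          · exfalso
            rw [hT] at hvT
            have hvA : v ∈ A := Finset.mem_of_mem_erase hvT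
            have hpv : part v = A := (huniq v A hAP hvA).symm
            rw [hvj] at hpv
            have := hjA j hj hpv
            subst this
            exact (Finset.ne_of_mem_erase hvT) hvj
          · exfalso
            rw [hT] at hvT
            have hvA : v ∈ A' := Finset.mem_of_mem_erase hvT
            have hpv : part v = A' := (huniq v A' hA'P hvA).symm
            rw [hvj] at hpv
            have := hjA' j hj hpv
            subst this
            exact (Finset.ne_of_mem_erase hvT) hvj
          · rw [hT]
            have := hnprmem v i hi (by rw [← hT]; exact hvT)
            rcases this with h | h
            · rw [hvj] at h
              have := winj hj (by omega) h
              have : j/2 = i := by omega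
              rw [this]
            · rw [hvj] at h
              have := winj hj (by omega) h
              have : j/2 = i := by omega
              rw [this]
    · push_neg at hvpath
      by_cases hvA : v ∈ A
      · refine ⟨A.erase (w 0), ⟨?_, ?_⟩, ?_⟩
        · rw [hQdef]
          refine Finset.mem_union_right _ ?_
          rw [hnews_iff]
          exact Or.inl rfl
        · exact Finset.mem_erase.mpr ⟨hvpath 0 (by omega), hvA⟩
        · rintro T ⟨hTQ, hvT⟩
          rw [hQdef, Finset.mem_union] at hTQ
          have hpv : part v = A := (huniq v A hAP hvA).symm
          rcases hTQ with hTP | hTn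
          · exfalso
            rw [Finset.mem_sdiff] at hTP
            have hTeq : T = part v := huniq v T hTP.1 hvT
            exact hTP.2 (by rw [hTeq, hpv]; exact (holds_iff A).mpr (Or.inl rfl))
          · rcases (hnews_iff T).mp hTn with hT | hT | ⟨i, hi, hT⟩
            · rw [hT]
            · exfalso
              rw [hT] at hvT
              have hvA' : v ∈ A' := Finset.mem_of_mem_erase hvT
              have hpv' : part v = A' := (huniq v A' hA'P hvA').symm
              exact hAA' (by rw [← hpv, ← hpv'])
            · exfalso
              have := hnprmem v i hi (by rw [← hT]; exact hvT)
              rcases this with h | h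
              · exact hvpath (2*i) (by omega) h
              · exact hvpath (2*i+1) (by omega) h
      · by_cases hvA' : v ∈ A'
        · refine ⟨A'.erase (w (2*k+1)), ⟨?_, ?_⟩, ?_⟩
          · rw [hQdef]
            refine Finset.mem_union_right _ ?_
            rw [hnews_iff]
            exact Or.inr (Or.inl rfl)
          · exact Finset.mem_erase.mpr ⟨hvpath (2*k+1) (by omega), hvA'⟩
          · rintro T ⟨hTQ, hvT⟩
            rw [hQdef, Finset.mem_union] at hTQ
            have hpv : part v = A' := (huniq v A' hA'P hvA').symm
            rcases hTQ with hTP | hTn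
            · exfalso
              rw [Finset.mem_sdiff] at hTP
              have hTeq : T = part v := huniq v T hTP.1 hvT
              exact hTP.2 (by rw [hTeq, hpv]; exact (holds_iff A').mpr (Or.inr (Or.inl rfl)))
            · rcases (hnews_iff T).mp hTn with hT | hT | ⟨i, hi, hT⟩
              · exfalso
                rw [hT] at hvT
                exact hvA (Finset.mem_of_mem_erase hvT)
              · rw [hT]
              · exfalso
                have := hnprmem v i hi (by rw [← hT]; exact hvT)
                rcases this with h | h
                · exact hvpath (2*i) (by omega) h
                · exact hvpath (2*i+1) (by omega) h
        · -- v is in no old part touched by the chain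
          have hpvolds : part v ∉ olds := by
            intro hmem
            rcases (holds_iff (part v)).mp hmem with h | h | ⟨i, hi, h⟩
            · exact hvA (by rw [← h]; exact (hPmem v).2)
            · exact hvA' (by rw [← h]; exact (hPmem v).2)
            · have := hprmem v i hi (by rw [← h]; exact (hPmem v).2)
              rcases this with h' | h'
              · exact hvpath (2*i+1) (by omega) h'
              · exact hvpath (2*i+2) (by omega) h'
          refine ⟨part v, ⟨?_, (hPmem v).2⟩, ?_⟩
          · rw [hQdef]
            exact Finset.mem_union_left _ (Finset.mem_sdiff.mpr ⟨(hPmem v).1, hpvolds⟩)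
          · rintro T ⟨hTQ, hvT⟩
            rw [hQdef, Finset.mem_union] at hTQ
            rcases hTQ with hTP | hTn
            · rw [Finset.mem_sdiff] at hTP
              exact huniq v T hTP.1 hvT
            · exfalso
              rcases (hnews_iff T).mp hTn with hT | hT | ⟨i, hi, hT⟩
              · rw [hT] at hvT
                exact hvA (Finset.mem_of_mem_erase hvT)
              · rw [hT] at hvT
                exact hvA' (Finset.mem_of_mem_erase hvT)
              · have := hnprmem v i hi (by rw [← hT]; exact hvT)
                rcases this with h | h
                · exact hvpath (2*i) (by omega) h
                · exact hvpath (2*i+1) (by omega) h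
  -- cards and stars of Q
  have hw0A : w 0 ∈ A := (hPmem (w 0)).2
  have hwlA' : w (2*k+1) ∈ A' := (hPmem (w (2*k+1))).2
  have hQ2 : ∀ S ∈ Q, 2 ≤ S.card := by
    intro S hS
    rw [hQdef, Finset.mem_union] at hS
    rcases hS with h | h
    · exact hP2 S (Finset.mem_sdiff.mp h).1
    · rcases (hnews_iff S).mp h with h | h | ⟨i, hi, h⟩
      · rw [h, Finset.card_erase_of_mem hw0A]
        omega
      · rw [h, Finset.card_erase_of_mem hwlA']
        omega
      · rw [h, hnprcard i hi]
  have hQstar : ∀ S ∈ Q, ∃ c ∈ S, ∀ v ∈ S, v ≠ c → G.Adj c v := by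
    intro S hS
    rw [hQdef, Finset.mem_union] at hS
    rcases hS with h | h
    · obtain ⟨h1, h2⟩ := hctr S (Finset.mem_sdiff.mp h).1
      exact ⟨ctr S, h1, h2⟩
    · rcases (hnews_iff S).mp h with h | h | ⟨i, hi, h⟩
      · refine ⟨ctr A, ?_, ?_⟩
        · rw [h, Finset.mem_erase]
          exact ⟨fun hh => hb0.2 hh.symm, (hctr A hAP).1⟩
        · intro v hv hvne
          rw [h] at hv
          exact (hctr A hAP).2 v (Finset.mem_of_mem_erase hv) hvne
      · refine ⟨ctr A', ?_, ?_⟩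
        · rw [h, Finset.mem_erase]
          exact ⟨fun hh => hend.2 hh.symm, (hctr A' hA'P).1⟩
        · intro v hv hvne
          rw [h] at hv
          exact (hctr A' hA'P).2 v (Finset.mem_of_mem_erase hv) hvne
      · refine ⟨w (2*i), ?_, ?_⟩
        · rw [h, hnprdef]; simp
        · intro v hv hvne
          have := hnprmem v i hi (by rw [← h]; exact hv)
          rcases this with h' | h'
          · exact absurd h' hvne
          · rw [h']
            exact (hcross i hi).1
  have hQstarPart : IsStarPartition G Q := ⟨hQex, hQ2, hQstar⟩
  -- counting
  set b := max A.card A'.card with hbdef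
  have hb3 : 3 ≤ b := le_trans hA3 (le_max_left _ _)
  set t := b - 1 with htdef
  have ht1 : t + 1 = b := by omega
  have hsub : ∀ j, t ≤ j →
      Q.filter (fun S => S.card = j+1) ⊆ P.filter (fun S => S.card = j+1) := by
    intro j hj S hS
    rw [Finset.mem_filter] at hS
    obtain ⟨hSQ, hScard⟩ := hS
    rw [hQdef, Finset.mem_union] at hSQ
    rcases hSQ with h | h
    · exact Finset.mem_filter.mpr ⟨(Finset.mem_sdiff.mp h).1, hScard⟩
    · exfalso
      rcases (hnews_iff S).mp h with h | h | ⟨i, hi, h⟩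
      · rw [h, Finset.card_erase_of_mem hw0A] at hScard
        have : A.card ≤ b := le_max_left _ _
        omega
      · rw [h, Finset.card_erase_of_mem hwlA'] at hScard
        have : A'.card ≤ b := le_max_right _ _
        omega
      · rw [h, hnprcard i hi] at hScard
        omega
  have hsup : ∀ j, t < j →
      P.filter (fun S => S.card = j+1) ⊆ Q.filter (fun S => S.card = j+1) := by
    intro j hj S hS
    rw [Finset.mem_filter] at hS
    obtain ⟨hSP, hScard⟩ := hS
    refine Finset.mem_filter.mpr ⟨?_, hScard⟩
    rw [hQdef, Finset.mem_union]
    left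
    rw [Finset.mem_sdiff]
    refine ⟨hSP, ?_⟩
    intro hSolds
    rcases (holds_iff S).mp hSolds with h | h | ⟨i, hi, h⟩
    · rw [h] at hScard
      have : A.card ≤ b := le_max_left _ _
      omega
    · rw [h] at hScard
      have : A'.card ≤ b := le_max_right _ _
      omega
    · rw [h, hprcard i hi] at hScard
      omega
  have heqcounts : ∀ j, t < j → starCounts Q j = starCounts P j := by
    intro j hj
    show (Q.filter (fun S => S.card = j+1)).card = (P.filter (fun S => S.card = j+1)).card
    rw [Finset.Subset.antisymm (hsub j (le_of_lt hj)) (hsup j hj)]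
  -- the strict inequality at t
  have hAA'notQ : ∀ S0, (S0 = A ∨ S0 = A') → S0 ∉ Q := by
    intro S0 hS0 hS0Q
    have hS0olds : S0 ∈ olds := by
      rcases hS0 with h | h
      · exact (holds_iff S0).mpr (Or.inl h)
      · exact (holds_iff S0).mpr (Or.inr (Or.inl h))
    rw [hQdef, Finset.mem_union] at hS0Q
    rcases hS0Q with hh | hh
    · exact (Finset.mem_sdiff.mp hh).2 hS0olds
    · rcases (hnews_iff S0).mp hh with h' | h' | ⟨i, hi, h'⟩
      · rcases hS0 with h | h
        · rw [h] at h'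
          have : w 0 ∈ A.erase (w 0) := by rw [← h']; exact hw0A
          simp at this
        · rw [h] at h'
          have hc1 : ctr A' ∈ A' := (hctr A' hA'P).1
          have hc2 : ctr A' ∈ A := Finset.mem_of_mem_erase (by rw [← h']; exact hc1)
          have e1 : A' = part (ctr A') := huniq _ _ hA'P hc1
          have e2 : A = part (ctr A') := huniq _ _ hAP hc2
          exact hAA' (e2.trans e1.symm)
      · rcases hS0 with h | h
        · rw [h] at h'
          have hc1 : ctr A ∈ A := (hctr A hAP).1
          have hc2 : ctr A ∈ A' := Finset.mem_of_mem_erase (by rw [← h']; exact hc1)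
          have e1 : A = part (ctr A) := huniq _ _ hAP hc1
          have e2 : A' = part (ctr A) := huniq _ _ hA'P hc2
          exact hAA' (e1.trans e2.symm)
        · rw [h] at h'
          have : w (2*k+1) ∈ A'.erase (w (2*k+1)) := by rw [← h']; exact hwlA'
          simp at this
      · rcases hS0 with h | h
        · have := hnprcard i hi
          rw [← h', h] at this
          omega
        · have := hnprcard i hi
          rw [← h', h] at this
          omega
  have hlt : starCounts Q t < starCounts P t := by
    show (Q.filter (fun S => S.card = t+1)).card < (P.filter (fun S => S.card = t+1)).card
    apply Finset.card_lt_card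
    rw [Finset.ssubset_iff_of_subset (hsub t le_rfl)]
    rcases max_choice A.card A'.card with hmc | hmc
    · refine ⟨A, Finset.mem_filter.mpr ⟨hAP, by omega⟩, ?_⟩
      intro hmem
      exact hAA'notQ A (Or.inl rfl) (Finset.mem_filter.mp hmem).1
    · refine ⟨A', Finset.mem_filter.mpr ⟨hA'P, by omega⟩, ?_⟩
      intro hmem
      exact hAA'notQ A' (Or.inr rfl) (Finset.mem_filter.mp hmem).1
  exact ⟨Q, hQstarPart, t, by omega, hlt, heqcounts⟩

lemma cover_of_no_conflict [Fintype V] (hc : G.Connected) (hac : G.IsAcyclic)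
    (hPmem : ∀ v : V, part v ∈ P ∧ v ∈ part v)
    (huniq : ∀ (v : V) (S : Finset V), S ∈ P → v ∈ S → S = part v)
    (hctr : ∀ S ∈ P, ctr S ∈ S ∧ ∀ v ∈ S, v ≠ ctr S → G.Adj (ctr S) v)
    (hP2 : ∀ S ∈ P, 2 ≤ S.card)
    (hnc : ¬ Conflict G P part ctr) :
    ∃ C : Finset V, C.card ≤ P.card ∧ ∀ e ∈ G.edgeSet, ∃ v ∈ C, v ∈ e := by
  classical
  haveI : Nonempty V := hc.nonempty
  set r := Classical.arbitrary V with hrdef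
  set pick : Finset V → V := fun S =>
    if 3 ≤ S.card then ctr S
    else if hf : ∃ x ∈ S, Forced G P part ctr x then hf.choose
    else if hm : ∃ x ∈ S, ∀ y ∈ S, G.dist r x ≤ G.dist r y then hm.choose else ctr S
    with hpickdef
  have pick_mem : ∀ S, S ∈ P → pick S ∈ S := by
    intro S hS
    rw [hpickdef]
    beta_reduce
    split_ifs with h1 h2 h3
    · exact (hctr S hS).1
    · exact h2.choose_spec.1
    · exact h3.choose_spec.1
    · exact (hctr S hS).1
  have pick_big : ∀ S, S ∈ P → 3 ≤ S.card → pick S = ctr S := by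
    intro S hS h3
    rw [hpickdef]
    beta_reduce
    rw [if_pos h3]
  have pick_forced : ∀ S, S ∈ P → ¬ (3 ≤ S.card) →
      (hf : ∃ x ∈ S, Forced G P part ctr x) →
      pick S ∈ S ∧ Forced G P part ctr (pick S) := by
    intro S hS h3 hf
    rw [hpickdef]
    beta_reduce
    rw [if_neg h3, dif_pos hf]
    exact hf.choose_spec
  have pick_min : ∀ S, S ∈ P → ¬ (3 ≤ S.card) →
      ¬ (∃ x ∈ S, Forced G P part ctr x) →
      ∀ y ∈ S, G.dist r (pick S) ≤ G.dist r y := by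
    intro S hS h3 hnf
    have hSne : S.Nonempty := Finset.card_pos.mp (by have := hP2 S hS; omega)
    have hm : ∃ x ∈ S, ∀ y ∈ S, G.dist r x ≤ G.dist r y :=
      Finset.exists_min_image S (fun x => G.dist r x) hSne
    rw [hpickdef]
    beta_reduce
    rw [if_neg h3, dif_neg hnf, dif_pos hm]
    exact hm.choose_spec.2
  have hcard2 : ∀ x : V, (part x).card = 2 → ∃ y, y ≠ x ∧ part x = {x, y} ∧ G.Adj x y := by
    intro x h2
    obtain ⟨a, b, hab, hexp⟩ := Finset.card_eq_two.mp h2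
    have hx : x ∈ part x := (hPmem x).2
    rw [hexp] at hx
    simp only [Finset.mem_insert, Finset.mem_singleton] at hx
    rcases hx with rfl | rfl
    · refine ⟨b, hab.symm, hexp, ?_⟩
      exact pair_adj hctr (by rw [← hexp]; exact (hPmem x).1) hab
    · refine ⟨a, hab, by rw [hexp, Finset.pair_comm], ?_⟩
      exact (pair_adj hctr (by rw [← hexp]; exact (hPmem x).1) hab).symm
  refine ⟨P.image pick, Finset.card_image_le, ?_⟩
  intro e he
  induction e using Sym2.ind with
  | _ u v =>
  rw [SimpleGraph.mem_edgeSet] at he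
  by_contra hcon
  push_neg at hcon
  have hpu : pick (part u) ≠ u := by
    intro h
    refine hcon u ?_ (by simp)
    rw [← h]
    exact Finset.mem_image_of_mem pick (hPmem u).1
  have hpv : pick (part v) ≠ v := by
    intro h
    refine hcon v ?_ (by simp)
    rw [← h]
    exact Finset.mem_image_of_mem pick (hPmem v).1
  have status : ∀ x : V, pick (part x) ≠ x →
      (3 ≤ (part x).card ∧ x ≠ ctr (part x)) ∨ (part x).card = 2 := by
    intro x hx
    by_cases h3 : 3 ≤ (part x).card
    · refine Or.inl ⟨h3, ?_⟩
      intro heq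
      apply hx
      rw [pick_big _ (hPmem x).1 h3, ← heq]
    · right
      have := hP2 _ (hPmem x).1
      omega
  by_cases hsame : part u = part v
  · -- internal edge
    rcases status u hpu with ⟨h3, hne⟩ | h2
    · have hpv' : v ≠ ctr (part u) := by
        intro heq
        apply hpv
        rw [← hsame, pick_big _ (hPmem u).1 h3]
        exact heq.symm
      have hadjcu : G.Adj (ctr (part u)) u := (hctr _ (hPmem u).1).2 u (hPmem u).2 hne
      have hadjcv : G.Adj (ctr (part u)) v :=
        (hctr _ (hPmem u).1).2 v (by rw [hsame]; exact (hPmem v).2) hpv'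
      exact noTriangle hac hadjcu he hadjcv
    · obtain ⟨y, hyne, hyexp, _⟩ := hcard2 u h2
      have hv : v ∈ part u := by rw [hsame]; exact (hPmem v).2
      rw [hyexp] at hv
      simp only [Finset.mem_insert, Finset.mem_singleton] at hv
      rcases hv with h | h
      · exact he.ne h.symm
      · have hp0 := pick_mem _ (hPmem u).1
        have hp : pick (part u) ∈ ({u, y} : Finset V) := by rw [← hyexp]; exact hp0
        simp only [Finset.mem_insert, Finset.mem_singleton] at hp
        rcases hp with hp | hp
        · exact hpu hp
        · apply hpv
          rw [← hsame, hp]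
          exact h.symm
  · -- cross edge
    have forced_branch : ∀ x : V, (part x).card = 2 → pick (part x) ≠ x →
        Forced G P part ctr x → False := by
      intro x h2 hpx hfx
      have hf : ∃ z ∈ part x, Forced G P part ctr z := ⟨x, (hPmem x).2, hfx⟩
      obtain ⟨hzmem, hzf⟩ := pick_forced _ (hPmem x).1 (by omega) hf
      obtain ⟨y, hyne, hyexp, hyadj⟩ := hcard2 x h2
      have hpy : pick (part x) = y := by
        have hz : pick (part x) ∈ ({x, y} : Finset V) := by rw [← hyexp]; exact hzmem
        simp only [Finset.mem_insert, Finset.mem_singleton] at hz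
        rcases hz with h | h
        · exact absurd h hpx
        · exact h
      have hpairP : ({x, y} : Finset V) ∈ P := by rw [← hyexp]; exact (hPmem x).1
      exact hnc (conflict_of_forced_forced hpairP hfx (by rw [← hpy]; exact hzf))
    rcases status u hpu with ⟨hu3, hune⟩ | hu2
    · rcases status v hpv with ⟨hv3, hvne⟩ | hv2
      · exact hnc (conflict_base ⟨hu3, hune⟩ ⟨hv3, hvne⟩ he hsame)
      · exact forced_branch v hv2 hpv (forced_base ⟨hu3, hune⟩ he hsame)
    · rcases status v hpv with ⟨hv3, hvne⟩ | hv2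
      · exact forced_branch u hu2 hpu (forced_base ⟨hv3, hvne⟩ he.symm (Ne.symm hsame))
      · -- both in 2-element parts
        by_cases hfu : ∃ z ∈ part u, Forced G P part ctr z
        · obtain ⟨hzmem, hzf⟩ := pick_forced _ (hPmem u).1 (by omega) hfu
          obtain ⟨y, hyne, hyexp, hyadj⟩ := hcard2 u hu2
          have hpy : pick (part u) = y := by
            have hz : pick (part u) ∈ ({u, y} : Finset V) := by rw [← hyexp]; exact hzmem
            simp only [Finset.mem_insert, Finset.mem_singleton] at hz
            rcases hz with h | h
            · exact absurd h hpu
            · exact h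
          have hpair : ({y, u} : Finset V) ∈ P := by
            rw [Finset.pair_comm, ← hyexp]
            exact (hPmem u).1
          have hfv : Forced G P part ctr v :=
            forced_step (by rw [← hpy]; exact hzf) hpair he hsame
          exact forced_branch v hv2 hpv hfv
        · by_cases hfv : ∃ z ∈ part v, Forced G P part ctr z
          · obtain ⟨hzmem, hzf⟩ := pick_forced _ (hPmem v).1 (by omega) hfv
            obtain ⟨y, hyne, hyexp, hyadj⟩ := hcard2 v hv2
            have hpy : pick (part v) = y := by
              have hz : pick (part v) ∈ ({v, y} : Finset V) := by rw [← hyexp]; exact hzmem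
              simp only [Finset.mem_insert, Finset.mem_singleton] at hz
              rcases hz with h | h
              · exact absurd h hpv
              · exact h
            have hpair : ({y, v} : Finset V) ∈ P := by
              rw [Finset.pair_comm, ← hyexp]
              exact (hPmem v).1
            have hfu' : Forced G P part ctr u :=
              forced_step (by rw [← hpy]; exact hzf) hpair he.symm (Ne.symm hsame)
            exact hfu ⟨u, (hPmem u).2, hfu'⟩
          · -- both minimal-distance branches
            have hmu := pick_min _ (hPmem u).1 (by omega) hfu
            have hmv := pick_min _ (hPmem v).1 (by omega) hfv
            obtain ⟨yu, hyune, hyuexp, hyuadj⟩ := hcard2 u hu2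
            obtain ⟨yv, hyvne, hyvexp, hyvadj⟩ := hcard2 v hv2
            have hpicku : pick (part u) = yu := by
              have hp0 := pick_mem _ (hPmem u).1
              have hp : pick (part u) ∈ ({u, yu} : Finset V) := by rw [← hyuexp]; exact hp0
              simp only [Finset.mem_insert, Finset.mem_singleton] at hp
              rcases hp with h | h
              · exact absurd h hpu
              · exact h
            have hpickv : pick (part v) = yv := by
              have hp0 := pick_mem _ (hPmem v).1
              have hp : pick (part v) ∈ ({v, yv} : Finset V) := by rw [← hyvexp]; exact hp0
              simp only [Finset.mem_insert, Finset.mem_singleton] at hp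
              rcases hp with h | h
              · exact absurd h hpv
              · exact h
            have hduyu : G.dist r yu ≤ G.dist r u := by
              have := hmu u (hPmem u).2
              rw [hpicku] at this
              exact this
            have hdvyv : G.dist r yv ≤ G.dist r v := by
              have := hmv v (hPmem v).2
              rw [hpickv] at this
              exact this
            have hyu_ne_v : yu ≠ v := by
              intro h
              apply hsame
              have h1 : yu ∈ part u := by rw [hyuexp]; simp
              have h2 : part yu = part u := (huniq yu _ (hPmem u).1 h1).symm
              rw [← h2, h]
            have hyv_ne_u : yv ≠ u := by
              intro h
              apply hsame
              have h1 : yv ∈ part v := by rw [hyvexp]; simp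
              have h2 : part yv = part v := (huniq yv _ (hPmem v).1 h1).symm
              rw [← h2, h]
            rcases adj_dist hc hac r he with hcase | hcase
            · have hdy : G.dist r yv + 1 = G.dist r v := by
                rcases adj_dist hc hac r hyvadj with h | h
                · omega
                · exact h
              exact two_parents hc hac he hyvadj.symm hyv_ne_u.symm hcase hdy
            · have hdy : G.dist r yu + 1 = G.dist r u := by
                rcases adj_dist hc hac r hyuadj with h | h
                · omega
                · exact h
              exact two_parents hc hac he.symm hyuadj.symm hyu_ne_v.symm hcase hdy

/-- From a star partition extract a matching of the same size. -/
lemma easy_dir [Fintype V] {G : SimpleGraph V} {P : Finset (Finset V)}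
    (hP : IsStarPartition G P) :
    ∃ M : Finset (Sym2 V), IsMatchingSet G M ∧ M.card = P.card := by
  classical
  obtain ⟨hex, h2P, hstarP⟩ := hP
  rcases isEmpty_or_nonempty V with hV | hV
  · have hPempty : P = ∅ := by
      rw [Finset.eq_empty_iff_forall_notMem]
      intro S hS
      have := h2P S hS
      have : S.Nonempty := Finset.card_pos.mp (by omega)
      exact hV.elim this.choose
    refine ⟨∅, ⟨?_, ?_⟩, ?_⟩ <;> simp [hPempty]
  choose! c hc1 hc2 using hstarP
  have hleaf : ∀ S, S ∈ P → ∃ x, x ∈ S ∧ x ≠ c S := by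
    intro S hS
    obtain ⟨x, hx, hxne⟩ := Finset.exists_mem_ne (s := S)
      (by have := h2P S hS; omega) (c S)
    exact ⟨x, hx, hxne⟩
  choose! l hl1 hl2 using hleaf
  have hupart : ∀ (v : V) (S T : Finset V), S ∈ P → T ∈ P → v ∈ S → v ∈ T → S = T := by
    intro v S T hS hT hvS hvT
    obtain ⟨U, _, hU⟩ := hex v
    rw [hU S ⟨hS, hvS⟩, hU T ⟨hT, hvT⟩]
  have hedge : ∀ S, S ∈ P → G.Adj (c S) (l S) :=
    fun S hS => hc2 S hS (l S) (hl1 S hS) (hl2 S hS)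
  have hinj : Set.InjOn (fun S => s(c S, l S)) P := by
    intro S hS T hT hST
    simp only [Sym2.eq_iff] at hST
    have hcS : c S ∈ T := by
      rcases hST with ⟨h1, _⟩ | ⟨h1, _⟩
      · rw [h1]; exact hc1 T hT
      · rw [h1]; exact hl1 T hT
    exact hupart (c S) S T hS hT (hc1 S hS) hcS
  refine ⟨P.image (fun S => s(c S, l S)), ⟨?_, ?_⟩, ?_⟩
  · intro e he
    rw [Finset.mem_image] at he
    obtain ⟨S, hS, rfl⟩ := he
    exact (hedge S hS)
  · intro e he f hf hef v hve hvf
    rw [Finset.mem_image] at he hf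
    obtain ⟨S, hS, rfl⟩ := he
    obtain ⟨T, hT, rfl⟩ := hf
    apply hef
    have hvS : v ∈ S := by
      rw [Sym2.mem_iff] at hve
      rcases hve with h | h
      · rw [h]; exact hc1 S hS
      · rw [h]; exact hl1 S hS
    have hvT : v ∈ T := by
      rw [Sym2.mem_iff] at hvf
      rcases hvf with h | h
      · rw [h]; exact hc1 T hT
      · rw [h]; exact hl1 T hT
    rw [hupart v S T hS hT hvS hvT]
  · exact Finset.card_image_of_injOn hinj

/-- A matching is at most as large as any vertex cover. -/
lemma matching_le_cover [Fintype V] {G : SimpleGraph V} {M : Finset (Sym2 V)}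
    (hM : IsMatchingSet G M) {C : Finset V}
    (hC : ∀ e ∈ G.edgeSet, ∃ v ∈ C, v ∈ e) : M.card ≤ C.card := by
  classical
  rcases isEmpty_or_nonempty V with hV | hV
  · have hMe : M = ∅ := by
      rw [Finset.eq_empty_iff_forall_notMem]
      intro e he
      induction e using Sym2.ind with
      | _ x y => exact hV.elim x
    simp [hMe]
  have hch : ∀ e, e ∈ M → ∃ v, v ∈ C ∧ v ∈ e := by
    intro e he
    obtain ⟨v, hv1, hv2⟩ := hC e (hM.1 e he)
    exact ⟨v, hv1, hv2⟩
  choose! f hf1 hf2 using hch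
  apply Finset.card_le_card_of_injOn f (fun e he => hf1 e he)
  intro e he u hu hef
  by_contra hne
  exact hM.2 e he u hu hne (f e) (hf2 e he) (by rw [hef]; exact hf2 u hu)

end Chains

end StarAux

/-- In a finite tree with at least two vertices, every
lexicographically optimal star partition has exactly `ν(T)` parts. -/
theorem stmt7 {V : Type*} [Fintype V] [DecidableEq V] (G : SimpleGraph V)
    (htree : G.IsTree) (h2 : 2 ≤ Fintype.card V)
    (P : Finset (Finset V)) (hP : IsStarPartition G P)
    (hopt : ∀ Q : Finset (Finset V), IsStarPartition G Q →
      LexLE (starCounts P) (starCounts Q)) :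
    P.card = matchingNumber G := by
  classical
  have hc : G.Connected := htree.1
  have hac : G.IsAcyclic := htree.2
  have h2P := hP.2.1
  -- choice functions for parts and centers
  choose part hpart using hP.1
  have hPmem : ∀ v : V, part v ∈ P ∧ v ∈ part v := fun v => (hpart v).1
  have huniq : ∀ (v : V) (S : Finset V), S ∈ P → v ∈ S → S = part v :=
    fun v S hS hv => (hpart v).2 S ⟨hS, hv⟩
  haveI : Nonempty V := hc.nonempty
  choose! ctr hctr1 hctr2 using hP.2.2
  have hctr : ∀ S ∈ P, ctr S ∈ S ∧ ∀ v ∈ S, v ≠ ctr S → G.Adj (ctr S) v :=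
    fun S hS => ⟨hctr1 S hS, hctr2 S hS⟩
  -- the set of matching sizes
  have hbdd : BddAbove {n : ℕ | ∃ M : Finset (Sym2 V), IsMatchingSet G M ∧ M.card = n} := by
    refine ⟨Fintype.card (Sym2 V), ?_⟩
    rintro n ⟨M, _, rfl⟩
    exact Finset.card_le_univ M
  have hnonempty : {n : ℕ | ∃ M : Finset (Sym2 V), IsMatchingSet G M ∧ M.card = n}.Nonempty := by
    refine ⟨0, ∅, ⟨?_, ?_⟩, rfl⟩
    · intro e he; simp at he
    · intro e he; simp at he
  -- easy direction
  obtain ⟨M0, hM0, hM0card⟩ := StarAux.easy_dir hP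
  have hle : P.card ≤ matchingNumber G := by
    apply le_csSup hbdd
    exact ⟨M0, hM0, hM0card⟩
  -- hard direction
  by_contra hneq
  have hlt : P.card < matchingNumber G := lt_of_le_of_ne hle hneq
  by_cases hconf : StarAux.Conflict G P part ctr
  · obtain ⟨Q, hQsp, t, ht2, hQlt, hQeq⟩ :=
      StarAux.flip hac hPmem huniq hctr h2P hconf
    rcases hopt Q hQsp with heq | ⟨i, hlt', hgt⟩
    · rw [heq] at hQlt
      omega
    · rcases lt_trichotomy i t with h | h | h
      · have := hgt t h
        omega
      · subst h
        omega
      · have := hQeq i h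
        omega
  · obtain ⟨C, hCcard, hCcov⟩ :=
      StarAux.cover_of_no_conflict hc hac hPmem huniq hctr h2P hconf
    obtain ⟨M, hM, hMcard⟩ := Nat.sSup_mem hnonempty hbdd
    have hMC := StarAux.matching_le_cover hM hCcov
    have : matchingNumber G ≤ P.card := by
      show sSup {n : ℕ | ∃ M : Finset (Sym2 V), IsMatchingSet G M ∧ M.card = n} ≤ P.card
      rw [← hMcard]
      exact le_trans hMC hCcard
    omega
end

section
/- Let G be a finite simple graph with at least two vertices and without isolated vertices. Then ⌈ n(G)/ν(G) ⌉ − 1 ≤ σ(G) ≤ Δ(G), where n(G) is the number of vertices, ν(G) the matching number, and Δ(G) the maximum degree of G. -/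
open Finset

namespace SimpleGraph

variable {V : Type*} {G : SimpleGraph V}

def IsStarCenter (G : SimpleGraph V) (S : Finset V) (c : V) : Prop :=
  c ∈ S ∧ ∀ v ∈ S, v ≠ c → G.Adj c v

def IsStar (G : SimpleGraph V) (S : Finset V) : Prop :=
  2 ≤ #S ∧ ∃ c, G.IsStarCenter S c

def IsStarPacking (G : SimpleGraph V) (P : Finset (Finset V)) : Prop :=
  (P : Set (Finset V)).PairwiseDisjoint id ∧ ∀ S ∈ P, G.IsStar S

lemma IsStar.card_le_maxDegree_add_one [Fintype V] [DecidableRel G.Adj] {S : Finset V}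
    (h : G.IsStar S) : #S ≤ G.maxDegree + 1 := by
  classical
  obtain ⟨-, c, hc, hcS⟩ := h
  have hsub : S.erase c ⊆ G.neighborFinset c := fun v hv =>
    (mem_neighborFinset G c v).2 (hcS v (mem_of_mem_erase hv) (ne_of_mem_erase hv))
  calc #S = #(S.erase c) + 1 := (card_erase_add_one hc).symm
    _ ≤ G.degree c + 1 := by grw [card_le_card hsub, card_neighborFinset_eq_degree]
    _ ≤ G.maxDegree + 1 := by grw [G.degree_le_maxDegree c]

lemma IsStar.exists_edge {S : Finset V} (h : G.IsStar S) : ∃ e ∈ G.edgeSet, ∀ v ∈ e, v ∈ S := by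
  obtain ⟨hS, c, hc, hcS⟩ := h
  obtain ⟨v, hv, hvc⟩ := exists_mem_ne hS c
  exact ⟨s(c, v), hcS v hv hvc, by simp [hc, hv]⟩

lemma IsStarPacking.subset {P Q : Finset (Finset V)} (hP : G.IsStarPacking P) (hQ : Q ⊆ P) :
    G.IsStarPacking Q :=
  ⟨hP.1.subset (coe_subset.2 hQ), fun S hS => hP.2 S (hQ hS)⟩

section DecidableEq

variable [DecidableEq V] {S : Finset V} {c u w : V}

lemma isStar_pair (h : G.Adj u w) : G.IsStar {u, w} :=
  ⟨(card_pair h.ne).ge, u, by simp, by simp [h]⟩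

lemma IsStarCenter.insert (h : G.IsStarCenter S c) (hw : G.Adj c w) :
    G.IsStarCenter (insert w S) c :=
  ⟨mem_insert_of_mem h.1, by
    rintro v hv hvc
    rcases mem_insert.1 hv with rfl | hv
    exacts [hw, h.2 v hv hvc]⟩

lemma IsStarCenter.erase (h : G.IsStarCenter S c) (hcu : c ≠ u) :
    G.IsStarCenter (S.erase u) c :=
  ⟨mem_erase.2 ⟨hcu, h.1⟩, fun v hv => h.2 v (mem_of_mem_erase hv)⟩

lemma IsStarCenter.of_card_le_two (h : G.IsStarCenter S c) (hS : #S ≤ 2) (hu : u ∈ S) :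
    G.IsStarCenter S u := by
  refine ⟨hu, fun v hv hvu => ?_⟩
  obtain rfl | huc := eq_or_ne u c
  · exact h.2 v hv hvu
  have hSeq : S = {c, u} :=
    (eq_of_subset_of_card_le (by simp [insert_subset_iff, h.1, hu]) (by
      rw [card_pair huc.symm]; exact hS)).symm
  obtain rfl : v = c := by simpa [hSeq, hvu] using hv
  exact (h.2 u hu huc).symm

lemma IsStarPacking.insert_of_disjoint {P : Finset (Finset V)} {T : Finset V}
    (hP : G.IsStarPacking P) (hT : G.IsStar T) (hdisj : Disjoint T (P.biUnion id)) :
    G.IsStarPacking (insert T P) := by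
  refine ⟨?_, forall_mem_insert _ _ _ |>.2 ⟨hT, hP.2⟩⟩
  rw [coe_insert]
  exact hP.1.insert fun S hS _ => (disjoint_biUnion_right _ _ _).1 hdisj S hS

lemma IsStarPacking.exists_cover_insert {P : Finset (Finset V)} (hP : G.IsStarPacking P)
    (hw : w ∉ P.biUnion id) (hwu : G.Adj w u) :
    ∃ Q, G.IsStarPacking Q ∧ insert w (P.biUnion id) ⊆ Q.biUnion id := by
  by_cases hu : u ∈ P.biUnion id
  swap
  · refine ⟨insert {w, u} P, hP.insert_of_disjoint (isStar_pair hwu) ?_, ?_⟩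
    · simp [disjoint_insert_left, hw, hu]
    · rw [biUnion_insert]
      exact insert_subset_iff.2 ⟨by simp, subset_union_right⟩
  obtain ⟨S, hSP, huS : u ∈ S⟩ := mem_biUnion.1 hu
  set R := P.erase S
  have hR : G.IsStarPacking R := hP.subset (erase_subset S P)
  have hSR : Disjoint S (R.biUnion id) := (disjoint_biUnion_right _ _ _).2 fun T hT =>
    hP.1 hSP (mem_of_mem_erase hT) (ne_of_mem_erase hT).symm
  have hPSR : P.biUnion id = S ∪ R.biUnion id := by rw [← insert_erase hSP, biUnion_insert]; rfl
  rw [hPSR, mem_union, not_or] at hw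
  by_cases hcen : G.IsStarCenter S u
  · refine ⟨insert (insert w S) R, hR.insert_of_disjoint ⟨?_, u, hcen.insert hwu.symm⟩ ?_, ?_⟩
    · exact (hP.2 S hSP).1.trans (card_le_card (subset_insert w S))
    · simpa [disjoint_insert_left, hw.2] using hSR
    · rw [hPSR, biUnion_insert]
      exact insert_subset_iff.2 ⟨by simp, union_subset_union (subset_insert w S) le_rfl⟩
  obtain ⟨hS2, c, hc⟩ := hP.2 S hSP
  have huc : c ≠ u := by rintro rfl; exact hcen hc
  have hS3 : 3 ≤ #S := by
    by_contra! hS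
    exact hcen (hc.of_card_le_two (by omega) huS)
  have hSu : G.IsStar (S.erase u) :=
    ⟨by rw [card_erase_of_mem huS]; omega, c, hc.erase huc⟩
  have hSuR : G.IsStarPacking (insert (S.erase u) R) :=
    hR.insert_of_disjoint hSu (hSR.mono_left (erase_subset u S))
  refine ⟨insert {w, u} (insert (S.erase u) R), hSuR.insert_of_disjoint (isStar_pair hwu) ?_, ?_⟩
  · have : u ∉ R.biUnion id := fun h => Finset.disjoint_left.1 hSR huS h
    simp [biUnion_insert, disjoint_insert_left, hw.1, hw.2, this]
  · rw [hPSR, biUnion_insert, biUnion_insert]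
    intro v hv
    simp only [mem_insert, mem_union, id, mem_erase, mem_singleton] at hv ⊢
    grind

lemma exists_isStarPacking_cover (hG : ∀ v, ∃ u, G.Adj v u) (A : Finset V) :
    ∃ P, G.IsStarPacking P ∧ A ⊆ P.biUnion id := by
  induction A using Finset.induction_on with
  | empty => exact ⟨∅, ⟨by simp, by simp⟩, empty_subset _⟩
  | insert w A _ ih =>
    obtain ⟨P, hP, hA⟩ := ih
    by_cases hw : w ∈ P.biUnion id
    · exact ⟨P, hP, insert_subset hw hA⟩
    obtain ⟨u, hwu⟩ := hG w
    obtain ⟨Q, hQ, hPQ⟩ := IsStarPacking.exists_cover_insert hP hw hwu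
    exact ⟨Q, hQ, (insert_subset_insert w hA).trans hPQ⟩

lemma isStarPartition_iff [Fintype V] {P : Finset (Finset V)} :
    IsStarPartition G P ↔ G.IsStarPacking P ∧ P.biUnion id = univ := by
  constructor
  · rintro ⟨hcov, hS2, hcen⟩
    refine ⟨⟨?_, fun S hS => ⟨hS2 S hS, hcen S hS⟩⟩, eq_univ_of_forall fun v => ?_⟩
    · intro S hS T hT hST
      exact Finset.disjoint_left.2 fun v hvS hvT => hST ((hcov v).unique ⟨hS, hvS⟩ ⟨hT, hvT⟩)
    · obtain ⟨S, ⟨hS, hvS⟩, -⟩ := hcov v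
      exact mem_biUnion.2 ⟨S, hS, hvS⟩
  · rintro ⟨hP, hcov⟩
    refine ⟨fun v => ?_, fun S hS => (hP.2 S hS).1, fun S hS => (hP.2 S hS).2⟩
    obtain ⟨S, hS, hvS⟩ := mem_biUnion.1 (hcov ▸ mem_univ v)
    exact ⟨S, ⟨hS, hvS⟩, fun T ⟨hT, hvT⟩ => hP.1.elim_finset hT hS v hvT hvS⟩

lemma exists_isStarPartition [Fintype V] (hG : ∀ v, ∃ u, G.Adj v u) :
    ∃ P, IsStarPartition G P := by
  obtain ⟨P, hP, hcov⟩ := exists_isStarPacking_cover hG univ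
  exact ⟨P, isStarPartition_iff.2 ⟨hP, univ_subset_iff.1 hcov⟩⟩

end DecidableEq

lemma card_le_matchingNumber [Finite V] {M : Finset (Sym2 V)} (hM : IsMatchingSet G M) :
    #M ≤ matchingNumber G := by
  have := Fintype.ofFinite V
  refine le_csSup ⟨Fintype.card (Sym2 V), ?_⟩ ⟨M, hM, rfl⟩
  rintro n ⟨N, -, rfl⟩
  exact card_le_univ N

lemma IsStarPacking.card_le_matchingNumber [Finite V] {P : Finset (Finset V)}
    (hP : G.IsStarPacking P) : #P ≤ matchingNumber G := by
  classical
  choose e he heS using fun S : P => (hP.2 S.1 S.2).exists_edge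
  have hpart (S T : P) (v : V) (hvS : v ∈ e S) (hvT : v ∈ e T) : S = T :=
    Subtype.ext (hP.1.elim_finset S.2 T.2 v (heS S v hvS) (heS T v hvT))
  have hinj : Function.Injective e := fun S T hST => by
    induction h : e S using Sym2.ind with
    | h a b => exact hpart S T a (h ▸ Sym2.mem_mk_left a b) (hST ▸ h ▸ Sym2.mem_mk_left a b)
  have hM : IsMatchingSet G (univ.image e) := by
    simp only [IsMatchingSet, mem_image, mem_univ, true_and, forall_exists_index,
      forall_apply_eq_imp_iff]
    refine ⟨he, fun S T hST v hvS hvT => ?_⟩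
    exact hST (congrArg e (hpart S T v hvS hvT))
  simpa [card_image_of_injective _ hinj] using SimpleGraph.card_le_matchingNumber hM

end SimpleGraph

lemma Nat.add_sub_one_div_sub_one_le {n m k : ℕ} (h : n ≤ m * (k + 1)) :
    (n + m - 1) / m - 1 ≤ k := by
  rcases Nat.eq_zero_or_pos m with rfl | hm
  · simp
  have : (n + m - 1) / m ≤ k + 1 := by
    rw [Nat.div_le_iff_le_mul_add_pred hm]
    omega
  omega

theorem stmt8_general {V : Type*} [Fintype V] [DecidableEq V] (G : SimpleGraph V)
    [DecidableRel G.Adj]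
    (hiso : ∀ v : V, ∃ u : V, G.Adj v u) :
    (Fintype.card V + matchingNumber G - 1) / matchingNumber G - 1 ≤ starPartitionWidth G ∧
      starPartitionWidth G ≤ G.maxDegree := by
  obtain ⟨P₀, hP₀⟩ := SimpleGraph.exists_isStarPartition hiso
  have hΔ : G.maxDegree ∈
      {k | ∃ P : Finset (Finset V), IsStarPartition G P ∧ ∀ S ∈ P, S.card ≤ k + 1} :=
    ⟨P₀, hP₀, fun S hS =>
      ((SimpleGraph.isStarPartition_iff.1 hP₀).1.2 S hS).card_le_maxDegree_add_one⟩
  refine ⟨?_, Nat.sInf_le hΔ⟩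
  obtain ⟨P, hP, hσ⟩ : starPartitionWidth G ∈ _ := Nat.sInf_mem ⟨_, hΔ⟩
  rw [SimpleGraph.isStarPartition_iff] at hP
  apply Nat.add_sub_one_div_sub_one_le
  calc Fintype.card V = #(P.biUnion id) := by rw [hP.2, card_univ]
    _ ≤ #P * (starPartitionWidth G + 1) := card_biUnion_le_card_mul P id _ hσ
    _ ≤ matchingNumber G * (starPartitionWidth G + 1) := by grw [hP.1.card_le_matchingNumber]

/-- For a nontrivial finite simple graph without isolated vertices,
`⌈n(G)/ν(G)⌉ − 1 ≤ σ(G) ≤ Δ(G)`.  (The ceiling `⌈n/ν⌉` is expressed as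
`(n + ν − 1) / ν` using natural-number division.) -/
theorem stmt8 {V : Type*} [Fintype V] [DecidableEq V] (G : SimpleGraph V)
    [DecidableRel G.Adj]
    (h2 : 2 ≤ Fintype.card V) (hiso : ∀ v : V, ∃ u : V, G.Adj v u) :
    (Fintype.card V + matchingNumber G - 1) / matchingNumber G - 1 ≤ starPartitionWidth G ∧
      starPartitionWidth G ≤ G.maxDegree :=
  stmt8_general G hiso
end
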